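/- arXiv:1508.07299 — 8 statements merged into one kernel-verified Lean document; each statement's English description precedes it below -/
import Mathlib

section
/- Let G be a finite connected simple graph, r ∈ V(G) a root, and (T, w) a tree strategy for (G, r). If p is an r-unsolvable pebbling configuration on G, then ∑_{v∈V(G)} w(v)·p(v) ≤ ∑_{v∈V(G)} w(v). -/
/-- A single pebbling move on a graph `G`: remove two pebbles from a vertex `u`
(which must carry at least two pebbles) and add one pebble on a neighbor `v` of `u`. -/
def PebblingMove {V : Type*} (G : SimpleGraph V) (p q : V → ℕ) : Prop :=
  ∃ u v : V, G.Adj u v ∧ 2 ≤ p u ∧ q u = p u - 2 ∧ q v = p v + 1 ∧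
    ∀ x : V, x ≠ u → x ≠ v → q x = p x

/-- A configuration `p` is solvable for the root `r` if some sequence of pebbling moves
starting from `p` produces a configuration with at least one pebble on `r`. -/
def PebblingSolvable {V : Type*} (G : SimpleGraph V) (r : V) (p : V → ℕ) : Prop :=
  ∃ q : V → ℕ, Relation.ReflTransGen (PebblingMove G) p q ∧ 1 ≤ q r

/-- The rooted pebbling number `π(G, r)`: the least `k` such that every configuration
of size `k` is solvable for the root `r`. -/
noncomputable def rootedPebblingNumber {V : Type*} [Fintype V] (G : SimpleGraph V) (r : V) : ℕ :=
  sInf {k : ℕ | ∀ p : V → ℕ, (∑ v, p v) = k → PebblingSolvable G r p}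

/-- The pebbling number `π(G)`: the least `k` such that for every root `r`, every
configuration of size `k` is solvable for `r`. -/
noncomputable def pebblingNumber {V : Type*} [Fintype V] (G : SimpleGraph V) : ℕ :=
  sInf {k : ℕ | ∀ (r : V) (p : V → ℕ), (∑ v, p v) = k → PebblingSolvable G r p}

/-- A graph is Class 0 if its pebbling number equals its number of vertices. -/
def Class0 {V : Type*} [Fintype V] (G : SimpleGraph V) : Prop :=
  pebblingNumber G = Fintype.card V
/-- A tree strategy for the rooted graph `(G, r)`: a subtree `T` of `G` containing `r`,
together with a nonnegative weight function `w` vanishing at `r` and outside `T`,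
such that `w(v⁺) = 2 · w(v)` for every vertex `v` of `T` other than `r` that is not
adjacent to `r`, where `v⁺` is the parent of `v`, i.e. the neighbor of `v` in `T`
that is closer to `r` in `T`. -/
structure TreeStrategy {V : Type*} (G : SimpleGraph V) (r : V) where
  /-- The underlying subtree of `G`. -/
  T : G.Subgraph
  root_mem : r ∈ T.verts
  isTree : T.coe.IsTree
  /-- The weight function. -/
  w : V → ℝ
  nonneg : ∀ v : V, 0 ≤ w v
  root_zero : w r = 0
  eq_zero_of_not_mem : ∀ v : V, v ∉ T.verts → w v = 0
  parent_eq_two_mul : ∀ (v : V) (hv : v ∈ T.verts) (u : V) (hu : u ∈ T.verts),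
    v ≠ r → ¬ G.Adj v r → T.Adj u v →
    T.coe.dist ⟨u, hu⟩ ⟨r, root_mem⟩ + 1 = T.coe.dist ⟨v, hv⟩ ⟨r, root_mem⟩ →
    w u = 2 * w v

-- parent existence
lemma exists_parent {V : Type*} {G : SimpleGraph V} {r : V} (S : TreeStrategy G r)
    (v : V) (hv : v ∈ S.T.verts) (hvr : v ≠ r) :
    ∃ (u : V) (hu : u ∈ S.T.verts), S.T.Adj u v ∧
      S.T.coe.dist ⟨u, hu⟩ ⟨r, S.root_mem⟩ + 1 = S.T.coe.dist ⟨v, hv⟩ ⟨r, S.root_mem⟩ := by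
  have hconn := S.isTree.isConnected
  obtain ⟨wk, hwk⟩ := hconn.exists_walk_length_eq_dist ⟨v, hv⟩ ⟨r, S.root_mem⟩
  have hne : (⟨v, hv⟩ : S.T.verts) ≠ ⟨r, S.root_mem⟩ := by
    simp [Subtype.ext_iff, hvr]
  have hpos : 0 < S.T.coe.dist ⟨v, hv⟩ ⟨r, S.root_mem⟩ :=
    hconn.pos_dist_of_ne hne
  cases wk with
  | nil => exact absurd rfl hne
  | @cons _ u _ hadj q =>
    refine ⟨u.1, u.2, ?_, ?_⟩
    · exact (S.T.adj_symm hadj)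
    · have h1 : S.T.coe.dist u ⟨r, S.root_mem⟩ ≤ q.length := SimpleGraph.dist_le q
      have h2 : S.T.coe.dist ⟨v, hv⟩ ⟨r, S.root_mem⟩ ≤
          S.T.coe.dist u ⟨r, S.root_mem⟩ + 1 := by
        obtain ⟨q', hq'⟩ := hconn.exists_walk_length_eq_dist u ⟨r, S.root_mem⟩
        have := SimpleGraph.dist_le (SimpleGraph.Walk.cons hadj q')
        simpa [hq', Nat.add_comm] using this
      simp only [SimpleGraph.Walk.length_cons] at hwk
      show S.T.coe.dist u ⟨r, S.root_mem⟩ + 1 = _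
      omega

lemma move_update {V : Type*} [DecidableEq V] (G : SimpleGraph V) (p : V → ℕ) (v u : V)
    (h : G.Adj v u) (h2 : 2 ≤ p v) :
    PebblingMove G p (Function.update (Function.update p v (p v - 2)) u (p u + 1)) := by
  have hvu : v ≠ u := h.ne
  refine ⟨v, u, h, h2, ?_, ?_, ?_⟩
  · simp [Function.update_apply, hvu]
  · simp [Function.update_apply]
  · intro x hxv hxu
    simp [Function.update_apply, hxv, hxu]

lemma sum_nat_update {V : Type*} [Fintype V] [DecidableEq V] (p : V → ℕ) (v u : V)
    (hvu : v ≠ u) (h2 : 2 ≤ p v) :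
    ∑ x : V, Function.update (Function.update p v (p v - 2)) u (p u + 1) x + 1 = ∑ x : V, p x := by
  rw [Finset.sum_update_of_mem (Finset.mem_univ u)]
  rw [Finset.sum_update_of_mem (by simp [hvu] : v ∈ Finset.univ \ {u})]
  have hu : u ∈ Finset.univ := Finset.mem_univ u
  have h1 : ∑ x : V, p x = p u + ∑ x ∈ Finset.univ \ {u}, p x := by
    rw [Finset.sum_eq_sum_sdiff_singleton_add hu p]; ring
  have h2' : ∑ x ∈ Finset.univ \ {u}, p x
      = p v + ∑ x ∈ (Finset.univ \ {u}) \ {v}, p x := by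
    rw [Finset.sum_eq_sum_sdiff_singleton_add (by simp [hvu] : v ∈ Finset.univ \ {u}) p]; ring
  omega

lemma sum_real_update {V : Type*} [Fintype V] [DecidableEq V] (w : V → ℝ) (p : V → ℕ) (v u : V)
    (hvu : v ≠ u) (h2 : 2 ≤ p v) (hw : w u = 2 * w v) :
    ∑ x : V, w x * (Function.update (Function.update p v (p v - 2)) u (p u + 1) x : ℝ)
      = ∑ x : V, w x * (p x : ℝ) := by
  have hvmem : v ∈ Finset.univ \ ({u} : Finset V) := by simp [hvu]
  have key : ∀ f : V → ℕ, ∑ x : V, w x * (f x : ℝ)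
      = w u * f u + (w v * f v + ∑ x ∈ (Finset.univ \ {u}) \ {v}, w x * (f x : ℝ)) := by
    intro f
    rw [Finset.sum_eq_sum_sdiff_singleton_add (Finset.mem_univ u) (fun x => w x * (f x : ℝ)),
      Finset.sum_eq_sum_sdiff_singleton_add hvmem (fun x => w x * (f x : ℝ))]
    ring
  rw [key, key]
  have hcongr : ∑ x ∈ (Finset.univ \ {u}) \ {v},
      w x * ((Function.update (Function.update p v (p v - 2)) u (p u + 1) x : ℕ) : ℝ)
      = ∑ x ∈ (Finset.univ \ {u}) \ {v}, w x * (p x : ℝ) := by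
    refine Finset.sum_congr rfl fun x hx => ?_
    simp only [Finset.mem_sdiff, Finset.mem_singleton] at hx
    rw [Function.update_of_ne hx.1.2, Function.update_of_ne hx.2]
  rw [hcongr]
  have e1 : Function.update (Function.update p v (p v - 2)) u (p u + 1) u = p u + 1 := by simp
  have e2 : Function.update (Function.update p v (p v - 2)) u (p u + 1) v = p v - 2 := by
    simp [Function.update_apply, hvu]
  rw [e1, e2]
  have : ((p v - 2 : ℕ) : ℝ) = (p v : ℝ) - 2 := by
    rw [Nat.cast_sub h2]; norm_num
  rw [this]
  push_cast
  rw [hw]; ring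

lemma weight_bound_aux {V : Type*} [Fintype V] [DecidableEq V] (G : SimpleGraph V)
    (r : V) (S : TreeStrategy G r) :
    ∀ (n : ℕ) (p : V → ℕ), ∑ v, p v = n → ¬ PebblingSolvable G r p →
      ∑ v : V, S.w v * (p v : ℝ) ≤ ∑ v : V, S.w v := by
  intro n
  induction n using Nat.strong_induction_on with
  | _ n ih =>
    intro p hsum hp
    by_cases hcase : ∃ v, ∃ _ : v ∈ S.T.verts, v ≠ r ∧ ¬ G.Adj v r ∧ 2 ≤ p v
    · obtain ⟨v, hv, hvr, hvnr, h2⟩ := hcase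
      obtain ⟨u, hu, hadj, hdist⟩ := exists_parent S v hv hvr
      have hGadj : G.Adj v u := S.T.adj_sub (S.T.adj_symm hadj)
      have hvu : v ≠ u := hGadj.ne
      set q : V → ℕ := Function.update (Function.update p v (p v - 2)) u (p u + 1) with hqdef
      have hmove : PebblingMove G p q := move_update G p v u hGadj h2
      have hq_unsolv : ¬ PebblingSolvable G r q := by
        rintro ⟨s, hs, hr⟩
        exact hp ⟨s, Relation.ReflTransGen.head hmove hs, hr⟩
      have hsq : ∑ x, q x + 1 = ∑ x, p x := sum_nat_update p v u hvu h2
      have hlt : ∑ x, q x < n := by omega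
      have hwu : S.w u = 2 * S.w v :=
        S.parent_eq_two_mul v hv u hu hvr hvnr hadj hdist
      have hsums : ∑ x : V, S.w x * (q x : ℝ) = ∑ x : V, S.w x * (p x : ℝ) :=
        sum_real_update S.w p v u hvu h2 hwu
      calc ∑ x : V, S.w x * (p x : ℝ) = ∑ x : V, S.w x * (q x : ℝ) := hsums.symm
        _ ≤ ∑ x : V, S.w x := ih _ hlt q rfl hq_unsolv
    · push_neg at hcase
      have hadj_le : ∀ v : V, G.Adj v r → p v ≤ 1 := by
        intro v hvr
        by_contra h
        push_neg at h
        have h2 : 2 ≤ p v := h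
        have hmove := move_update G p v r hvr h2
        refine hp ⟨_, Relation.ReflTransGen.single hmove, ?_⟩
        simp
      refine Finset.sum_le_sum fun v _ => ?_
      by_cases hw : S.w v = 0
      · simp [hw]
      · have hvT : v ∈ S.T.verts := by
          by_contra hvT
          exact hw (S.eq_zero_of_not_mem v hvT)
        have hvr : v ≠ r := by
          rintro rfl
          exact hw S.root_zero
        have hple : p v ≤ 1 := by
          by_cases ha : G.Adj v r
          · exact hadj_le v ha
          · have := hcase v hvT hvr ha
            omega
        have : (p v : ℝ) ≤ 1 := by exact_mod_cast hple
        calc S.w v * (p v : ℝ) ≤ S.w v * 1 :=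
          mul_le_mul_of_nonneg_left this (S.nonneg v)
          _ = S.w v := mul_one _


/-- If `(T, w)` is a tree strategy for `(G, r)` and `p` is an `r`-unsolvable
configuration on `G`, then `∑ v, w(v) p(v) ≤ ∑ v, w(v)`. -/
theorem tree_strategy_weight_bound {V : Type*} [Fintype V] (G : SimpleGraph V)
    (hG : G.Connected) (r : V) (S : TreeStrategy G r) (p : V → ℕ)
    (hp : ¬ PebblingSolvable G r p) :
    ∑ v : V, S.w v * (p v : ℝ) ≤ ∑ v : V, S.w v := by
  classical
  exact weight_bound_aux G r S (∑ v, p v) p rfl hp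
end

section
/- Let G be a finite connected simple graph with root r ∈ V(G), and let w' be a convex combination of weight functions of tree strategies for (G, r). Let C and M be positive real constants. If w'(v) ≥ C for all v ∈ V(G)\{r} and ∑_{v∈V(G)\{r}} w'(v) < M, then π(G, r) ≤ ⌊M/C⌋ + 1. In particular, if ∑_{v∈V(G)\{r}} w'(v) < C·|V(G)|, then π(G, r) = |V(G)|. -/
section Aux

variable {V : Type*} [DecidableEq V] {G : SimpleGraph V}

lemma pebblingMove_update {u v : V} (h : G.Adj u v) (p : V → ℕ) (hp : 2 ≤ p u) :
    PebblingMove G p (Function.update (Function.update p u (p u - 2)) v (p v + 1)) := by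
  refine ⟨u, v, h, hp, ?_, ?_, ?_⟩
  · rw [Function.update_of_ne h.ne, Function.update_self]
  · rw [Function.update_self]
  · intro x hxu hxv
    rw [Function.update_of_ne hxv, Function.update_of_ne hxu]

lemma sum_update_move [Fintype V] {M : Type*} [AddCommMonoid M] (f : V → M) {u v : V}
    (huv : u ≠ v) (a b : M) (g : V → M)
    (hg : g = fun x => if x = u then a else if x = v then b else f x) :
    ∑ x, g x = a + b + ∑ x ∈ (Finset.univ.erase u).erase v, f x := by
  subst hg
  rw [← Finset.add_sum_erase _ _ (Finset.mem_univ u)]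
  rw [← Finset.add_sum_erase _ (fun x => if x = u then a else if x = v then b else f x)
      (Finset.mem_erase.mpr ⟨huv.symm, Finset.mem_univ v⟩)]
  simp only [if_pos rfl, if_neg huv.symm]
  rw [Finset.erase_right_comm, add_assoc]
  congr 1
  congr 1
  apply Finset.sum_congr rfl
  intro x hx
  rw [Finset.mem_erase, Finset.mem_erase] at hx
  rw [if_neg hx.2.1, if_neg hx.1]

lemma weight_function_lemma [Fintype V] {r : V} (s : TreeStrategy G r) :
    ∀ (N : ℕ) (p : V → ℕ), (∑ v, p v) = N →
      (∑ v ∈ Finset.univ.erase r, s.w v) < ∑ v, s.w v * p v →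
      PebblingSolvable G r p := by
  intro N
  induction N using Nat.strong_induction_on with
  | _ N ih =>
  intro p hN hPhi
  by_cases hr : 1 ≤ p r
  · exact ⟨p, Relation.ReflTransGen.refl, hr⟩
  have hex : ∃ c, c ≠ r ∧ 0 < s.w c ∧ 2 ≤ p c := by
    by_contra hcon
    push_neg at hcon
    have hb : ∀ v ∈ Finset.univ.erase r, s.w v * p v ≤ s.w v := by
      intro v hv
      have hvr : v ≠ r := (Finset.mem_erase.mp hv).1
      rcases (s.nonneg v).eq_or_lt with h0 | h0
      · rw [← h0]; simp
      · have hpv : p v < 2 := hcon v hvr h0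
        have : (p v : ℝ) ≤ 1 := by exact_mod_cast Nat.lt_succ_iff.mp hpv
        nlinarith
    have hsum : ∑ v, s.w v * p v ≤ ∑ v ∈ Finset.univ.erase r, s.w v := by
      rw [← Finset.add_sum_erase _ (fun v => s.w v * p v) (Finset.mem_univ r)]
      rw [s.root_zero]
      simpa using Finset.sum_le_sum hb
    linarith
  obtain ⟨c, hcr, hwc, hpc⟩ := hex
  have hcT : c ∈ s.T.verts := by
    by_contra h
    rw [s.eq_zero_of_not_mem c h] at hwc
    exact lt_irrefl _ hwc
  by_cases hadj : G.Adj c r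
  · refine ⟨Function.update (Function.update p c (p c - 2)) r (p r + 1),
      Relation.ReflTransGen.single (pebblingMove_update hadj p hpc), ?_⟩
    rw [Function.update_self]
    omega
  · -- find the parent of c in the tree
    have hconn : s.T.coe.Connected := s.isTree.isConnected
    set cT : s.T.verts := ⟨c, hcT⟩ with hcTdef
    set rT : s.T.verts := ⟨r, s.root_mem⟩ with hrTdef
    have hne : cT ≠ rT := by
      simp only [hcTdef, hrTdef, ne_eq, Subtype.mk.injEq]
      exact hcr
    have hdpos : 0 < s.T.coe.dist cT rT := hconn.pos_dist_of_ne hne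
    obtain ⟨wk, hwk⟩ := hconn.exists_walk_length_eq_dist cT rT
    obtain ⟨uT, hadjT, wk', hwk'⟩ := SimpleGraph.Walk.exists_eq_cons_of_ne hne wk
    have hlen : wk'.length + 1 = s.T.coe.dist cT rT := by
      rw [← hwk, hwk', SimpleGraph.Walk.length_cons]
    have hdu_le : s.T.coe.dist uT rT ≤ wk'.length := SimpleGraph.dist_le wk'
    have hdu_ge : s.T.coe.dist cT rT ≤ s.T.coe.dist uT rT + 1 := by
      have htri := hconn.dist_triangle (u := cT) (v := uT) (w := rT)
      have h1 : s.T.coe.dist cT uT ≤ 1 :=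
        SimpleGraph.dist_le (SimpleGraph.Walk.cons hadjT SimpleGraph.Walk.nil)
      omega
    have hdist : s.T.coe.dist uT rT + 1 = s.T.coe.dist cT rT := by omega
    have hTadj : s.T.Adj uT.1 c := (SimpleGraph.Subgraph.coe_adj _ _ _ |>.mp hadjT).symm
    have hwu : s.w uT.1 = 2 * s.w c := by
      have := s.parent_eq_two_mul c hcT uT.1 uT.2 hcr hadj hTadj
      apply this
      convert hdist
    have hGadj : G.Adj c uT.1 := s.T.adj_sub hTadj.symm
    have hcu : c ≠ uT.1 := hGadj.ne
    set q := Function.update (Function.update p c (p c - 2)) uT.1 (p uT.1 + 1) with hqdef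
    have hmv : PebblingMove G p q := pebblingMove_update hGadj p hpc
    -- sums
    have hq_eq : q = fun x => if x = uT.1 then p uT.1 + 1 else if x = c then p c - 2 else p x := by
      funext x
      simp only [hqdef, Function.update_apply]
    have hsumq : ∑ x, q x = (p uT.1 + 1) + (p c - 2) + ∑ x ∈ (Finset.univ.erase uT.1).erase c, p x :=
      sum_update_move p hcu.symm _ _ q hq_eq
    have hsump : ∑ x, p x = p uT.1 + p c + ∑ x ∈ (Finset.univ.erase uT.1).erase c, p x :=
      sum_update_move p hcu.symm (p uT.1) (p c) p (by
        funext x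
        split_ifs with h1 h2
        · rw [h1]
        · rw [h2]
        · rfl)
    have hsumq' : (∑ x, q x) + 1 = N := by rw [← hN]; omega
    have hPhiq : ∑ x, s.w x * q x = ∑ x, s.w x * p x := by
      have h1 : ∑ x, s.w x * (q x : ℝ) =
          s.w uT.1 * ((p uT.1 + 1 : ℕ) : ℝ) + s.w c * ((p c - 2 : ℕ) : ℝ)
            + ∑ x ∈ (Finset.univ.erase uT.1).erase c, s.w x * p x := by
        apply sum_update_move (fun x => s.w x * (p x : ℝ)) hcu.symm _ _ _
        funext x
        simp only [hq_eq]
        split_ifs with h1 h2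
        · rw [h1]
        · rw [h2]
        · rfl
      have h2 : ∑ x, s.w x * (p x : ℝ) =
          s.w uT.1 * (p uT.1 : ℝ) + s.w c * (p c : ℝ)
            + ∑ x ∈ (Finset.univ.erase uT.1).erase c, s.w x * p x := by
        apply sum_update_move (fun x => s.w x * (p x : ℝ)) hcu.symm _ _ _
        funext x
        split_ifs with h1 h2
        · rw [h1]
        · rw [h2]
        · rfl
      rw [h1, h2]
      have hc2 : ((p c - 2 : ℕ) : ℝ) = (p c : ℝ) - 2 := by
        push_cast [Nat.cast_sub hpc]
        ring
      push_cast [hc2, hwu]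
      ring
    obtain ⟨qq, hrel, hqq⟩ := ih ((∑ x, q x)) (by omega) q rfl (by rw [hPhiq]; exact hPhi)
    exact ⟨qq, Relation.ReflTransGen.head hmv hrel, hqq⟩

end Aux

/-- The Covering Lemma: if `w'` is a convex combination of weight functions of tree
strategies for `(G, r)`, `w'(v) ≥ C > 0` for all `v ≠ r`, and the weights of the
vertices other than `r` sum to less than `M`, then `π(G, r) ≤ ⌊M/C⌋ + 1`; and if
they sum to less than `C · |V(G)|` then `π(G, r) = |V(G)|`. -/
theorem covering_lemma {V : Type*} [Fintype V] [DecidableEq V] (G : SimpleGraph V)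
    (hG : G.Connected) (r : V) (w' : V → ℝ) (k : ℕ) (S : Fin k → TreeStrategy G r)
    (lam : Fin k → ℝ) (hlam : ∀ i, 0 ≤ lam i) (hlamsum : ∑ i, lam i = 1)
    (hw' : ∀ v : V, w' v = ∑ i, lam i * (S i).w v)
    (C M : ℝ) (hC : 0 < C) (hM : 0 < M) (hCw : ∀ v : V, v ≠ r → C ≤ w' v) :
    ((∑ v ∈ Finset.univ.erase r, w' v < M) →
        rootedPebblingNumber G r ≤ ⌊M / C⌋₊ + 1) ∧
    ((∑ v ∈ Finset.univ.erase r, w' v < C * Fintype.card V) →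
        rootedPebblingNumber G r = Fintype.card V) := by
  classical
  have key : ∀ p : V → ℕ, ¬ PebblingSolvable G r p →
      ∑ v, w' v * p v ≤ ∑ v ∈ Finset.univ.erase r, w' v := by
    intro p hp
    have hs : ∀ i, ∑ v, (S i).w v * p v ≤ ∑ v ∈ Finset.univ.erase r, (S i).w v := by
      intro i
      by_contra h
      push_neg at h
      exact hp (weight_function_lemma (S i) _ p rfl h)
    calc ∑ v, w' v * (p v : ℝ) = ∑ i, lam i * ∑ v, (S i).w v * p v := by
          simp_rw [hw', Finset.sum_mul, Finset.mul_sum, mul_assoc]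
          rw [Finset.sum_comm]
      _ ≤ ∑ i, lam i * ∑ v ∈ Finset.univ.erase r, (S i).w v :=
          Finset.sum_le_sum fun i _ => mul_le_mul_of_nonneg_left (hs i) (hlam i)
      _ = ∑ v ∈ Finset.univ.erase r, w' v := by
          simp_rw [Finset.mul_sum]
          rw [Finset.sum_comm]
          exact Finset.sum_congr rfl fun v _ => (hw' v).symm
  have key2 : ∀ p : V → ℕ, ¬ PebblingSolvable G r p →
      C * ((∑ v, p v : ℕ) : ℝ) ≤ ∑ v ∈ Finset.univ.erase r, w' v := by
    intro p hp
    have hpr : p r = 0 := by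
      by_contra h
      exact hp ⟨p, Relation.ReflTransGen.refl, by omega⟩
    have h1 : ∑ v, w' v * (p v : ℝ) = ∑ v ∈ Finset.univ.erase r, w' v * p v := by
      rw [← Finset.add_sum_erase _ (fun v => w' v * (p v : ℝ)) (Finset.mem_univ r)]
      rw [hpr]
      simp
    have h2 : (∑ v, p v) = ∑ v ∈ Finset.univ.erase r, p v := by
      rw [← Finset.add_sum_erase _ p (Finset.mem_univ r), hpr]
      exact zero_add _
    calc C * ((∑ v, p v : ℕ) : ℝ) = ∑ v ∈ Finset.univ.erase r, C * (p v : ℝ) := by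
          rw [h2]
          push_cast
          rw [Finset.mul_sum]
      _ ≤ ∑ v ∈ Finset.univ.erase r, w' v * p v :=
          Finset.sum_le_sum fun v hv =>
            mul_le_mul_of_nonneg_right (hCw v (Finset.mem_erase.mp hv).1)
              (Nat.cast_nonneg _)
      _ = ∑ v, w' v * p v := h1.symm
      _ ≤ _ := key p hp
  constructor
  · -- first part
    intro hMsum
    rw [rootedPebblingNumber]
    apply Nat.sInf_le
    intro p hp
    by_contra hns
    have hb := key2 p hns
    rw [hp] at hb
    have hlt : ((⌊M / C⌋₊ + 1 : ℕ) : ℝ) ≤ M / C := by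
      rw [le_div_iff₀ hC]
      nlinarith
    have : ⌊M / C⌋₊ + 1 ≤ ⌊M / C⌋₊ := Nat.le_floor hlt
    omega
  · -- second part
    intro hsum2
    rw [rootedPebblingNumber]
    have memn : ∀ p : V → ℕ, (∑ v, p v) = Fintype.card V → PebblingSolvable G r p := by
      intro p hp
      by_contra hns
      have hb := key2 p hns
      rw [hp] at hb
      linarith
    have memn' : Fintype.card V ∈ {k : ℕ | ∀ p : V → ℕ, (∑ v, p v) = k → PebblingSolvable G r p} :=
      memn
    refine le_antisymm (Nat.sInf_le memn') ?_
    apply le_csInf ⟨Fintype.card V, memn'⟩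
    intro b hb
    by_contra hlt
    push_neg at hlt
    obtain ⟨A, hA, hAcard⟩ := Finset.exists_subset_card_eq (s := Finset.univ.erase r) (n := b) (by
      rw [Finset.card_erase_of_mem (Finset.mem_univ r), Finset.card_univ]
      omega)
    set p : V → ℕ := fun v => if v ∈ A then 1 else 0 with hpdef
    have hsump : ∑ v, p v = b := by
      simp only [hpdef]
      rw [Finset.sum_ite_mem, Finset.univ_inter, Finset.sum_const, smul_eq_mul, mul_one, hAcard]
    obtain ⟨q, hrel, hq⟩ := hb p hsump
    have hqp : q = p := by
      rcases Relation.ReflTransGen.cases_head hrel with h | ⟨c, hmc, _⟩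
      · exact h.symm
      · obtain ⟨u, v, _, h2, _⟩ := hmc
        have hle : p u ≤ 1 := by
          by_cases h : u ∈ A <;> simp [hpdef, h]
        omega
    have hrA : r ∉ A := fun h => (Finset.mem_erase.mp (hA h)).1 rfl
    have hpr : p r = 0 := by simp [hpdef, hrA]
    rw [hqp, hpr] at hq
    omega
end

section
/- Let s ≥ t ≥ 2 be integers. Form the graph G from an even cycle C_{2t} with vertices x_0, x'_1, x'_2, …, x'_{t−1}, x_t, x''_{t−1}, …, x''_2, x''_1 (in cyclic order) by attaching at x_t a path x_t, x_{t+1}, …, x_s, r. Define a weight function w on V(G) by w(x_i) = 2^i for t ≤ i ≤ s, w(x'_i) = w(x''_i) = 2^i for 1 ≤ i ≤ t−1, w(x_0) = α where α = (2^s + 2^{t−1} − 2)/(2^s − 1), and w(r) = 0. Then every r-unsolvable pebbling configuration p on G satisfies ∑_{v∈V(G)} w(v)·p(v) ≤ ∑_{v∈V(G)} w(v). -/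
/-- The vertices of the cycle-with-tail graph, labeled by `Fin (s + t + 1)`:
label `0` is `x₀`; labels `1, …, t-1` are `x'₁, …, x'_{t-1}`; labels
`t, …, 2t-2` are `x''₁, …, x''_{t-1}`; labels `2t-1, …, s+t-1` are
`x_t, …, x_s`; and label `s+t` is the root `r`. -/
def cycleTailRel (t : ℕ) (m n : ℕ) : Prop :=
  (m = 0 ∧ n = 1) ∨                      -- x₀ ~ x'₁
  (m = 0 ∧ n = t) ∨                      -- x₀ ~ x''₁
  (m + 1 = n ∧ 1 ≤ m ∧ n ≤ t - 1) ∨      -- x'ᵢ ~ x'ᵢ₊₁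
  (m = t - 1 ∧ n = 2 * t - 1) ∨          -- x'_{t-1} ~ x_t
  (m + 1 = n ∧ t ≤ m)                    -- x''ᵢ ~ x''ᵢ₊₁, x''_{t-1} ~ x_t, xᵢ ~ xᵢ₊₁, x_s ~ r

/-- The graph formed from the even cycle `C_{2t}` through
`x₀, x'₁, …, x'_{t-1}, x_t, x''_{t-1}, …, x''₁` by attaching at `x_t` the path
`x_t, x_{t+1}, …, x_s, r`. -/
def cycleTailGraph (s t : ℕ) : SimpleGraph (Fin (s + t + 1)) :=
  SimpleGraph.fromRel fun a b => cycleTailRel t a.val b.val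

/-- The weight function: `w(xᵢ) = 2^i` for `t ≤ i ≤ s`, `w(x'ᵢ) = w(x''ᵢ) = 2^i`
for `1 ≤ i ≤ t-1`, `w(x₀) = α = (2^s + 2^{t-1} - 2)/(2^s - 1)`, and `w(r) = 0`. -/
noncomputable def cycleTailWeight (s t : ℕ) (v : Fin (s + t + 1)) : ℝ :=
  if v.val = 0 then ((2 : ℝ) ^ s + 2 ^ (t - 1) - 2) / ((2 : ℝ) ^ s - 1)
  else if v.val ≤ t - 1 then (2 : ℝ) ^ v.val
  else if v.val = s + t then 0
  else (2 : ℝ) ^ (v.val - (t - 1))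

section Basics

variable {V : Type*} [DecidableEq V] {G : SimpleGraph V}

lemma solvable_of_rtg {r : V} {p q : V → ℕ}
    (h : Relation.ReflTransGen (PebblingMove G) p q) (hq : PebblingSolvable G r q) :
    PebblingSolvable G r p := by
  obtain ⟨q', h', h1⟩ := hq
  exact ⟨q', h.trans h', h1⟩

lemma moveMany {u v : V} (h : G.Adj u v) (p : V → ℕ) (k : ℕ) (hk : 2 * k ≤ p u) :
    Relation.ReflTransGen (PebblingMove G) p
      (fun x => if x = u then p u - 2 * k else if x = v then p v + k else p x) := by
  have hvu : v ≠ u := h.ne'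
  induction k with
  | zero =>
      have he : (fun x => if x = u then p u - 2 * 0 else if x = v then p v + 0 else p x) = p := by
        funext x
        split_ifs with h1 h2
        · rw [h1]; omega
        · rw [h2]; omega
        · rfl
      rw [he]
  | succ n ih =>
      have hk' : 2 * n ≤ p u := by omega
      refine (ih hk').tail ?_
      refine ⟨u, v, h, ?_, ?_, ?_, ?_⟩
      · simp [hvu]
        omega
      · simp [hvu]
        omega
      · simp [hvu]
        omega
      · intro x hxu hxv
        simp [hxu, hxv]

lemma sum_split_two [Fintype V] [DecidableEq V] {M : Type*} [AddCommMonoid M]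
    (g : V → M) {u v : V} (huv : u ≠ v) :
    ∑ x, g x = g u + (g v + ∑ x ∈ (Finset.univ.erase u).erase v, g x) := by
  have h1 : g v + ∑ x ∈ (Finset.univ.erase u).erase v, g x = ∑ x ∈ Finset.univ.erase u, g x :=
    Finset.add_sum_erase _ g (Finset.mem_erase.mpr ⟨huv.symm, Finset.mem_univ v⟩)
  have h2 : g u + ∑ x ∈ Finset.univ.erase u, g x = ∑ x, g x :=
    Finset.add_sum_erase _ g (Finset.mem_univ u)
  rw [h1, h2]

lemma move_sum_nat [Fintype V] [DecidableEq V] (p q : V → ℕ) (u v : V) (huv : u ≠ v)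
    (h2 : 2 ≤ p u) (hqu : q u = p u - 2) (hqv : q v = p v + 1)
    (hrest : ∀ x : V, x ≠ u → x ≠ v → q x = p x) :
    (∑ x, q x) + 1 = ∑ x, p x := by
  have hR : ∑ x ∈ (Finset.univ.erase u).erase v, q x
      = ∑ x ∈ (Finset.univ.erase u).erase v, p x := by
    refine Finset.sum_congr rfl (fun x hx => ?_)
    rw [Finset.mem_erase, Finset.mem_erase] at hx
    exact hrest x hx.2.1 hx.1
  rw [sum_split_two q huv, sum_split_two p huv, hR, hqu, hqv]
  omega

lemma move_sum_weight [Fintype V] [DecidableEq V] (w : V → ℝ) (p q : V → ℕ) (u v : V)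
    (huv : u ≠ v) (h2 : 2 ≤ p u) (hqu : q u = p u - 2) (hqv : q v = p v + 1)
    (hrest : ∀ x : V, x ≠ u → x ≠ v → q x = p x) (hw : w v = 2 * w u) :
    ∑ x, w x * (q x : ℝ) = ∑ x, w x * (p x : ℝ) := by
  have hR : ∑ x ∈ (Finset.univ.erase u).erase v, w x * (q x : ℝ)
      = ∑ x ∈ (Finset.univ.erase u).erase v, w x * (p x : ℝ) := by
    refine Finset.sum_congr rfl (fun x hx => ?_)
    rw [Finset.mem_erase, Finset.mem_erase] at hx
    rw [hrest x hx.2.1 hx.1]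
  rw [sum_split_two (fun x => w x * (q x : ℝ)) huv, sum_split_two (fun x => w x * (p x : ℝ)) huv,
    hR, hqu, hqv]
  have : ((p u - 2 : ℕ) : ℝ) = (p u : ℝ) - 2 := by
    push_cast [Nat.cast_sub h2]
    ring
  rw [this]
  push_cast
  rw [hw]
  ring

lemma sum_range_pow2 (n : ℕ) : ∑ i ∈ Finset.range n, 2 ^ i = 2 ^ n - 1 := by
  induction n with
  | zero => simp
  | succ m ih =>
      rw [Finset.sum_range_succ, ih]
      have : 1 ≤ 2 ^ m := Nat.one_le_two_pow
      have h2 : 2 ^ (m + 1) = 2 * 2 ^ m := by ring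
      omega

lemma sum_Ico_pow2 (n : ℕ) : ∑ i ∈ Finset.Ico 1 n, 2 ^ i = 2 ^ n - 2 := by
  rcases Nat.eq_zero_or_pos n with h | h
  · subst h; simp
  · have h1 : ∑ i ∈ Finset.range n, 2 ^ i = 2 ^ 0 + ∑ i ∈ Finset.Ico 1 n, 2 ^ i := by
      rw [Finset.range_eq_Ico]
      exact Finset.sum_eq_sum_Ico_succ_bot h _
    have h2 := sum_range_pow2 n
    have h3 : 2 ≤ 2 ^ n := by
      have : 2 ^ 1 ≤ 2 ^ n := Nat.pow_le_pow_right (by norm_num) h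
      simpa using this
    omega

lemma sum_range_pow2R (n : ℕ) : ∑ i ∈ Finset.range n, (2 : ℝ) ^ i = 2 ^ n - 1 := by
  induction n with
  | zero => simp
  | succ m ih =>
      rw [Finset.sum_range_succ, ih]
      ring

end Basics

section Chain

variable {V : Type*} [DecidableEq V] {G : SimpleGraph V}

set_option maxHeartbeats 1000000 in
lemma chain_deliver :
    ∀ (L : ℕ) (f : ℕ → V) (p : V → ℕ) (j : ℕ), 1 ≤ L → 1 ≤ j →
    (∀ i, i < L → G.Adj (f i) (f (i + 1))) →
    (∀ i i', i ≤ L → i' ≤ L → f i = f i' → i = i') →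
    (∀ i, 1 ≤ i → i < L → p (f i) ≤ 1) →
    j * 2 ^ L ≤ p (f 0) + ∑ i ∈ Finset.Ico 1 L, p (f i) * 2 ^ i →
    ∃ q, Relation.ReflTransGen (PebblingMove G) p q ∧
      q (f L) = p (f L) + j ∧
      q (f 0) + j * 2 ^ L = p (f 0) + ∑ i ∈ Finset.Ico 1 L, p (f i) * 2 ^ i ∧
      ∀ x : V, (∀ i, i ≤ L → x ≠ f i) → q x = p x := by
  intro L
  induction L with
  | zero => intro f p j hL; omega
  | succ n ih =>
    intro f p j _ hj hadj hinj hmid hbud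
    have hf01 : f 0 ≠ f 1 := fun h => by have := hinj 0 1 (by omega) (by omega) h; omega
    rcases Nat.eq_zero_or_pos n with hn | hn
    · -- base case L = 1
      subst hn
      rw [show Finset.Ico 1 1 = ∅ from rfl, Finset.sum_empty, Nat.add_zero] at hbud
      have hb2 : 2 * j ≤ p (f 0) := by
        have : j * 2 ^ 1 = 2 * j := by ring
        omega
      refine ⟨_, moveMany (hadj 0 (by omega)) p j hb2, ?_, ?_, ?_⟩
      · simp [hf01.symm]
      · rw [show Finset.Ico 1 1 = ∅ from rfl, Finset.sum_empty]
        simp only [if_true]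
        have : j * 2 ^ (0 + 1) = 2 * j := by ring
        omega
      · intro x hx
        have hx0 : x ≠ f 0 := hx 0 (by omega)
        have hx1 : x ≠ f 1 := hx 1 (by omega)
        simp [hx0, hx1]
    · -- inductive step, L = n + 1 with n ≥ 1
      set S' := ∑ i ∈ Finset.Ico 1 n, p (f (i + 1)) * 2 ^ i with hS'def
      have hS'le : S' + 2 ≤ 2 ^ n := by
        have hb : S' ≤ ∑ i ∈ Finset.Ico 1 n, 2 ^ i := by
          refine Finset.sum_le_sum (fun i hi => ?_)
          rw [Finset.mem_Ico] at hi
          have := hmid (i + 1) (by omega) (by omega)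
          calc p (f (i+1)) * 2^i ≤ 1 * 2^i := Nat.mul_le_mul_right _ this
            _ = 2 ^ i := by ring
        have := sum_Ico_pow2 n
        have h2 : 2 ≤ 2 ^ n := by
          have : 2 ^ 1 ≤ 2 ^ n := Nat.pow_le_pow_right (by norm_num) hn
          simpa using this
        omega
      have hpow : 2 ^ (n+1) = 2 * 2 ^ n := by ring
      have hjn : S' + 2 ≤ j * 2 ^ n := by
        have : 2 ^ n ≤ j * 2 ^ n := Nat.le_mul_of_pos_left _ hj
        omega
      set a1 := p (f 1) with ha1def
      have ha1 : a1 ≤ 1 := hmid 1 (by omega) (by omega)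
      set M := j * 2 ^ n - S' with hMdef
      -- rewrite the budget sum
      have hsum : ∑ i ∈ Finset.Ico 1 (n+1), p (f i) * 2 ^ i = 2 * a1 + 2 * S' := by
        rw [Finset.sum_eq_sum_Ico_succ_bot (by omega : 1 < n + 1)]
        have hre : ∑ i ∈ Finset.Ico 2 (n+1), p (f i) * 2 ^ i
            = ∑ i ∈ Finset.Ico 1 n, p (f (i+1)) * 2 ^ (i+1) := by
          rw [Finset.sum_Ico_eq_sum_range, Finset.sum_Ico_eq_sum_range]
          refine Finset.sum_congr (by congr 1) (fun i _ => ?_)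
          rw [show 1 + i + 1 = 2 + i from by omega]
        rw [hre]
        have : ∑ i ∈ Finset.Ico 1 n, p (f (i+1)) * 2 ^ (i+1)
            = 2 * ∑ i ∈ Finset.Ico 1 n, p (f (i+1)) * 2 ^ i := by
          rw [Finset.mul_sum]
          refine Finset.sum_congr rfl (fun i _ => by ring)
        rw [this]
        ring
      have hj2 : j * 2 ^ (n + 1) = 2 * (j * 2 ^ n) := by rw [hpow]; ring
      have hMa1 : a1 ≤ M := by omega
      have hmove : 2 * (M - a1) ≤ p (f 0) := by
        rw [hsum] at hbud
        omega
      have hrtg1 := moveMany (hadj 0 (by omega)) p (M - a1) hmove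
      set p1 : V → ℕ := (fun x => if x = f 0 then p (f 0) - 2 * (M - a1)
        else if x = f 1 then p (f 1) + (M - a1) else p x) with hp1def
      have hp1f1 : p1 (f 1) = M := by
        rw [hp1def]
        simp [hf01.symm]
        omega
      have hp1f0 : p1 (f 0) = p (f 0) - 2 * (M - a1) := by
        rw [hp1def]
        simp
      have hp1other : ∀ i, 2 ≤ i → i ≤ n + 1 → p1 (f i) = p (f i) := by
        intro i h2i hi
        have e0 : f i ≠ f 0 := fun h => by have := hinj i 0 (by omega) (by omega) h; omega
        have e1 : f i ≠ f 1 := fun h => by have := hinj i 1 (by omega) (by omega) h; omega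
        rw [hp1def]
        simp [e0, e1]
      obtain ⟨q, hrtg2, hqL, hq0, hqout⟩ := ih (fun i => f (i + 1)) p1 j hn hj
        (fun i hi => hadj (i+1) (by omega))
        (fun i i' hi hi' h => by have := hinj (i+1) (i'+1) (by omega) (by omega) h; omega)
        (fun i h1 h2 => by rw [hp1other (i+1) (by omega) (by omega)]; exact hmid (i+1) (by omega) (by omega))
        (by
          have hco : ∑ i ∈ Finset.Ico 1 n, p1 (f (i + 1)) * 2 ^ i = S' := by
            refine Finset.sum_congr rfl (fun i hi => ?_)
            rw [Finset.mem_Ico] at hi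
            rw [hp1other (i+1) (by omega) (by omega)]
          rw [hco, hp1f1]
          omega)
      refine ⟨q, hrtg1.trans hrtg2, ?_, ?_, ?_⟩
      · rw [hqL, hp1other (n+1) (by omega) (by omega)]
      · have hq0' : q (f 0) = p1 (f 0) := by
          refine hqout (f 0) (fun i hi h => ?_)
          have := hinj 0 (i+1) (by omega) (by omega) h
          omega
        have hco : ∑ i ∈ Finset.Ico 1 n, p1 (f (i + 1)) * 2 ^ i = S' := by
          refine Finset.sum_congr rfl (fun i hi => ?_)
          rw [Finset.mem_Ico] at hi
          rw [hp1other (i+1) (by omega) (by omega)]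
        rw [hq0', hp1f0, hsum]
        omega
      · intro x hx
        have hxq : q x = p1 x := hqout x (fun i hi => hx (i+1) (by omega))
        have hx0 : x ≠ f 0 := hx 0 (by omega)
        have hx1 : x ≠ f 1 := hx 1 (by omega)
        rw [hxq, hp1def]
        simp [hx0, hx1]

end Chain

section GraphFacts

lemma ct_adj (s t : ℕ) {m n : ℕ} (hm : m < s + t + 1) (hn : n < s + t + 1) (hmn : m ≠ n)
    (hrel : cycleTailRel t m n) : (cycleTailGraph s t).Adj ⟨m, hm⟩ ⟨n, hn⟩ := by
  rw [cycleTailGraph, SimpleGraph.fromRel_adj]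
  exact ⟨Fin.ne_of_val_ne hmn, Or.inl hrel⟩

lemma w_zero (s t : ℕ) (h0 : 0 < s + t + 1) :
    cycleTailWeight s t ⟨0, h0⟩ = ((2 : ℝ) ^ s + 2 ^ (t - 1) - 2) / ((2 : ℝ) ^ s - 1) := by
  simp [cycleTailWeight]

lemma w_low (s t : ℕ) {n : ℕ} (h1 : 1 ≤ n) (h2 : n ≤ t - 1) (hn : n < s + t + 1) :
    cycleTailWeight s t ⟨n, hn⟩ = 2 ^ n := by
  simp only [cycleTailWeight, Fin.val_mk]
  rw [if_neg (by omega), if_pos (by omega)]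

lemma w_high (s t : ℕ) (ht : 2 ≤ t) {n : ℕ} (h1 : t ≤ n) (h2 : n ≤ s + t - 1)
    (hn : n < s + t + 1) : cycleTailWeight s t ⟨n, hn⟩ = 2 ^ (n - t + 1) := by
  simp only [cycleTailWeight, Fin.val_mk]
  rw [if_neg (by omega), if_neg (by omega), if_neg (by omega)]
  congr 1
  omega

lemma w_root (s t : ℕ) (ht : 2 ≤ t) (h0 : s + t < s + t + 1) :
    cycleTailWeight s t ⟨s + t, h0⟩ = 0 := by
  simp only [cycleTailWeight, Fin.val_mk]
  rw [if_neg (by omega), if_neg (by omega)]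
  simp

end GraphFacts

section Arith

noncomputable def ctAlpha (s t : ℕ) : ℝ :=
  ((2 : ℝ) ^ s + 2 ^ (t - 1) - 2) / ((2 : ℝ) ^ s - 1)

lemma pow2R_ge (a b : ℕ) (h : a ≤ b) : (2:ℝ)^a ≤ 2^b := pow_le_pow_right₀ (by norm_num) h

lemma ctAlpha_basic (s t : ℕ) (ht : 2 ≤ t) (hts : t ≤ s) :
    ctAlpha s t * ((2 : ℝ) ^ s - 1) = (2 : ℝ) ^ s + 2 ^ (t - 1) - 2
    ∧ 1 ≤ ctAlpha s t ∧ ctAlpha s t < 2 := by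
  have hP : (4 : ℝ) ≤ 2 ^ s := by
    have := pow2R_ge 2 s (by omega)
    norm_num at this
    linarith
  have hQ : (2 : ℝ) ≤ 2 ^ (t - 1) := by
    have := pow2R_ge 1 (t - 1) (by omega)
    simpa using this
  have hQP : 2 * (2 : ℝ) ^ (t - 1) ≤ 2 ^ s := by
    have h1 : (2 : ℝ) ^ t = 2 * 2 ^ (t - 1) := by
      have e : (2:ℝ) ^ t = 2 ^ (t-1) * 2 := by
        rw [← pow_succ]
        congr 1
        omega
      linarith [e]
    have := pow2R_ge t s hts
    linarith [h1 ▸ this]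
  have hne : (2 : ℝ) ^ s - 1 ≠ 0 := by linarith
  have halpha : ctAlpha s t * ((2 : ℝ) ^ s - 1) = (2 : ℝ) ^ s + 2 ^ (t - 1) - 2 :=
    div_mul_cancel₀ _ hne
  refine ⟨halpha, ?_, ?_⟩
  · have e1 : (ctAlpha s t - 1) * ((2:ℝ)^s - 1) = 2 ^ (t-1) - 1 := by linear_combination halpha
    rcases le_or_gt 1 (ctAlpha s t) with h | h
    · exact h
    · exfalso
      have : (ctAlpha s t - 1) * ((2:ℝ)^s - 1) < 0 :=
        mul_neg_of_neg_of_pos (by linarith) (by linarith)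
      linarith
  · have e2 : (2 - ctAlpha s t) * ((2:ℝ)^s - 1) = (2:ℝ)^s - 2 ^ (t-1) := by
      linear_combination -halpha
    rcases le_or_gt 2 (ctAlpha s t) with h | h
    · exfalso
      have : (2 - ctAlpha s t) * ((2:ℝ)^s - 1) ≤ 0 :=
        mul_nonpos_of_nonpos_of_nonneg (by linarith) (by linarith)
      linarith
    · exact h

lemma arith_master (s t k SA SB SC : ℕ) (ht : 2 ≤ t) (hts : t ≤ s)
    (hv : ctAlpha s t + 2 ^ t + 2 ^ (s + 1) - 4
        < ctAlpha s t * k + SA + SB + (2 : ℝ) ^ t * SC) :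
    2 ^ (s + 1) ≤ k + SA + SB + 2 ^ t * SC := by
  obtain ⟨halpha, hα1, hα2⟩ := ctAlpha_basic s t ht hts
  set α := ctAlpha s t with hα
  by_contra hcon
  push_neg at hcon
  have hconR : (k : ℝ) + SA + SB + 2 ^ t * SC + 1 ≤ 2 ^ (s+1) := by
    have : (((k + SA + SB + 2 ^ t * SC) + 1 : ℕ) : ℝ) ≤ ((2 ^ (s+1) : ℕ) : ℝ) := by
      exact_mod_cast hcon
    push_cast at this
    linarith
  have hQ : (2 : ℝ) ≤ 2 ^ (t - 1) := by
    have := pow2R_ge 1 (t - 1) (by omega)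
    simpa using this
  have hP : (4 : ℝ) ≤ 2 ^ s := by
    have := pow2R_ge 2 s (by omega)
    norm_num at this
    linarith
  have h2t : (2:ℝ) ^ t = 2 * 2 ^ (t-1) := by
    have e : (2:ℝ) ^ t = 2 ^ (t-1) * 2 := by
      rw [← pow_succ]
      congr 1
      omega
    linarith [e]
  have h2s : (2:ℝ) ^ (s+1) = 2 * 2 ^ s := by rw [pow_succ]; ring
  have hnn : (0:ℝ) ≤ (SA:ℝ) + SB + 2 ^ t * SC := by positivity
  have hk2P : (k : ℝ) ≤ 2 * (2:ℝ)^s - 1 := by linarith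
  have h2 : (α - 1) * (2 * (2:ℝ)^s - 1) = α + 2 * 2 ^ (t-1) - 3 := by
    linear_combination 2 * halpha
  have h3 : (α - 1) * k ≤ (α - 1) * (2 * (2:ℝ)^s - 1) :=
    mul_le_mul_of_nonneg_left hk2P (by linarith)
  have h4 : α + 2 * 2^(t-1) - 3 < (α - 1) * k := by nlinarith [hv, hconR]
  linarith

lemma arith_arm (s t k SA SB SC : ℕ) (ht : 2 ≤ t) (hts : t ≤ s)
    (hSA : SA + 2 ≤ 2 ^ t) (hSB : SB + 2 ≤ 2 ^ t) (hBA : SB ≤ SA)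
    (hSC : SC + 1 ≤ 2 ^ (s + 1 - t))
    (hv : ctAlpha s t + 2 ^ t + 2 ^ (s + 1) - 4
        < ctAlpha s t * k + SA + SB + (2 : ℝ) ^ t * SC) :
    2 ^ t ≤ k + SA := by
  obtain ⟨halpha, hα1, hα2⟩ := ctAlpha_basic s t ht hts
  set α := ctAlpha s t with hα
  by_contra hcon
  push_neg at hcon
  have hconR : (k : ℝ) + SA + 1 ≤ 2 ^ t := by
    have : (((k + SA) + 1 : ℕ) : ℝ) ≤ ((2 ^ t : ℕ) : ℝ) := by exact_mod_cast hcon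
    push_cast at this
    linarith
  have hSCn : 2 ^ t * SC + 2 ^ t ≤ 2 ^ (s + 1) := by
    have h1 : 2 ^ t * (SC + 1) ≤ 2 ^ t * 2 ^ (s + 1 - t) := Nat.mul_le_mul_left _ hSC
    have h2 : 2 ^ t * 2 ^ (s + 1 - t) = 2 ^ (s + 1) := by
      rw [← pow_add]
      congr 1
      omega
    have h0 : 2 ^ t * (SC + 1) = 2 ^ t * SC + 2 ^ t := by ring
    omega
  have hSCR : (2:ℝ) ^ t * SC + 2 ^ t ≤ 2 ^ (s+1) := by
    have : ((2 ^ t * SC + 2 ^ t : ℕ) : ℝ) ≤ ((2 ^ (s+1) : ℕ) : ℝ) := by exact_mod_cast hSCn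
    push_cast at this
    linarith
  have hSAR : (SA:ℝ) + 2 ≤ 2 ^ t := by
    have : ((SA + 2 : ℕ) : ℝ) ≤ ((2 ^ t : ℕ) : ℝ) := by exact_mod_cast hSA
    push_cast at this
    linarith
  have hSBR : (SB:ℝ) + 2 ≤ 2 ^ t := by
    have : ((SB + 2 : ℕ) : ℝ) ≤ ((2 ^ t : ℕ) : ℝ) := by exact_mod_cast hSB
    push_cast at this
    linarith
  have hBAR : (SB:ℝ) ≤ SA := by exact_mod_cast hBA
  rcases Nat.eq_zero_or_pos k with hk | hk
  · subst hk
    push_cast at hv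
    linarith
  · have hkR : (1:ℝ) ≤ k := by exact_mod_cast hk
    have h5 : α - 2 + 2 * k < α * k - 2 * k + 2 * k := by nlinarith [hv]
    have h6 : (α - 2) * k ≤ (α - 2) * 1 :=
      mul_le_mul_of_nonpos_left hkR (by linarith)
    nlinarith [h5, h6]

end Arith

section Assemble

def ctFT (s t : ℕ) : ℕ → Fin (s + t + 1) :=
  fun i => ⟨min (2 * t - 1 + min i (s + 1 - t)) (s + t), by omega⟩

lemma ctFT_val (s t : ℕ) (ht : 2 ≤ t) (hts : t ≤ s) (i : ℕ) (hi : i ≤ s + 1 - t) :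
    (ctFT s t i).val = 2 * t - 1 + i := by
  simp only [ctFT]
  omega

lemma ctFT_adj (s t : ℕ) (ht : 2 ≤ t) (hts : t ≤ s) (i : ℕ) (hi : i < s + 1 - t) :
    (cycleTailGraph s t).Adj (ctFT s t i) (ctFT s t (i + 1)) := by
  have e1 : ctFT s t i = ⟨2 * t - 1 + i, by omega⟩ :=
    Fin.ext (by rw [ctFT_val s t ht hts i (by omega)])
  have e2 : ctFT s t (i + 1) = ⟨2 * t - 1 + (i + 1), by omega⟩ :=
    Fin.ext (by rw [ctFT_val s t ht hts (i + 1) (by omega)])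
  rw [e1, e2]
  refine ct_adj s t _ _ (by omega) ?_
  unfold cycleTailRel
  omega

set_option maxHeartbeats 2000000 in
lemma assemble (s t : ℕ) (ht : 2 ≤ t) (hts : t ≤ s) (p : Fin (s + t + 1) → ℕ)
    (fM fm : ℕ → Fin (s + t + 1))
    (hM0 : (fM 0).val = 0) (hMt : (fM t).val = 2 * t - 1)
    (hm0 : (fm 0).val = 0) (hmt : (fm t).val = 2 * t - 1)
    (hMadj : ∀ i, i < t → (cycleTailGraph s t).Adj (fM i) (fM (i + 1)))
    (hmadj : ∀ i, i < t → (cycleTailGraph s t).Adj (fm i) (fm (i + 1)))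
    (hMinj : ∀ i i', i ≤ t → i' ≤ t → fM i = fM i' → i = i')
    (hminj : ∀ i i', i ≤ t → i' ≤ t → fm i = fm i' → i = i')
    (hMval : ∀ i, i ≤ t → (fM i).val ≤ 2 * t - 1)
    (hmval : ∀ i, i ≤ t → (fm i).val ≤ 2 * t - 1)
    (hdisj : ∀ i, 1 ≤ i → i < t → ∀ i', i' ≤ t → fm i ≠ fM i')
    (hple : ∀ v : Fin (s + t + 1), 1 ≤ v.val → v.val ≤ s + t - 1 → p v ≤ 1)
    (SM Sm SC : ℕ)
    (hSM : SM = ∑ i ∈ Finset.Ico 1 t, p (fM i) * 2 ^ i)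
    (hSm : Sm = ∑ i ∈ Finset.Ico 1 t, p (fm i) * 2 ^ i)
    (hSC : SC = ∑ i ∈ Finset.range (s + 1 - t), p (ctFT s t i) * 2 ^ i)
    (hSCle : SC + 1 ≤ 2 ^ (s + 1 - t))
    (hbM : 2 ^ t ≤ p (fM 0) + SM)
    (hbAll : 2 ^ (s + 1) ≤ p (fM 0) + SM + Sm + 2 ^ t * SC) :
    PebblingSolvable (cycleTailGraph s t) ⟨s + t, Nat.lt_succ_self _⟩ p := by
  have hvposM : ∀ i, 1 ≤ i → i ≤ t → 1 ≤ (fM i).val := by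
    intro i h1 h2
    by_contra hc
    have : fM i = fM 0 := Fin.ext (by omega)
    have := hMinj i 0 h2 (by omega) this
    omega
  have hvposm : ∀ i, 1 ≤ i → i ≤ t → 1 ≤ (fm i).val := by
    intro i h1 h2
    by_contra hc
    have : fm i = fm 0 := Fin.ext (by omega)
    have := hminj i 0 h2 (by omega) this
    omega
  set xt : Fin (s + t + 1) := ⟨2 * t - 1, by omega⟩ with hxt
  have hfMt : fM t = xt := Fin.ext (by rw [hMt])
  have hfmt : fm t = xt := Fin.ext (by rw [hmt])
  have hfm0 : fm 0 = fM 0 := Fin.ext (by rw [hM0, hm0])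
  -- Step 1 : deliver one pebble to x_t along the major arm
  obtain ⟨q1, hrtg1, hq1t, hq10, hq1out⟩ := chain_deliver t fM p 1 (by omega) le_rfl
    hMadj hMinj
    (fun i h1 h2 => hple (fM i) (hvposM i h1 (by omega))
      (by have := hMval i (by omega); omega))
    (by rw [← hSM, one_mul]; exact hbM)
  rw [hfMt] at hq1t
  set D := 2 ^ (s + 1 - t) - SC with hD
  have hD1 : 1 ≤ D := by omega
  -- Step 2 : if needed, deliver D - 1 more pebbles along the minor arm
  have step2 : ∃ q2, Relation.ReflTransGen (PebblingMove (cycleTailGraph s t)) p q2 ∧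
      q2 xt = p xt + D ∧
      ∀ x : Fin (s + t + 1), 2 * t ≤ x.val → q2 x = p x := by
    rcases eq_or_lt_of_le hD1 with hD2 | hD2
    · refine ⟨q1, hrtg1, by omega, ?_⟩
      intro x hx
      refine hq1out x (fun i hi hne => ?_)
      have := hMval i hi
      rw [hne] at hx
      omega
    · -- D ≥ 2
      have hq1m : ∀ i, 1 ≤ i → i < t → q1 (fm i) = p (fm i) := by
        intro i h1 h2
        exact hq1out (fm i) (fun i' hi' => hdisj i h1 h2 i' hi')
      have hsum_m : ∑ i ∈ Finset.Ico 1 t, q1 (fm i) * 2 ^ i = Sm := by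
        rw [hSm]
        refine Finset.sum_congr rfl (fun i hi => ?_)
        rw [Finset.mem_Ico] at hi
        rw [hq1m i hi.1 hi.2]
      have e3 : D + SC = 2 ^ (s + 1 - t) := by omega
      have e2 : D * 2 ^ t + SC * 2 ^ t = 2 ^ (s + 1) := by
        have : (D + SC) * 2 ^ t = 2 ^ (s + 1 - t) * 2 ^ t := by rw [e3]
        rw [Nat.add_mul] at this
        rw [this, ← pow_add]
        congr 1
        omega
      have e4 : 2 ^ t * SC = SC * 2 ^ t := Nat.mul_comm _ _
      have e5 : (D - 1) * 2 ^ t + 2 ^ t = D * 2 ^ t := by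
        have : (D - 1) * 2 ^ t + 1 * 2 ^ t = ((D - 1) + 1) * 2 ^ t := by ring
        rw [show (D-1) + 1 = D from by omega] at this
        omega
      obtain ⟨q2, hrtg2, hq2t, hq20, hq2out⟩ := chain_deliver t fm q1 (D - 1) (by omega)
        (by omega) hmadj hminj
        (fun i h1 h2 => by
          rw [hq1m i h1 h2]
          exact hple (fm i) (hvposm i h1 (by omega)) (by have := hmval i (by omega); omega))
        (by
          rw [hsum_m, hfm0]
          rw [one_mul] at hq10
          omega)
      rw [hfmt] at hq2t
      rw [hq1t] at hq2t
      refine ⟨q2, hrtg1.trans hrtg2, by omega, ?_⟩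
      intro x hx
      have h1 : q2 x = q1 x := by
        refine hq2out x (fun i hi hne => ?_)
        have := hmval i hi
        rw [hne] at hx
        omega
      rw [h1]
      refine hq1out x (fun i hi hne => ?_)
      have := hMval i hi
      rw [hne] at hx
      omega
  obtain ⟨q2, hrtg2, hq2t, hq2out⟩ := step2
  -- Step 3 : deliver along the tail to the root
  have hT0 : ctFT s t 0 = xt := by
    apply Fin.ext
    rw [ctFT_val s t ht hts 0 (by omega)]
    show 2 * t - 1 + 0 = 2 * t - 1
    omega
  have hTL : ctFT s t (s + 1 - t) = ⟨s + t, Nat.lt_succ_self _⟩ := by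
    apply Fin.ext
    rw [ctFT_val s t ht hts _ le_rfl]
    show 2 * t - 1 + (s + 1 - t) = s + t
    omega
  have hTv : ∀ i, i ≤ s + 1 - t → (ctFT s t i).val = 2 * t - 1 + i :=
    fun i hi => ctFT_val s t ht hts i hi
  have hTmid : ∀ i, 1 ≤ i → i < s + 1 - t → q2 (ctFT s t i) = p (ctFT s t i) := by
    intro i h1 h2
    refine hq2out _ ?_
    rw [hTv i (by omega)]
    omega
  have hSCsplit : SC = p xt + ∑ i ∈ Finset.Ico 1 (s + 1 - t), p (ctFT s t i) * 2 ^ i := by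
    rw [hSC, Finset.range_eq_Ico, Finset.sum_eq_sum_Ico_succ_bot (by omega : 0 < s + 1 - t)]
    rw [hT0]
    simp
  have hinjT : ∀ i i', i ≤ s + 1 - t → i' ≤ s + 1 - t → ctFT s t i = ctFT s t i' → i = i' := by
    intro i i' hi hi' he
    have : (ctFT s t i).val = (ctFT s t i').val := by rw [he]
    rw [hTv i hi, hTv i' hi'] at this
    omega
  have hmidT : ∀ i, 1 ≤ i → i < s + 1 - t → q2 (ctFT s t i) ≤ 1 := by
    intro i h1 h2
    rw [hTmid i h1 h2]
    refine hple _ ?_ ?_ <;> rw [hTv i (by omega)] <;> omega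
  have hbudT : 1 * 2 ^ (s + 1 - t) ≤ q2 (ctFT s t 0)
      + ∑ i ∈ Finset.Ico 1 (s + 1 - t), q2 (ctFT s t i) * 2 ^ i := by
    have hco : ∑ i ∈ Finset.Ico 1 (s + 1 - t), q2 (ctFT s t i) * 2 ^ i
        = ∑ i ∈ Finset.Ico 1 (s + 1 - t), p (ctFT s t i) * 2 ^ i := by
      refine Finset.sum_congr rfl (fun i hi => ?_)
      rw [Finset.mem_Ico] at hi
      rw [hTmid i hi.1 hi.2]
    rw [hco, hT0, hq2t, one_mul]
    omega
  obtain ⟨q3, hrtg3, hq3r, _, _⟩ := chain_deliver (s + 1 - t) (ctFT s t) q2 1 (by omega) le_rfl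
    (fun i hi => ctFT_adj s t ht hts i hi) hinjT hmidT hbudT
  rw [hTL] at hq3r
  exact ⟨q3, hrtg2.trans hrtg3, by omega⟩

end Assemble

section Arms

def ctV (s t : ℕ) : ℕ → Fin (s + t + 1) := fun n => ⟨min n (s + t), by omega⟩

lemma ctV_val (s t n : ℕ) (hn : n ≤ s + t) : (ctV s t n).val = n := by
  simp only [ctV]
  omega

def ctFA (s t : ℕ) : ℕ → Fin (s + t + 1) :=
  fun i => ⟨min (if i = t then 2 * t - 1 else min i (t - 1)) (s + t), by omega⟩

def ctFB (s t : ℕ) : ℕ → Fin (s + t + 1) :=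
  fun i => ⟨min (if i = t then 2 * t - 1 else if i = 0 then 0 else t - 1 + min i (t - 1))
    (s + t), by omega⟩

lemma ctFA_val (s t : ℕ) (ht : 2 ≤ t) (hts : t ≤ s) (i : ℕ) (hi : i ≤ t) :
    (ctFA s t i).val = if i = t then 2 * t - 1 else i := by
  simp only [ctFA]
  split_ifs <;> omega

lemma ctFB_val (s t : ℕ) (ht : 2 ≤ t) (hts : t ≤ s) (i : ℕ) (hi : i ≤ t) :
    (ctFB s t i).val = if i = t then 2 * t - 1 else if i = 0 then 0 else t - 1 + i := by
  simp only [ctFB]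
  split_ifs <;> omega

lemma ctFA_adj (s t : ℕ) (ht : 2 ≤ t) (hts : t ≤ s) (i : ℕ) (hi : i < t) :
    (cycleTailGraph s t).Adj (ctFA s t i) (ctFA s t (i + 1)) := by
  have e1 : ctFA s t i = ⟨i, by omega⟩ := by
    apply Fin.ext
    rw [ctFA_val s t ht hts i (by omega), if_neg (by omega)]
  rcases eq_or_lt_of_le (show i + 1 ≤ t from hi) with h | h
  · have e2 : ctFA s t (i + 1) = ⟨2 * t - 1, by omega⟩ := by
      apply Fin.ext
      rw [ctFA_val s t ht hts (i + 1) (by omega), if_pos h]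
    rw [e1, e2]
    refine ct_adj s t _ _ (by omega) ?_
    unfold cycleTailRel
    omega
  · have e2 : ctFA s t (i + 1) = ⟨i + 1, by omega⟩ := by
      apply Fin.ext
      rw [ctFA_val s t ht hts (i + 1) (by omega), if_neg (by omega)]
    rw [e1, e2]
    refine ct_adj s t _ _ (by omega) ?_
    unfold cycleTailRel
    omega

lemma ctFB_adj (s t : ℕ) (ht : 2 ≤ t) (hts : t ≤ s) (i : ℕ) (hi : i < t) :
    (cycleTailGraph s t).Adj (ctFB s t i) (ctFB s t (i + 1)) := by
  have e1 : ctFB s t i = ⟨if i = 0 then 0 else t - 1 + i, by split_ifs <;> omega⟩ := by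
    apply Fin.ext
    rw [ctFB_val s t ht hts i (by omega), if_neg (by omega)]
  rcases eq_or_lt_of_le (show i + 1 ≤ t from hi) with h | h
  · have e2 : ctFB s t (i + 1) = ⟨2 * t - 1, by omega⟩ := by
      apply Fin.ext
      rw [ctFB_val s t ht hts (i + 1) (by omega), if_pos h]
    rw [e1, e2]
    refine ct_adj s t _ _ (by split_ifs <;> omega) ?_
    unfold cycleTailRel
    split_ifs <;> omega
  · have e2 : ctFB s t (i + 1) = ⟨t - 1 + (i + 1), by omega⟩ := by
      apply Fin.ext
      rw [ctFB_val s t ht hts (i + 1) (by omega), if_neg (by omega), if_neg (by omega)]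
    rw [e1, e2]
    refine ct_adj s t _ _ (by split_ifs <;> omega) ?_
    unfold cycleTailRel
    split_ifs <;> omega

end Arms

section WeightPrimed

lemma w_zero' (s t : ℕ) (v : Fin (s + t + 1)) (h : v.val = 0) :
    cycleTailWeight s t v = ctAlpha s t := by
  simp only [cycleTailWeight, ctAlpha]
  rw [if_pos h]

lemma w_low' (s t : ℕ) (v : Fin (s + t + 1)) (h1 : 1 ≤ v.val) (h2 : v.val ≤ t - 1) :
    cycleTailWeight s t v = 2 ^ v.val := by
  simp only [cycleTailWeight]
  rw [if_neg (by omega), if_pos (by omega)]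

lemma w_high' (s t : ℕ) (ht : 2 ≤ t) (v : Fin (s + t + 1)) (h1 : t ≤ v.val)
    (h2 : v.val ≤ s + t - 1) : cycleTailWeight s t v = 2 ^ (v.val - t + 1) := by
  simp only [cycleTailWeight]
  have hv : v.val ≤ s + t := by omega
  rw [if_neg (by omega), if_neg (by omega), if_neg (by omega)]
  congr 1
  omega

lemma w_root' (s t : ℕ) (ht : 2 ≤ t) (v : Fin (s + t + 1)) (h : v.val = s + t) :
    cycleTailWeight s t v = 0 := by
  simp only [cycleTailWeight]
  rw [if_neg (by omega), if_neg (by omega), if_pos h]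

end WeightPrimed

section Decomp

lemma fin_sum_to_range (s t : ℕ) (g : Fin (s + t + 1) → ℝ) :
    ∑ v, g v = ∑ n ∈ Finset.range (s + t + 1), g (ctV s t n) := by
  rw [← Fin.sum_univ_eq_sum_range (fun n => g (ctV s t n)) (s + t + 1)]
  refine Finset.sum_congr rfl (fun v _ => ?_)
  congr 1
  apply Fin.ext
  rw [ctV_val s t v.val (by omega)]

lemma range_split (s t : ℕ) (ht : 2 ≤ t) (hts : t ≤ s) (F : ℕ → ℝ) :
    ∑ n ∈ Finset.range (s + t + 1), F n
      = F 0 + ∑ n ∈ Finset.Ico 1 t, F n + ∑ n ∈ Finset.Ico t (2 * t - 1), F n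
        + ∑ n ∈ Finset.Ico (2 * t - 1) (s + t), F n + F (s + t) := by
  rw [Finset.sum_range_succ]
  rw [Finset.range_eq_Ico]
  rw [← Finset.sum_Ico_consecutive F (by omega : (0:ℕ) ≤ t) (by omega : t ≤ s + t)]
  rw [← Finset.sum_Ico_consecutive F (by omega : t ≤ 2 * t - 1) (by omega : 2 * t - 1 ≤ s + t)]
  rw [Finset.sum_eq_sum_Ico_succ_bot (by omega : 0 < t) F]
  ring

set_option maxHeartbeats 1000000 in
lemma weight_decomp (s t : ℕ) (ht : 2 ≤ t) (hts : t ≤ s) (p : Fin (s + t + 1) → ℕ) :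
    ∑ v, cycleTailWeight s t v * (p v : ℝ)
      = ctAlpha s t * (p ⟨0, by omega⟩ : ℝ)
        + ((∑ i ∈ Finset.Ico 1 t, p (ctFA s t i) * 2 ^ i : ℕ) : ℝ)
        + ((∑ i ∈ Finset.Ico 1 t, p (ctFB s t i) * 2 ^ i : ℕ) : ℝ)
        + (2 : ℝ) ^ t * ((∑ i ∈ Finset.range (s + 1 - t), p (ctFT s t i) * 2 ^ i : ℕ) : ℝ) := by
  rw [fin_sum_to_range s t (fun v => cycleTailWeight s t v * (p v : ℝ))]
  rw [range_split s t ht hts]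
  have hT0 : cycleTailWeight s t (ctV s t 0) * (p (ctV s t 0) : ℝ)
      = ctAlpha s t * (p ⟨0, by omega⟩ : ℝ) := by
    rw [w_zero' s t _ (ctV_val s t 0 (by omega))]
    rw [show ctV s t 0 = ⟨0, by omega⟩ from Fin.ext (ctV_val s t 0 (by omega))]
  have hT4 : cycleTailWeight s t (ctV s t (s + t)) * (p (ctV s t (s + t)) : ℝ) = 0 := by
    rw [w_root' s t ht _ (ctV_val s t (s + t) (by omega))]
    ring
  have hT1 : ∑ n ∈ Finset.Ico 1 t, cycleTailWeight s t (ctV s t n) * (p (ctV s t n) : ℝ)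
      = ((∑ i ∈ Finset.Ico 1 t, p (ctFA s t i) * 2 ^ i : ℕ) : ℝ) := by
    rw [Nat.cast_sum]
    refine Finset.sum_congr rfl (fun n hn => ?_)
    rw [Finset.mem_Ico] at hn
    have hval := ctV_val s t n (by omega)
    rw [w_low' s t _ (by omega) (by omega), hval]
    rw [show ctFA s t n = ctV s t n from Fin.ext (by
      rw [ctFA_val s t ht hts n (by omega), if_neg (by omega), hval])]
    push_cast
    ring
  have hT2 : ∑ n ∈ Finset.Ico t (2 * t - 1),
        cycleTailWeight s t (ctV s t n) * (p (ctV s t n) : ℝ)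
      = ((∑ i ∈ Finset.Ico 1 t, p (ctFB s t i) * 2 ^ i : ℕ) : ℝ) := by
    rw [Nat.cast_sum, Finset.sum_Ico_eq_sum_range, Finset.sum_Ico_eq_sum_range]
    rw [show 2 * t - 1 - t = t - 1 from by omega, show t - 1 = t - 1 from rfl]
    refine Finset.sum_congr rfl (fun i hi => ?_)
    rw [Finset.mem_range] at hi
    have hval := ctV_val s t (t + i) (by omega)
    rw [w_high' s t ht _ (by omega) (by omega), hval]
    rw [show t + i - t + 1 = 1 + i from by omega]
    rw [show ctFB s t (1 + i) = ctV s t (t + i) from Fin.ext (by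
      rw [ctFB_val s t ht hts (1 + i) (by omega), if_neg (by omega), if_neg (by omega), hval]
      omega)]
    push_cast
    ring
  have hT3 : ∑ n ∈ Finset.Ico (2 * t - 1) (s + t),
        cycleTailWeight s t (ctV s t n) * (p (ctV s t n) : ℝ)
      = (2 : ℝ) ^ t * ((∑ i ∈ Finset.range (s + 1 - t), p (ctFT s t i) * 2 ^ i : ℕ) : ℝ) := by
    rw [Nat.cast_sum, Finset.mul_sum, Finset.sum_Ico_eq_sum_range]
    rw [show s + t - (2 * t - 1) = s + 1 - t from by omega]
    refine Finset.sum_congr rfl (fun i hi => ?_)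
    rw [Finset.mem_range] at hi
    have hval := ctV_val s t (2 * t - 1 + i) (by omega)
    rw [w_high' s t ht _ (by omega) (by omega), hval]
    rw [show 2 * t - 1 + i - t + 1 = t + i from by omega]
    rw [show ctFT s t i = ctV s t (2 * t - 1 + i) from Fin.ext (by
      rw [ctFT_val s t ht hts i (by omega), hval])]
    push_cast
    rw [pow_add]
    ring
  rw [hT0, hT4, hT1, hT2, hT3]
  ring

set_option maxHeartbeats 1000000 in
lemma weight_total (s t : ℕ) (ht : 2 ≤ t) (hts : t ≤ s) :
    ∑ v, cycleTailWeight s t v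
      = ctAlpha s t + ((2 : ℝ) ^ t - 2) + ((2 : ℝ) ^ (s + 1) - 2) := by
  rw [fin_sum_to_range s t (fun v => cycleTailWeight s t v)]
  rw [range_split s t ht hts]
  have hT0 : cycleTailWeight s t (ctV s t 0) = ctAlpha s t :=
    w_zero' s t _ (ctV_val s t 0 (by omega))
  have hT4 : cycleTailWeight s t (ctV s t (s + t)) = 0 :=
    w_root' s t ht _ (ctV_val s t (s + t) (by omega))
  have hT1 : ∑ n ∈ Finset.Ico 1 t, cycleTailWeight s t (ctV s t n) = (2 : ℝ) ^ t - 2 := by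
    have h1 : ∑ n ∈ Finset.Ico 1 t, cycleTailWeight s t (ctV s t n)
        = ∑ n ∈ Finset.Ico 1 t, (2 : ℝ) ^ n := by
      refine Finset.sum_congr rfl (fun n hn => ?_)
      rw [Finset.mem_Ico] at hn
      have hval := ctV_val s t n (by omega)
      rw [w_low' s t _ (by omega) (by omega), hval]
    have h2 : ∑ n ∈ Finset.Ico 1 t, (2 : ℝ) ^ n = ((∑ n ∈ Finset.Ico 1 t, 2 ^ n : ℕ) : ℝ) := by
      push_cast
      rfl
    have h3 : (2:ℕ) ≤ 2 ^ t := by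
      have : (2:ℕ) ^ 1 ≤ 2 ^ t := Nat.pow_le_pow_right (by norm_num) (by omega)
      simpa using this
    rw [h1, h2, sum_Ico_pow2 t]
    push_cast [Nat.cast_sub h3]
    ring
  have hT23 : ∑ n ∈ Finset.Ico t (2 * t - 1), cycleTailWeight s t (ctV s t n)
      + ∑ n ∈ Finset.Ico (2 * t - 1) (s + t), cycleTailWeight s t (ctV s t n)
      = (2 : ℝ) ^ (s + 1) - 2 := by
    rw [Finset.sum_Ico_consecutive _ (by omega : t ≤ 2 * t - 1) (by omega : 2 * t - 1 ≤ s + t)]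
    have h1 : ∑ n ∈ Finset.Ico t (s + t), cycleTailWeight s t (ctV s t n)
        = ∑ i ∈ Finset.range s, (2 : ℝ) ^ (i + 1) := by
      rw [Finset.sum_Ico_eq_sum_range, show s + t - t = s from by omega]
      refine Finset.sum_congr rfl (fun i hi => ?_)
      rw [Finset.mem_range] at hi
      have hval := ctV_val s t (t + i) (by omega)
      rw [w_high' s t ht _ (by omega) (by omega), hval]
      rw [show t + i - t + 1 = i + 1 from by omega]
    have h2 : ∑ i ∈ Finset.range s, (2 : ℝ) ^ (i + 1)
        = 2 * ∑ i ∈ Finset.range s, (2 : ℝ) ^ i := by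
      rw [Finset.mul_sum]
      refine Finset.sum_congr rfl (fun i _ => by ring)
    rw [h1, h2, sum_range_pow2R]
    rw [pow_succ]
    ring
  rw [hT0, hT4, hT1]
  rw [add_assoc (ctAlpha s t + ((2:ℝ)^t - 2))]
  rw [hT23]
  ring

end Decomp

section Key

set_option maxHeartbeats 2000000 in
lemma ct_key (s t : ℕ) (ht : 2 ≤ t) (hts : t ≤ s) :
    ∀ (N : ℕ) (p : Fin (s + t + 1) → ℕ), (∑ v, p v) = N →
      (∑ v, cycleTailWeight s t v) < ∑ v, cycleTailWeight s t v * (p v : ℝ) →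
      PebblingSolvable (cycleTailGraph s t) ⟨s + t, Nat.lt_succ_self _⟩ p := by
  intro N
  induction N using Nat.strong_induction_on with
  | _ N IH =>
  intro p hN hW
  by_cases hr : 1 ≤ p ⟨s + t, Nat.lt_succ_self _⟩
  · exact ⟨p, Relation.ReflTransGen.refl, hr⟩
  push_neg at hr
  by_cases hxs : 2 ≤ p ⟨s + t - 1, by omega⟩
  · have hadj : (cycleTailGraph s t).Adj ⟨s + t - 1, by omega⟩ ⟨s + t, Nat.lt_succ_self _⟩ := by
      refine ct_adj s t _ _ (by omega) ?_
      unfold cycleTailRel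
      omega
    refine ⟨_, moveMany hadj p 1 (by exact hxs), ?_⟩
    have hne : (⟨s + t, Nat.lt_succ_self _⟩ : Fin (s + t + 1)) ≠ ⟨s + t - 1, by omega⟩ := by
      intro hcon
      have : s + t = s + t - 1 := congrArg Fin.val hcon
      omega
    simp [hne]
  push_neg at hxs
  by_cases hmid : ∃ v : Fin (s + t + 1), 1 ≤ v.val ∧ v.val ≤ s + t - 2 ∧ 2 ≤ p v
  · obtain ⟨v, hv1, hv2, hp2⟩ := hmid
    have step : ∀ (m : ℕ) (hm : m < s + t + 1),
        (cycleTailGraph s t).Adj v ⟨m, hm⟩ →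
        cycleTailWeight s t ⟨m, hm⟩ = 2 * cycleTailWeight s t v →
        PebblingSolvable (cycleTailGraph s t) ⟨s + t, Nat.lt_succ_self _⟩ p := by
      intro m hm hadj hw
      set vv : Fin (s + t + 1) := ⟨m, hm⟩ with hvv
      have huv : v ≠ vv := hadj.ne
      set q : Fin (s + t + 1) → ℕ :=
        fun x => if x = v then p v - 2 else if x = vv then p vv + 1 else p x with hq
      have hqu : q v = p v - 2 := by rw [hq]; simp
      have hqv : q vv = p vv + 1 := by rw [hq]; simp [Ne.symm huv]
      have hrest : ∀ x, x ≠ v → x ≠ vv → q x = p x := by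
        intro x h1 h2
        rw [hq]
        simp [h1, h2]
      have hmove : PebblingMove (cycleTailGraph s t) p q := ⟨v, vv, hadj, hp2, hqu, hqv, hrest⟩
      have hsn := move_sum_nat p q v vv huv hp2 hqu hqv hrest
      have hsw := move_sum_weight (cycleTailWeight s t) p q v vv huv hp2 hqu hqv hrest hw
      have hp2' : 2 ≤ ∑ x, p x :=
        le_trans hp2 (Finset.single_le_sum (f := p) (fun i _ => Nat.zero_le _) (Finset.mem_univ v))
      have hsol := IH (N - 1) (by omega) q (by omega) (by rw [hsw]; exact hW)
      exact solvable_of_rtg (Relation.ReflTransGen.single hmove) hsol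
    rcases (show (1 ≤ v.val ∧ v.val ≤ t - 2) ∨ v.val = t - 1 ∨ (t ≤ v.val ∧ v.val ≤ s + t - 2)
        from by omega) with h | h | h
    · refine step (v.val + 1) (by omega) ?_ ?_
      · refine ct_adj s t (m := v.val) (n := v.val + 1) v.isLt (by omega) (by omega) ?_
        unfold cycleTailRel
        omega
      · rw [w_low' s t v (by omega) (by omega),
          w_low' s t ⟨v.val + 1, by omega⟩ (by exact (show 1 ≤ v.val + 1 by omega))
            (by exact (show v.val + 1 ≤ t - 1 by omega))]
        show (2:ℝ) ^ (v.val + 1) = 2 * 2 ^ v.val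
        rw [pow_succ]
        ring
    · refine step (2 * t - 1) (by omega) ?_ ?_
      · refine ct_adj s t (m := v.val) (n := 2 * t - 1) v.isLt (by omega) (by omega) ?_
        unfold cycleTailRel
        omega
      · rw [w_low' s t v (by omega) (by omega),
          w_high' s t ht ⟨2 * t - 1, by omega⟩ (by exact (show t ≤ 2 * t - 1 by omega))
            (by exact (show 2 * t - 1 ≤ s + t - 1 by omega))]
        show (2:ℝ) ^ (2 * t - 1 - t + 1) = 2 * 2 ^ v.val
        rw [show 2 * t - 1 - t + 1 = v.val + 1 from by omega, pow_succ]
        ring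
    · refine step (v.val + 1) (by omega) ?_ ?_
      · refine ct_adj s t (m := v.val) (n := v.val + 1) v.isLt (by omega) (by omega) ?_
        unfold cycleTailRel
        omega
      · rw [w_high' s t ht v (by omega) (by omega),
          w_high' s t ht ⟨v.val + 1, by omega⟩ (by exact (show t ≤ v.val + 1 by omega))
            (by exact (show v.val + 1 ≤ s + t - 1 by omega))]
        show (2:ℝ) ^ (v.val + 1 - t + 1) = 2 * 2 ^ (v.val - t + 1)
        rw [show v.val + 1 - t + 1 = (v.val - t + 1) + 1 from by omega, pow_succ]
        ring
  · -- final combinatorial case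
    push_neg at hmid
    have hple : ∀ v : Fin (s + t + 1), 1 ≤ v.val → v.val ≤ s + t - 1 → p v ≤ 1 := by
      intro v h1 h2
      rcases le_or_gt v.val (s + t - 2) with h | h
      · have := hmid v h1 h
        omega
      · have hv : v = ⟨s + t - 1, by omega⟩ := Fin.ext (by exact (show v.val = s + t - 1 by omega))
        rw [hv]
        exact Nat.lt_succ_iff.mp hxs
    have h4t : (4:ℕ) ≤ 2 ^ t := by
      have : (2:ℕ) ^ 2 ≤ 2 ^ t := Nat.pow_le_pow_right (by norm_num) ht
      simpa using this
    have hSAle : (∑ i ∈ Finset.Ico 1 t, p (ctFA s t i) * 2 ^ i) + 2 ≤ 2 ^ t := by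
      have h1 : ∑ i ∈ Finset.Ico 1 t, p (ctFA s t i) * 2 ^ i ≤ ∑ i ∈ Finset.Ico 1 t, 2 ^ i := by
        refine Finset.sum_le_sum (fun i hi => ?_)
        rw [Finset.mem_Ico] at hi
        have hval : (ctFA s t i).val = i := by
          rw [ctFA_val s t ht hts i (by omega), if_neg (by omega)]
        have := hple (ctFA s t i) (by omega) (by omega)
        calc p (ctFA s t i) * 2 ^ i ≤ 1 * 2 ^ i := Nat.mul_le_mul_right _ this
          _ = 2 ^ i := by ring
      have := sum_Ico_pow2 t
      omega
    have hSBle : (∑ i ∈ Finset.Ico 1 t, p (ctFB s t i) * 2 ^ i) + 2 ≤ 2 ^ t := by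
      have h1 : ∑ i ∈ Finset.Ico 1 t, p (ctFB s t i) * 2 ^ i ≤ ∑ i ∈ Finset.Ico 1 t, 2 ^ i := by
        refine Finset.sum_le_sum (fun i hi => ?_)
        rw [Finset.mem_Ico] at hi
        have hval : (ctFB s t i).val = t - 1 + i := by
          rw [ctFB_val s t ht hts i (by omega), if_neg (by omega), if_neg (by omega)]
        have := hple (ctFB s t i) (by omega) (by omega)
        calc p (ctFB s t i) * 2 ^ i ≤ 1 * 2 ^ i := Nat.mul_le_mul_right _ this
          _ = 2 ^ i := by ring
      have := sum_Ico_pow2 t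
      omega
    have hSCle : (∑ i ∈ Finset.range (s + 1 - t), p (ctFT s t i) * 2 ^ i) + 1
        ≤ 2 ^ (s + 1 - t) := by
      have h1 : ∑ i ∈ Finset.range (s + 1 - t), p (ctFT s t i) * 2 ^ i
          ≤ ∑ i ∈ Finset.range (s + 1 - t), 2 ^ i := by
        refine Finset.sum_le_sum (fun i hi => ?_)
        rw [Finset.mem_range] at hi
        have hval : (ctFT s t i).val = 2 * t - 1 + i := ctFT_val s t ht hts i (by omega)
        have := hple (ctFT s t i) (by omega) (by omega)
        calc p (ctFT s t i) * 2 ^ i ≤ 1 * 2 ^ i := Nat.mul_le_mul_right _ this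
          _ = 2 ^ i := by ring
      have := sum_range_pow2 (s + 1 - t)
      have h2 : (1:ℕ) ≤ 2 ^ (s + 1 - t) := Nat.one_le_two_pow
      omega
    rw [weight_total s t ht hts, weight_decomp s t ht hts p] at hW
    have hv : ctAlpha s t + 2 ^ t + 2 ^ (s + 1) - 4
        < ctAlpha s t * (p ⟨0, by omega⟩ : ℝ)
          + (∑ i ∈ Finset.Ico 1 t, p (ctFA s t i) * 2 ^ i : ℕ)
          + (∑ i ∈ Finset.Ico 1 t, p (ctFB s t i) * 2 ^ i : ℕ)
          + (2:ℝ) ^ t * (∑ i ∈ Finset.range (s + 1 - t), p (ctFT s t i) * 2 ^ i : ℕ) := by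
      linarith [hW]
    have hmaster := arith_master s t (p ⟨0, by omega⟩)
      (∑ i ∈ Finset.Ico 1 t, p (ctFA s t i) * 2 ^ i)
      (∑ i ∈ Finset.Ico 1 t, p (ctFB s t i) * 2 ^ i)
      (∑ i ∈ Finset.range (s + 1 - t), p (ctFT s t i) * 2 ^ i) ht hts hv
    have hA0 : ctFA s t 0 = ⟨0, by omega⟩ := by
      apply Fin.ext
      show (ctFA s t 0).val = 0
      rw [ctFA_val s t ht hts 0 (by omega)]
      split_ifs <;> omega
    have hB0 : ctFB s t 0 = ⟨0, by omega⟩ := by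
      apply Fin.ext
      show (ctFB s t 0).val = 0
      rw [ctFB_val s t ht hts 0 (by omega)]
      split_ifs <;> omega
    have hAv : ∀ i, i ≤ t → (ctFA s t i).val ≤ 2 * t - 1 := by
      intro i hi
      rw [ctFA_val s t ht hts i hi]
      split_ifs <;> omega
    have hBv : ∀ i, i ≤ t → (ctFB s t i).val ≤ 2 * t - 1 := by
      intro i hi
      rw [ctFB_val s t ht hts i hi]
      split_ifs <;> omega
    have hAinj : ∀ i i', i ≤ t → i' ≤ t → ctFA s t i = ctFA s t i' → i = i' := by
      intro i i' hi hi' he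
      have := congrArg Fin.val he
      rw [ctFA_val s t ht hts i hi, ctFA_val s t ht hts i' hi'] at this
      split_ifs at this <;> omega
    have hBinj : ∀ i i', i ≤ t → i' ≤ t → ctFB s t i = ctFB s t i' → i = i' := by
      intro i i' hi hi' he
      have := congrArg Fin.val he
      rw [ctFB_val s t ht hts i hi, ctFB_val s t ht hts i' hi'] at this
      split_ifs at this <;> omega
    rcases le_or_gt (∑ i ∈ Finset.Ico 1 t, p (ctFB s t i) * 2 ^ i)
        (∑ i ∈ Finset.Ico 1 t, p (ctFA s t i) * 2 ^ i) with hBA | hBA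
    · have harm := arith_arm s t (p ⟨0, by omega⟩)
        (∑ i ∈ Finset.Ico 1 t, p (ctFA s t i) * 2 ^ i)
        (∑ i ∈ Finset.Ico 1 t, p (ctFB s t i) * 2 ^ i)
        (∑ i ∈ Finset.range (s + 1 - t), p (ctFT s t i) * 2 ^ i)
        ht hts hSAle hSBle hBA hSCle hv
      refine assemble s t ht hts p (ctFA s t) (ctFB s t)
        (by rw [hA0]) (by rw [ctFA_val s t ht hts t le_rfl]; split_ifs <;> omega)
        (by rw [hB0]) (by rw [ctFB_val s t ht hts t le_rfl]; split_ifs <;> omega)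
        (fun i hi => ctFA_adj s t ht hts i hi) (fun i hi => ctFB_adj s t ht hts i hi)
        hAinj hBinj hAv hBv ?_ hple _ _ _ rfl rfl rfl hSCle ?_ ?_
      · intro i h1 h2 i' hi' he
        have := congrArg Fin.val he
        rw [ctFB_val s t ht hts i (by omega), ctFA_val s t ht hts i' hi'] at this
        split_ifs at this <;> omega
      · rw [hA0]
        exact harm
      · rw [hA0]
        exact hmaster
    · have harm := arith_arm s t (p ⟨0, by omega⟩)
        (∑ i ∈ Finset.Ico 1 t, p (ctFB s t i) * 2 ^ i)
        (∑ i ∈ Finset.Ico 1 t, p (ctFA s t i) * 2 ^ i)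
        (∑ i ∈ Finset.range (s + 1 - t), p (ctFT s t i) * 2 ^ i)
        ht hts hSBle hSAle (le_of_lt hBA) hSCle (by linarith [hv])
      refine assemble s t ht hts p (ctFB s t) (ctFA s t)
        (by rw [hB0]) (by rw [ctFB_val s t ht hts t le_rfl]; split_ifs <;> omega)
        (by rw [hA0]) (by rw [ctFA_val s t ht hts t le_rfl]; split_ifs <;> omega)
        (fun i hi => ctFB_adj s t ht hts i hi) (fun i hi => ctFA_adj s t ht hts i hi)
        hBinj hAinj hBv hAv ?_ hple _ _ _ rfl rfl rfl hSCle ?_ ?_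
      · intro i h1 h2 i' hi' he
        have := congrArg Fin.val he
        rw [ctFA_val s t ht hts i (by omega), ctFB_val s t ht hts i' hi'] at this
        split_ifs at this <;> omega
      · rw [hB0]
        exact harm
      · rw [hB0]
        have : 2 ^ (s + 1) ≤ p (⟨0, by omega⟩ : Fin (s + t + 1))
            + (∑ i ∈ Finset.Ico 1 t, p (ctFB s t i) * 2 ^ i)
            + (∑ i ∈ Finset.Ico 1 t, p (ctFA s t i) * 2 ^ i)
            + 2 ^ t * (∑ i ∈ Finset.range (s + 1 - t), p (ctFT s t i) * 2 ^ i) := by omega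
        exact this

end Key


/-- For the cycle-with-tail graph, every `r`-unsolvable configuration `p`
satisfies `∑ v, w(v) p(v) ≤ ∑ v, w(v)`. -/
theorem cycleTail_weight_bound (s t : ℕ) (ht : 2 ≤ t) (hts : t ≤ s)
    (p : Fin (s + t + 1) → ℕ)
    (hp : ¬ PebblingSolvable (cycleTailGraph s t) ⟨s + t, Nat.lt_succ_self _⟩ p) :
    ∑ v : Fin (s + t + 1), cycleTailWeight s t v * (p v : ℝ) ≤
      ∑ v : Fin (s + t + 1), cycleTailWeight s t v := by
  by_contra hcon
  push_neg at hcon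
  exact hp (ct_key s t ht hts (∑ v, p v) p rfl hcon)
end

section
/- Let G be a finite connected simple graph with root r ∈ V(G), and let w : V(G) → ℝ≥0 be a weight function such that every r-unsolvable configuration p on G satisfies ∑_v w(v)p(v) ≤ ∑_v w(v). Form G' from G by adding a new vertex u adjacent to exactly one vertex u⁺ of G with u⁺ ≠ r, and define w' on V(G') by w'(v) = w(v) for v ∈ V(G) and w'(u) any value with 0 ≤ w'(u) ≤ (1/2)·w(u⁺). Then every r-unsolvable configuration p' on G' satisfies ∑_{v∈V(G')} w'(v)p'(v) ≤ ∑_{v∈V(G')} w'(v). -/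
/-- The graph obtained from `G` by adding one new vertex (named `none`) adjacent to
exactly the vertex `t` of `G`. -/
def addLeaf {V : Type*} (G : SimpleGraph V) (t : V) : SimpleGraph (Option V) :=
  SimpleGraph.fromRel fun a b =>
    match a, b with
    | some a, some b => G.Adj a b
    | none, some b => b = t
    | some a, none => a = t
    | none, none => False

/-- Extend a configuration on `V` to `Option V` with value `m` at `none`. -/
def liftConf {V : Type*} (p : V → ℕ) (m : ℕ) : Option V → ℕ :=
  fun o => o.elim m p

lemma addLeaf_adj_some {V : Type*} (G : SimpleGraph V) (t : V) {a b : V}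
    (h : G.Adj a b) : (addLeaf G t).Adj (some a) (some b) := by
  rw [addLeaf, SimpleGraph.fromRel_adj]
  exact ⟨by simpa using h.ne, Or.inl h⟩

lemma addLeaf_adj_none {V : Type*} (G : SimpleGraph V) (t : V) :
    (addLeaf G t).Adj none (some t) := by
  rw [addLeaf, SimpleGraph.fromRel_adj]
  exact ⟨by simp, Or.inl rfl⟩

lemma lift_move {V : Type*} {G : SimpleGraph V} (t : V) {p q : V → ℕ} (m : ℕ)
    (h : PebblingMove G p q) :
    PebblingMove (addLeaf G t) (liftConf p m) (liftConf q m) := by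
  obtain ⟨u, v, huv, h2, hqu, hqv, hrest⟩ := h
  refine ⟨some u, some v, addLeaf_adj_some G t huv, h2, hqu, hqv, ?_⟩
  rintro (_ | x) hx1 hx2
  · rfl
  · exact hrest x (fun h => hx1 (by rw [h])) (fun h => hx2 (by rw [h]))

lemma lift_rtg {V : Type*} {G : SimpleGraph V} (t : V) {p q : V → ℕ} (m : ℕ)
    (h : Relation.ReflTransGen (PebblingMove G) p q) :
    Relation.ReflTransGen (PebblingMove (addLeaf G t)) (liftConf p m) (liftConf q m) := by
  induction h with
  | refl => exact .refl
  | tail _ hmove ih => exact ih.tail (lift_move t m hmove)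

lemma drain {V : Type*} [DecidableEq V] (G : SimpleGraph V) (t : V) (p' : Option V → ℕ) :
    ∀ k : ℕ, 2 * k ≤ p' none →
    Relation.ReflTransGen (PebblingMove (addLeaf G t)) p'
      (liftConf (fun v => p' (some v) + if v = t then k else 0) (p' none - 2 * k)) := by
  intro k
  induction k with
  | zero =>
    intro _
    have : liftConf (fun v => p' (some v) + if v = t then 0 else 0) (p' none - 2 * 0) = p' := by
      funext o; cases o <;> simp [liftConf]
    rw [this]
  | succ k ih =>
    intro hk
    have hk' : 2 * k ≤ p' none := by omega
    refine (ih hk').tail ?_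
    refine ⟨none, some t, addLeaf_adj_none G t, ?_, ?_, ?_, ?_⟩
    · simp only [liftConf, Option.elim]; omega
    · simp only [liftConf, Option.elim]; omega
    · simp [liftConf]; omega
    · rintro (_ | x) hx1 hx2
      · exact absurd rfl hx1
      · have hxt : x ≠ t := fun h => hx2 (by rw [h])
        simp [liftConf, hxt]

/-- If `w` is a valid weight function for `(G, r)`, `G'` is obtained from `G` by adding a
new vertex `u` adjacent to exactly one vertex `u⁺ ≠ r` of `G`, and `w'` extends `w` with
`0 ≤ w'(u) ≤ w(u⁺)/2`, then `w'` is valid for `(G', r)`: every `r`-unsolvable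
configuration `p'` on `G'` satisfies `∑ v, w'(v) p'(v) ≤ ∑ v, w'(v)`. -/
theorem addLeaf_weight_bound {V : Type*} [Fintype V] (G : SimpleGraph V)
    (hG : G.Connected) (r : V) (w : V → ℝ) (hw : ∀ v, 0 ≤ w v)
    (hvalid : ∀ p : V → ℕ, ¬ PebblingSolvable G r p →
      ∑ v : V, w v * (p v : ℝ) ≤ ∑ v : V, w v)
    (t : V) (ht : t ≠ r) (wu : ℝ) (hwu0 : 0 ≤ wu) (hwu : wu ≤ w t / 2)
    (w' : Option V → ℝ) (hw'some : ∀ v : V, w' (some v) = w v) (hw'none : w' none = wu)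
    (p' : Option V → ℕ) (hp' : ¬ PebblingSolvable (addLeaf G t) (some r) p') :
    ∑ v : Option V, w' v * (p' v : ℝ) ≤ ∑ v : Option V, w' v := by
  classical
  set k := p' none / 2 with hk
  set p : V → ℕ := fun v => p' (some v) + if v = t then k else 0 with hp
  have h2k : 2 * k ≤ p' none := Nat.mul_div_le _ _
  have hunsolv : ¬ PebblingSolvable G r p := by
    rintro ⟨q, hq, hqr⟩
    apply hp'
    refine ⟨liftConf q (p' none - 2 * k), ?_, hqr⟩
    exact (drain G t p' k h2k).trans (lift_rtg t _ hq)
  have h1 := hvalid p hunsolv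
  have hsum : ∑ v : V, w v * (p v : ℝ)
      = (∑ v : V, w v * (p' (some v) : ℝ)) + w t * k := by
    have step : ∀ v ∈ Finset.univ, w v * (p v : ℝ)
        = w v * (p' (some v) : ℝ) + (if v = t then w t * (k:ℝ) else 0) := by
      intro v _
      by_cases hvt : v = t
      · subst hvt; simp only [hp, if_pos rfl]; push_cast; ring
      · simp [hp, hvt]
    rw [Finset.sum_congr rfl step, Finset.sum_add_distrib]
    simp
  have hmod : (p' none : ℝ) ≤ 2 * k + 1 := by
    have hle : p' none ≤ 2 * k + 1 := by omega
    exact_mod_cast hle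
  rw [Fintype.sum_option, Fintype.sum_option, hw'none]
  simp only [hw'some]
  have hk0 : (0:ℝ) ≤ (k:ℝ) := Nat.cast_nonneg _
  nlinarith [hsum ▸ h1, hw t]
end

section
/- Let G be a finite connected simple Class 0 graph and let u, v ∈ V(G). If u has degree 2 and the distance between u and v is at least 3, then v has degree at least 4. -/
section PebAux
variable {V : Type*} [DecidableEq V]

lemma sum_shift_int {p q : V → ℕ} {s t : V}
    (hst : s ≠ t) (h2 : 2 ≤ p s) (hqs : q s = p s - 2) (hqt : q t = p t + 1)
    (A : Finset V) (hqo : ∀ x ∈ A, x ≠ s → x ≠ t → q x = p x) :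
    ∑ x ∈ A, q x + (if s ∈ A then 2 else 0) = ∑ x ∈ A, p x + (if t ∈ A then 1 else 0) := by
  have h1 : ∀ x ∈ A, q x + (if x = s then 2 else 0) = p x + (if x = t then 1 else 0) := by
    intro x hx
    by_cases hxs : x = s
    · subst hxs; simp [hst, hqs]; omega
    · by_cases hxt : x = t
      · subst hxt; simp [hxs, hqt]
      · simp [hxs, hxt, hqo x hx hxs hxt]
  have h2' := Finset.sum_congr rfl h1
  rwa [Finset.sum_add_distrib, Finset.sum_add_distrib,
    Finset.sum_ite_eq' A s (fun _ => 2), Finset.sum_ite_eq' A t (fun _ => 1)] at h2'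

lemma sum_shift_exp {p q : V → ℕ} {s : V}
    (h2 : 2 ≤ p s) (hqs : q s = p s - 2)
    (A : Finset V) (hqo : ∀ x ∈ A, x ≠ s → q x = p x) :
    ∑ x ∈ A, q x + (if s ∈ A then 2 else 0) = ∑ x ∈ A, p x := by
  have h1 : ∀ x ∈ A, q x + (if x = s then 2 else 0) = p x := by
    intro x hx
    by_cases hxs : x = s
    · subst hxs; simp [hqs]; omega
    · simp [hxs, hqo x hx hxs]
  have h2' := Finset.sum_congr rfl h1
  rwa [Finset.sum_add_distrib, Finset.sum_ite_eq' A s (fun _ => 2)] at h2'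

lemma sea_shift {p q : V → ℕ} {s t : V}
    (hst : s ≠ t) (h2 : 2 ≤ p s) (hqs : q s = p s - 2) (hqt : q t = p t + 1)
    (A : Finset V) (hqo : ∀ x ∈ A, x ≠ s → x ≠ t → q x = p x) :
    ∑ x ∈ A, (q x - 1) + (if s ∈ A then 1 else 0)
      ≤ ∑ x ∈ A, (p x - 1) + (if t ∈ A then 1 else 0) := by
  have h1 : ∀ x ∈ A, (q x - 1) + (if x = s then 1 else 0)
      ≤ (p x - 1) + (if x = t then 1 else 0) := by
    intro x hx
    by_cases hxs : x = s
    · subst hxs; simp [hst, hqs]; omega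
    · by_cases hxt : x = t
      · subst hxt; simp [hxs, hqt]; omega
      · simp [hxs, hxt, hqo x hx hxs hxt]
  have h2' := Finset.sum_le_sum h1
  rwa [Finset.sum_add_distrib, Finset.sum_add_distrib,
    Finset.sum_ite_eq' A s (fun _ => 1), Finset.sum_ite_eq' A t (fun _ => 1)] at h2'

/-- Export sequences: `ExpSeq G B p k` means that starting from configuration `p`,
using pebbling moves originating from vertices of `B`, one can make `k` moves whose
target lies outside `B` (exports). -/
inductive ExpSeq (G : SimpleGraph V) (B : Finset V) : (V → ℕ) → ℕ → Prop
  | zero (p) : ExpSeq G B p 0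
  | internal {p q : V → ℕ} {k : ℕ} (s t : V) (hadj : G.Adj s t) (hs : s ∈ B) (ht : t ∈ B)
      (h2 : 2 ≤ p s) (hqs : q s = p s - 2) (hqt : q t = p t + 1)
      (hqo : ∀ x ∈ B, x ≠ s → x ≠ t → q x = p x) (tail : ExpSeq G B q k) : ExpSeq G B p k
  | exp {p q : V → ℕ} {k : ℕ} (s t : V) (hadj : G.Adj s t) (hs : s ∈ B) (ht : t ∉ B)
      (h2 : 2 ≤ p s) (hqs : q s = p s - 2)
      (hqo : ∀ x ∈ B, x ≠ s → q x = p x) (tail : ExpSeq G B q k) : ExpSeq G B p (k + 1)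

variable {G : SimpleGraph V} {B : Finset V}

lemma ExpSeq.bound {p : V → ℕ} {k : ℕ} (h : ExpSeq G B p k) : 2 * k ≤ ∑ x ∈ B, p x := by
  induction h with
  | zero p => omega
  | internal s t hadj hs ht h2 hqs hqt hqo tail ih =>
      have hsum := sum_shift_int (G.ne_of_adj hadj) h2 hqs hqt B (fun x hx => hqo x hx)
      rw [if_pos hs, if_pos ht] at hsum
      omega
  | exp s t hadj hs ht h2 hqs hqo tail ih =>
      have hsum := sum_shift_exp h2 hqs B (fun x hx => hqo x hx)
      rw [if_pos hs] at hsum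
      omega

lemma ExpSeq.mono {p : V → ℕ} {k : ℕ} (h : ExpSeq G B p k) :
    ∀ r : V → ℕ, (∀ x ∈ B, p x ≤ r x) → ExpSeq G B r k := by
  induction h with
  | zero p => exact fun r _ => .zero r
  | @internal p q k s t hadj hs ht h2 hqs hqt hqo tail ih =>
      intro r hle
      have hst : s ≠ t := G.ne_of_adj hadj
      set r' : V → ℕ := fun x => if x = s then r s - 2 else if x = t then r t + 1 else r x
        with hr'
      have h1 : r' s = r s - 2 := by simp [hr']
      have h2' : r' t = r t + 1 := by simp [hr', hst.symm]
      have h3 : ∀ x ∈ B, x ≠ s → x ≠ t → r' x = r x := by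
        intro x _ hxs hxt; simp [hr', hxs, hxt]
      refine ExpSeq.internal s t hadj hs ht (h2.trans (hle s hs)) h1 h2' h3 (ih r' ?_)
      intro x hx
      by_cases hxs : x = s
      · subst hxs; rw [hqs, h1]; exact Nat.sub_le_sub_right (hle x hx) 2
      · by_cases hxt : x = t
        · subst hxt; rw [hqt, h2']; exact Nat.add_le_add_right (hle x hx) 1
        · rw [hqo x hx hxs hxt, h3 x hx hxs hxt]; exact hle x hx
  | @exp p q k s t hadj hs ht h2 hqs hqo tail ih =>
      intro r hle
      set r' : V → ℕ := fun x => if x = s then r s - 2 else r x with hr'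
      have h1 : r' s = r s - 2 := by simp [hr']
      have h3 : ∀ x ∈ B, x ≠ s → r' x = r x := by intro x _ hxs; simp [hr', hxs]
      refine ExpSeq.exp s t hadj hs ht (h2.trans (hle s hs)) h1 h3 (ih r' ?_)
      intro x hx
      by_cases hxs : x = s
      · subst hxs; rw [hqs, h1]; exact Nat.sub_le_sub_right (hle x hx) 2
      · rw [hqo x hx hxs, h3 x hx hxs]; exact hle x hx

/-- Maximum number of pebbles exportable from `B`. -/
noncomputable def Ecl (G : SimpleGraph V) (B : Finset V) (p : V → ℕ) : ℕ :=
  sSup {k | ExpSeq G B p k}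

lemma ecl_bdd (p : V → ℕ) : BddAbove {k | ExpSeq G B p k} := by
  refine ⟨∑ x ∈ B, p x, fun k hk => ?_⟩
  have := ExpSeq.bound hk
  omega

lemma le_ecl {p : V → ℕ} {k : ℕ} (h : ExpSeq G B p k) : k ≤ Ecl G B p :=
  le_csSup (ecl_bdd p) h

lemma ecl_spec (p : V → ℕ) : ExpSeq G B p (Ecl G B p) :=
  Nat.sSup_mem ⟨0, .zero p⟩ (ecl_bdd p)

omit [DecidableEq V] in
lemma ecl_le {p : V → ℕ} {m : ℕ} (h : ∀ k, ExpSeq G B p k → k ≤ m) : Ecl G B p ≤ m :=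
  csSup_le ⟨0, .zero p⟩ h

lemma ecl_mono {p r : V → ℕ} (hle : ∀ x ∈ B, p x ≤ r x) : Ecl G B p ≤ Ecl G B r :=
  le_ecl ((ecl_spec p).mono r hle)

lemma ecl_ext {p r : V → ℕ} (hle : ∀ x ∈ B, p x = r x) : Ecl G B p = Ecl G B r :=
  le_antisymm (ecl_mono fun x hx => (hle x hx).le)
    (ecl_mono fun x hx => (hle x hx).symm.le)

lemma ecl_step_int {p q : V → ℕ} {s t : V} (hadj : G.Adj s t) (hs : s ∈ B) (ht : t ∈ B)
    (h2 : 2 ≤ p s) (hqs : q s = p s - 2) (hqt : q t = p t + 1)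
    (hqo : ∀ x ∈ B, x ≠ s → x ≠ t → q x = p x) :
    Ecl G B q ≤ Ecl G B p :=
  le_ecl (ExpSeq.internal s t hadj hs ht h2 hqs hqt hqo (ecl_spec q))

lemma ecl_step_exp {p q : V → ℕ} {s t : V} (hadj : G.Adj s t) (hs : s ∈ B) (ht : t ∉ B)
    (h2 : 2 ≤ p s) (hqs : q s = p s - 2)
    (hqo : ∀ x ∈ B, x ≠ s → q x = p x) :
    Ecl G B q + 1 ≤ Ecl G B p :=
  le_ecl (ExpSeq.exp s t hadj hs ht h2 hqs hqo (ecl_spec q))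

/-- Key lemma: adding one pebble at a single vertex increases the export capacity
by at most one. -/
lemma ExpSeq.addOne {q : V → ℕ} {k : ℕ} (h : ExpSeq G B q k) :
    ∀ (p : V → ℕ) (t : V), (∀ x ∈ B, q x ≤ if x = t then p x + 1 else p x) →
      k ≤ Ecl G B p + 1 := by
  induction h with
  | zero p => intro _ _ _; omega
  | @internal q q' k s t' hadj hs ht' h2 hqs hqt hqo tail ih =>
      intro p t hle
      have hst' : s ≠ t' := G.ne_of_adj hadj
      by_cases hps : 2 ≤ p s
      · set p₂ : V → ℕ := fun x => if x = t' then p t' + 1 else if x = s then p s - 2 else p x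
          with hp₂
        have e1 : p₂ s = p s - 2 := by simp [hp₂, hst']
        have e2 : p₂ t' = p t' + 1 := by simp [hp₂]
        have e3 : ∀ x ∈ B, x ≠ s → x ≠ t' → p₂ x = p x := by
          intro x _ hxs hxt; simp [hp₂, hxs, hxt]
        have hstep : Ecl G B p₂ ≤ Ecl G B p :=
          ecl_step_int hadj hs ht' hps e1 e2 e3
        have hmain : k ≤ Ecl G B p₂ + 1 := by
          refine ih p₂ t ?_
          intro x hx
          have hx1 := hle x hx
          by_cases hxt' : x = t'
          · subst hxt'; rw [hqt, e2]
            by_cases hxt : x = t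
            · rw [if_pos hxt] at hx1 ⊢; omega
            · rw [if_neg hxt] at hx1 ⊢; omega
          · by_cases hxs : x = s
            · subst hxs; rw [hqs, e1]
              by_cases hxt : x = t
              · rw [if_pos hxt] at hx1 ⊢; omega
              · rw [if_neg hxt] at hx1 ⊢; omega
            · rw [hqo x hx hxs hxt', e3 x hx hxs hxt']
              exact hx1
        omega
      · -- the move at s needs the extra pebble: s = t, q s = 2, p s = 1
        have hx1 := hle s hs
        have hst : s = t := by
          by_contra hne
          rw [if_neg hne] at hx1; omega
        refine ih p t' ?_
        intro x hx
        have hx2 := hle x hx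
        by_cases hxt' : x = t'
        · subst hxt'; rw [hqt, if_pos rfl]
          have hxt : x ≠ t := fun hh => hst' (hst.trans hh.symm)
          rw [if_neg hxt] at hx2; omega
        · by_cases hxs : x = s
          · subst hxs; rw [hqs, if_neg hxt']
            rw [if_pos hst] at hx1; omega
          · rw [hqo x hx hxs hxt', if_neg hxt']
            have hxt : x ≠ t := fun hh => hxs (hh.trans hst.symm)
            rw [if_neg hxt] at hx2; omega
  | @exp q q' k s t'' hadj hs ht'' h2 hqs hqo tail ih =>
      intro p t hle
      by_cases hps : 2 ≤ p s
      · set p₂ : V → ℕ := fun x => if x = s then p s - 2 else p x with hp₂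
        have e1 : p₂ s = p s - 2 := by simp [hp₂]
        have e3 : ∀ x ∈ B, x ≠ s → p₂ x = p x := by intro x _ hxs; simp [hp₂, hxs]
        have hstep : Ecl G B p₂ + 1 ≤ Ecl G B p :=
          ecl_step_exp hadj hs ht'' hps e1 e3
        have hmain : k ≤ Ecl G B p₂ + 1 := by
          refine ih p₂ t ?_
          intro x hx
          have hx1 := hle x hx
          by_cases hxs : x = s
          · subst hxs; rw [hqs, e1]
            by_cases hxt : x = t
            · rw [if_pos hxt] at hx1 ⊢; omega
            · rw [if_neg hxt] at hx1 ⊢; omega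
          · rw [hqo x hx hxs, e3 x hx hxs]; exact hx1
        omega
      · have hx1 := hle s hs
        have hst : s = t := by
          by_contra hne
          rw [if_neg hne] at hx1; omega
        have : ExpSeq G B p k := by
          refine tail.mono p ?_
          intro x hx
          by_cases hxs : x = s
          · subst hxs; rw [hqs]; rw [if_pos hst] at hx1; omega
          · rw [hqo x hx hxs]
            have hx2 := hle x hx
            have hxt : x ≠ t := fun hh => hxs (hh.trans hst.symm)
            rwa [if_neg hxt] at hx2
        have := le_ecl this
        omega

/-- Global increase lemma: if `q` agrees with `p` on `B` except one extra pebble at `t`,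
then `Ecl q ≤ Ecl p + 1`. -/
lemma ecl_add_one {p q : V → ℕ} {t : V}
    (hle : ∀ x ∈ B, q x ≤ if x = t then p x + 1 else p x) :
    Ecl G B q ≤ Ecl G B p + 1 :=
  (ecl_spec q).addOne p t hle

/-- Invariant bounding exports from the closed neighborhood of `v`. -/
lemma ExpSeq.psi {v : V} {Nv : Finset V} (hvN : v ∉ Nv) (hN : ∀ x, G.Adj v x → x ∈ Nv)
    {p : V → ℕ} {k : ℕ} (h : ExpSeq G (insert v Nv) p k) :
    4 * k ≤ p v + 2 * ∑ x ∈ Nv, p x := by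
  induction h with
  | zero p => omega
  | @internal p q k s t hadj hs ht h2 hqs hqt hqo tail ih =>
      have hst : s ≠ t := G.ne_of_adj hadj
      have hSs := sum_shift_int hst h2 hqs hqt Nv
        (fun x hx hxs hxt => hqo x (Finset.mem_insert_of_mem hx) hxs hxt)
      rcases Finset.mem_insert.1 hs with rfl | hsN
      · -- s = v, so t ∈ Nv
        have htN : t ∈ Nv := by
          rcases Finset.mem_insert.1 ht with rfl | h'
          · exact absurd rfl hst
          · exact h'
        rw [if_neg hvN, if_pos htN] at hSs
        have hqv : q s = p s - 2 := hqs
        omega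
      · have hsv : s ≠ v := fun h' => hvN (h' ▸ hsN)
        rcases Finset.mem_insert.1 ht with rfl | htN
        · -- t = v
          rw [if_pos hsN, if_neg hvN] at hSs
          have hqv : q t = p t + 1 := hqt
          omega
        · -- s, t ∈ Nv
          have htv : t ≠ v := fun h' => hvN (h' ▸ htN)
          rw [if_pos hsN, if_pos htN] at hSs
          have hqv : q v = p v := hqo v (Finset.mem_insert_self v Nv)
            (fun h' => hsv h'.symm) (fun h' => htv h'.symm)
          omega
  | @exp p q k s t hadj hs ht h2 hqs hqo tail ih =>
      have hSs := sum_shift_exp h2 hqs Nv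
        (fun x hx hxs => hqo x (Finset.mem_insert_of_mem hx) hxs)
      have hsN : s ∈ Nv := by
        rcases Finset.mem_insert.1 hs with rfl | h'
        · exact absurd (Finset.mem_insert_of_mem (hN t hadj)) ht
        · exact h'
      have hsv : s ≠ v := fun h' => hvN (h' ▸ hsN)
      rw [if_pos hsN] at hSs
      have hqv : q v = p v := hqo v (Finset.mem_insert_self v Nv) (fun h' => hsv h'.symm)
      omega

/-- The potential function is non-increasing under a pebbling move. -/
lemma phi_step [Fintype V] {G : SimpleGraph V} {u a b : V} {B Z : Finset V}
    (hZ : ∀ x, x ∈ Z ↔ (x = u ∨ x = a ∨ x = b ∨ x ∈ B))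
    (hab : a ≠ b) (hua : u ≠ a) (hub : u ≠ b)
    (huB : u ∉ B) (haB : a ∉ B) (hbB : b ∉ B)
    (hNu : ∀ x, G.Adj u x → x = a ∨ x = b)
    {p q : V → ℕ} (hm : PebblingMove G p q) :
    4 * q u + 2 * q a + 2 * q b + 2 * Ecl G B q + 2 * ∑ x ∈ Finset.univ \ Z, (q x - 1)
      ≤ 4 * p u + 2 * p a + 2 * p b + 2 * Ecl G B p
        + 2 * ∑ x ∈ Finset.univ \ Z, (p x - 1) := by
  obtain ⟨s, t, hadj, h2, hqs, hqt, hqo⟩ := hm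
  have hst : s ≠ t := G.ne_of_adj hadj
  have hmemA : ∀ x : V, x ∈ Finset.univ \ Z ↔ x ∉ Z := by
    intro x; simp [Finset.mem_sdiff]
  have hclass : ∀ x : V, x = u ∨ x = a ∨ x = b ∨ x ∈ B ∨ x ∉ Z := by
    intro x
    by_cases h : x ∈ Z
    · have := (hZ x).1 h; tauto
    · tauto
  have hSea := sea_shift hst h2 hqs hqt (Finset.univ \ Z) (fun x _ => hqo x)
  have hEeq : s ∉ B → t ∉ B → Ecl G B q = Ecl G B p := fun hsB htB =>
    ecl_ext (fun x hx => hqo x (fun h => hsB (h ▸ hx)) (fun h => htB (h ▸ hx)))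
  have hEint : s ∈ B → t ∈ B → Ecl G B q ≤ Ecl G B p := fun hsB htB =>
    ecl_step_int hadj hsB htB h2 hqs hqt (fun x _ => hqo x)
  have hEexp : s ∈ B → t ∉ B → Ecl G B q + 1 ≤ Ecl G B p := fun hsB htB =>
    ecl_step_exp hadj hsB htB h2 hqs (fun x hx hxs => hqo x hxs (fun h => htB (h ▸ hx)))
  have hEadd : s ∉ B → Ecl G B q ≤ Ecl G B p + 1 := fun hsB => by
    refine ecl_add_one (t := t) (fun x hx => ?_)
    by_cases hxt : x = t
    · subst hxt; rw [if_pos rfl, hqt]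
    · rw [if_neg hxt, hqo x (fun h => hsB (h ▸ hx)) hxt]
  -- membership conversions
  have huZ : u ∈ Z := (hZ u).2 (Or.inl rfl)
  have haZ : a ∈ Z := (hZ a).2 (Or.inr (Or.inl rfl))
  have hbZ : b ∈ Z := (hZ b).2 (Or.inr (Or.inr (Or.inl rfl)))
  have hBZ : ∀ x, x ∈ B → x ∈ Z := fun x hx => (hZ x).2 (Or.inr (Or.inr (Or.inr hx)))
  rcases hclass t with rfl | rfl | rfl | htB | htZ
  · -- t = u
    rcases hNu s (G.adj_symm hadj) with rfl | rfl
    · -- s = a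
      have h1 : q t = p t + 1 := hqt
      have h2a : q s = p s - 2 := hqs
      have h3 : q b = p b := hqo b (Ne.symm hab) (Ne.symm hub)
      have hE : Ecl G B q = Ecl G B p := hEeq haB huB
      rw [if_neg (fun h => ((hmemA s).1 h) haZ), if_neg (fun h => ((hmemA t).1 h) huZ)]
        at hSea
      omega
    · -- s = b
      have h1 : q t = p t + 1 := hqt
      have h2a : q s = p s - 2 := hqs
      have h3 : q a = p a := hqo a hab (Ne.symm hua)
      have hE : Ecl G B q = Ecl G B p := hEeq hbB huB
      rw [if_neg (fun h => ((hmemA s).1 h) hbZ), if_neg (fun h => ((hmemA t).1 h) huZ)]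
        at hSea
      omega
  · -- t = a
    have h1 : q t = p t + 1 := hqt
    rw [if_neg (fun h => ((hmemA t).1 h) haZ)] at hSea
    rcases hclass s with rfl | rfl | rfl | hsB | hsZ
    · -- s = u
      have h2a : q s = p s - 2 := hqs
      have h3 : q b = p b := hqo b (Ne.symm hub) (Ne.symm hab)
      have hE : Ecl G B q = Ecl G B p := hEeq huB haB
      rw [if_neg (fun h => ((hmemA s).1 h) huZ)] at hSea
      omega
    · exact absurd rfl hst
    · -- s = b
      have h2a : q s = p s - 2 := hqs
      have h3 : q u = p u := hqo u hub hua
      have hE : Ecl G B q = Ecl G B p := hEeq hbB haB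
      rw [if_neg (fun h => ((hmemA s).1 h) hbZ)] at hSea
      omega
    · -- s ∈ B
      have h3 : q u = p u := hqo u (fun h => huB (h ▸ hsB)) hua
      have h4 : q b = p b := hqo b (fun h => hbB (h ▸ hsB)) (Ne.symm hab)
      have hE := hEexp hsB haB
      rw [if_neg (fun h => ((hmemA s).1 h) (hBZ s hsB))] at hSea
      omega
    · -- s ∉ Z
      have h3 : q u = p u := hqo u (fun h => hsZ (h ▸ huZ)) hua
      have h4 : q b = p b := hqo b (fun h => hsZ (h ▸ hbZ)) (Ne.symm hab)
      have hE : Ecl G B q = Ecl G B p := hEeq (fun h => hsZ (hBZ s h)) haB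
      rw [if_pos ((hmemA s).2 hsZ)] at hSea
      omega
  · -- t = b
    have h1 : q t = p t + 1 := hqt
    rw [if_neg (fun h => ((hmemA t).1 h) hbZ)] at hSea
    rcases hclass s with rfl | rfl | rfl | hsB | hsZ
    · -- s = u
      have h2a : q s = p s - 2 := hqs
      have h3 : q a = p a := hqo a (Ne.symm hua) hab
      have hE : Ecl G B q = Ecl G B p := hEeq huB hbB
      rw [if_neg (fun h => ((hmemA s).1 h) huZ)] at hSea
      omega
    · -- s = a
      have h2a : q s = p s - 2 := hqs
      have h3 : q u = p u := hqo u hua hub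
      have hE : Ecl G B q = Ecl G B p := hEeq haB hbB
      rw [if_neg (fun h => ((hmemA s).1 h) haZ)] at hSea
      omega
    · exact absurd rfl hst
    · -- s ∈ B
      have h3 : q u = p u := hqo u (fun h => huB (h ▸ hsB)) hub
      have h4 : q a = p a := hqo a (fun h => haB (h ▸ hsB)) hab
      have hE := hEexp hsB hbB
      rw [if_neg (fun h => ((hmemA s).1 h) (hBZ s hsB))] at hSea
      omega
    · -- s ∉ Z
      have h3 : q u = p u := hqo u (fun h => hsZ (h ▸ huZ)) hub
      have h4 : q a = p a := hqo a (fun h => hsZ (h ▸ haZ)) hab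
      have hE : Ecl G B q = Ecl G B p := hEeq (fun h => hsZ (hBZ s h)) hbB
      rw [if_pos ((hmemA s).2 hsZ)] at hSea
      omega
  · -- t ∈ B
    rw [if_neg (fun h => ((hmemA t).1 h) (hBZ t htB))] at hSea
    have htu : t ≠ u := fun h => huB (h ▸ htB)
    have hta : t ≠ a := fun h => haB (h ▸ htB)
    have htb : t ≠ b := fun h => hbB (h ▸ htB)
    rcases hclass s with rfl | rfl | rfl | hsB | hsZ
    · -- s = u : impossible
      rcases hNu t hadj with rfl | rfl
      · exact absurd htB haB
      · exact absurd htB hbB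
    · -- s = a
      have h3 : q u = p u := hqo u hua (Ne.symm htu)
      have h4 : q b = p b := hqo b hab.symm (Ne.symm htb)
      have h2a : q s = p s - 2 := hqs
      have hE := hEadd haB
      rw [if_neg (fun h => ((hmemA s).1 h) haZ)] at hSea
      omega
    · -- s = b
      have h3 : q u = p u := hqo u hub (Ne.symm htu)
      have h4 : q a = p a := hqo a hab (Ne.symm hta)
      have h2a : q s = p s - 2 := hqs
      have hE := hEadd hbB
      rw [if_neg (fun h => ((hmemA s).1 h) hbZ)] at hSea
      omega
    · -- s ∈ B
      have h3 : q u = p u := hqo u (fun h => huB (h ▸ hsB)) (Ne.symm htu)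
      have h4 : q a = p a := hqo a (fun h => haB (h ▸ hsB)) (Ne.symm hta)
      have h5 : q b = p b := hqo b (fun h => hbB (h ▸ hsB)) (Ne.symm htb)
      have hE := hEint hsB htB
      rw [if_neg (fun h => ((hmemA s).1 h) (hBZ s hsB))] at hSea
      omega
    · -- s ∉ Z
      have h3 : q u = p u := hqo u (fun h => hsZ (h ▸ huZ)) (Ne.symm htu)
      have h4 : q a = p a := hqo a (fun h => hsZ (h ▸ haZ)) (Ne.symm hta)
      have h5 : q b = p b := hqo b (fun h => hsZ (h ▸ hbZ)) (Ne.symm htb)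
      have hE := hEadd (fun h => hsZ (hBZ s h))
      rw [if_pos ((hmemA s).2 hsZ)] at hSea
      omega
  · -- t ∉ Z
    rw [if_pos ((hmemA t).2 htZ)] at hSea
    have htu : t ≠ u := fun h => htZ (h ▸ huZ)
    have hta : t ≠ a := fun h => htZ (h ▸ haZ)
    have htb : t ≠ b := fun h => htZ (h ▸ hbZ)
    have htB : t ∉ B := fun h => htZ (hBZ t h)
    rcases hclass s with rfl | rfl | rfl | hsB | hsZ
    · -- s = u : impossible
      rcases hNu t hadj with rfl | rfl
      · exact absurd rfl hta
      · exact absurd rfl htb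
    · -- s = a
      have h3 : q u = p u := hqo u hua (Ne.symm htu)
      have h4 : q b = p b := hqo b hab.symm (Ne.symm htb)
      have h2a : q s = p s - 2 := hqs
      have hE : Ecl G B q = Ecl G B p := hEeq haB htB
      rw [if_neg (fun h => ((hmemA s).1 h) haZ)] at hSea
      omega
    · -- s = b
      have h3 : q u = p u := hqo u hub (Ne.symm htu)
      have h4 : q a = p a := hqo a hab (Ne.symm hta)
      have h2a : q s = p s - 2 := hqs
      have hE : Ecl G B q = Ecl G B p := hEeq hbB htB
      rw [if_neg (fun h => ((hmemA s).1 h) hbZ)] at hSea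
      omega
    · -- s ∈ B
      have h3 : q u = p u := hqo u (fun h => huB (h ▸ hsB)) (Ne.symm htu)
      have h4 : q a = p a := hqo a (fun h => haB (h ▸ hsB)) (Ne.symm hta)
      have h5 : q b = p b := hqo b (fun h => hbB (h ▸ hsB)) (Ne.symm htb)
      have hE := hEexp hsB htB
      rw [if_neg (fun h => ((hmemA s).1 h) (hBZ s hsB))] at hSea
      omega
    · -- s ∉ Z
      have h3 : q u = p u := hqo u (fun h => hsZ (h ▸ huZ)) (Ne.symm htu)
      have h4 : q a = p a := hqo a (fun h => hsZ (h ▸ haZ)) (Ne.symm hta)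
      have h5 : q b = p b := hqo b (fun h => hsZ (h ▸ hbZ)) (Ne.symm htb)
      have hE : Ecl G B q = Ecl G B p := hEeq (fun h => hsZ (hBZ s h)) htB
      rw [if_pos ((hmemA s).2 hsZ)] at hSea
      omega

lemma phi_rtg [Fintype V] {G : SimpleGraph V} {u a b : V} {B Z : Finset V}
    (hZ : ∀ x, x ∈ Z ↔ (x = u ∨ x = a ∨ x = b ∨ x ∈ B))
    (hab : a ≠ b) (hua : u ≠ a) (hub : u ≠ b)
    (huB : u ∉ B) (haB : a ∉ B) (hbB : b ∉ B)
    (hNu : ∀ x, G.Adj u x → x = a ∨ x = b)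
    {p q : V → ℕ} (h : Relation.ReflTransGen (PebblingMove G) p q) :
    4 * q u + 2 * q a + 2 * q b + 2 * Ecl G B q + 2 * ∑ x ∈ Finset.univ \ Z, (q x - 1)
      ≤ 4 * p u + 2 * p a + 2 * p b + 2 * Ecl G B p
        + 2 * ∑ x ∈ Finset.univ \ Z, (p x - 1) := by
  induction h with
  | refl => exact le_refl _
  | tail hs hstep ih =>
      exact le_trans (phi_step hZ hab hua hub huB haB hbB hNu hstep) ih

end PebAux


/-- Small Neighborhood Lemma, first part: in a Class 0 graph, if `u` has degree 2 and
`v` is at distance at least 3 from `u`, then `v` has degree at least 4. -/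
theorem small_neighborhood_deg_two {V : Type*} [Fintype V] [DecidableEq V]
    (G : SimpleGraph V) [DecidableRel G.Adj] (hG : G.Connected) (hG0 : Class0 G)
    (u v : V) (hu : G.degree u = 2) (huv : 3 ≤ G.dist u v) :
    4 ≤ G.degree v := by
  by_contra hcon
  push_neg at hcon
  have hdv : G.degree v ≤ 3 := by omega
  -- the two neighbors of u
  have hcard2 : (G.neighborFinset u).card = 2 := by
    rw [G.card_neighborFinset_eq_degree, hu]
  obtain ⟨a, b, hab, hNuEq⟩ := Finset.card_eq_two.1 hcard2
  have hadj_ua : G.Adj u a := by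
    rw [← SimpleGraph.mem_neighborFinset, hNuEq]; simp
  have hadj_ub : G.Adj u b := by
    rw [← SimpleGraph.mem_neighborFinset, hNuEq]; simp
  have hNu : ∀ x, G.Adj u x → x = a ∨ x = b := by
    intro x hx
    have hx' : x ∈ G.neighborFinset u := (SimpleGraph.mem_neighborFinset G u x).2 hx
    rw [hNuEq] at hx'
    simpa using hx'
  have hua : u ≠ a := G.ne_of_adj hadj_ua
  have hub : u ≠ b := G.ne_of_adj hadj_ub
  -- distance facts
  have huv' : u ≠ v := by
    rintro rfl
    simp [SimpleGraph.dist_self] at huv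
  have hnadj_vu : ¬ G.Adj v u := by
    intro h
    have := SimpleGraph.dist_le (SimpleGraph.Walk.cons h.symm SimpleGraph.Walk.nil)
    simp at this
    omega
  set Nv : Finset V := G.neighborFinset v with hNv
  set B : Finset V := insert v Nv with hB
  set Z : Finset V := insert u (insert a (insert b B)) with hZdef
  have hvNv : v ∉ Nv := by simp [hNv]
  have hmemNv : ∀ x, x ∈ Nv ↔ G.Adj v x := by intro x; simp [hNv]
  have huB : u ∉ B := by
    intro h
    rcases Finset.mem_insert.1 h with rfl | h'
    · exact huv' rfl
    · exact hnadj_vu ((hmemNv u).1 h')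
  have haB : a ∉ B := by
    intro h
    rcases Finset.mem_insert.1 h with rfl | h'
    · have := SimpleGraph.dist_le (SimpleGraph.Walk.cons hadj_ua SimpleGraph.Walk.nil)
      simp at this; omega
    · have hva : G.Adj v a := (hmemNv a).1 h'
      have := SimpleGraph.dist_le
        (SimpleGraph.Walk.cons hadj_ua (SimpleGraph.Walk.cons hva.symm SimpleGraph.Walk.nil))
      simp at this; omega
  have hbB : b ∉ B := by
    intro h
    rcases Finset.mem_insert.1 h with rfl | h'
    · have := SimpleGraph.dist_le (SimpleGraph.Walk.cons hadj_ub SimpleGraph.Walk.nil)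
      simp at this; omega
    · have hvb : G.Adj v b := (hmemNv b).1 h'
      have := SimpleGraph.dist_le
        (SimpleGraph.Walk.cons hadj_ub (SimpleGraph.Walk.cons hvb.symm SimpleGraph.Walk.nil))
      simp at this; omega
  have hZ : ∀ x, x ∈ Z ↔ (x = u ∨ x = a ∨ x = b ∨ x ∈ B) := by
    intro x; simp [hZdef, Finset.mem_insert]
  have hvB : v ∈ B := Finset.mem_insert_self v Nv
  have hvZ : v ∈ Z := (hZ v).2 (Or.inr (Or.inr (Or.inr hvB)))
  -- the configuration
  set d : ℕ := G.degree v with hd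
  set C : V → ℕ := fun x => if x = v then 4 + d else if x ∈ Z then 0 else 1 with hC
  have hCv : C v = 4 + d := by simp [hC]
  have hCZ : ∀ x ∈ Z, x ≠ v → C x = 0 := by
    intro x hx hxv; simp [hC, hxv, hx]
  have hCout : ∀ x, x ∉ Z → C x = 1 := by
    intro x hx
    have hxv : x ≠ v := fun h => hx (h ▸ hvZ)
    simp [hC, hxv, hx]
  -- cardinalities
  have hcardNv : Nv.card = d := by rw [hNv, hd, G.card_neighborFinset_eq_degree]
  have hcardB : B.card = d + 1 := by rw [hB, Finset.card_insert_of_notMem hvNv, hcardNv]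
  have hbnB : b ∉ B := hbB
  have hanbB : a ∉ insert b B := by
    intro h; rcases Finset.mem_insert.1 h with rfl | h'
    · exact hab rfl
    · exact haB h'
  have hunabB : u ∉ insert a (insert b B) := by
    intro h; rcases Finset.mem_insert.1 h with rfl | h'
    · exact hua rfl
    · rcases Finset.mem_insert.1 h' with rfl | h''
      · exact hub rfl
      · exact huB h''
  have hcardZ : Z.card = d + 4 := by
    rw [hZdef, Finset.card_insert_of_notMem hunabB, Finset.card_insert_of_notMem hanbB,
      Finset.card_insert_of_notMem hbnB, hcardB]
  have hZle : Z.card ≤ Fintype.card V := by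
    simpa using Finset.card_le_univ Z
  -- size of the configuration
  have hsize : (∑ x, C x) = Fintype.card V := by
    have h1 : ∑ x ∈ Z, C x = 4 + d :=
      (Finset.sum_eq_single_of_mem v hvZ (fun x hx hxv => hCZ x hx hxv)).trans hCv
    have h2 : ∑ x ∈ Finset.univ \ Z, C x = (Finset.univ \ Z).card := by
      rw [Finset.sum_congr rfl (fun x hx => hCout x (Finset.mem_sdiff.1 hx).2)]
      simp
    have h3 := Finset.sum_sdiff (f := C) (Finset.subset_univ Z)
    have h4 : (Finset.univ \ Z).card = Fintype.card V - Z.card := by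
      rw [Finset.card_sdiff_of_subset (Finset.subset_univ Z), Finset.card_univ]
    rw [← h3, h1, h2, h4, hcardZ]
    omega
  -- Class 0 gives solvability
  have hn1 : 1 ≤ Fintype.card V := Fintype.card_pos_iff.2 hG.nonempty
  have hKne : {k : ℕ | ∀ (r : V) (p : V → ℕ), (∑ w, p w) = k → PebblingSolvable G r p}.Nonempty := by
    by_contra h
    rw [Set.not_nonempty_iff_eq_empty] at h
    have h0 : pebblingNumber G = 0 := by
      rw [pebblingNumber, h, Nat.sInf_empty]
    rw [Class0, h0] at hG0
    omega
  have hmem := Nat.sInf_mem hKne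
  have hG0' : sInf {k : ℕ | ∀ (r : V) (p : V → ℕ), (∑ w, p w) = k → PebblingSolvable G r p}
      = Fintype.card V := hG0
  rw [hG0'] at hmem
  have hsolv : PebblingSolvable G u C := hmem u C hsize
  clear hmem hG0' hKne
  obtain ⟨qf, hrtg, hqf⟩ := hsolv
  -- potential argument
  have hchain := phi_rtg (G := G) (B := B) hZ hab hua hub huB haB hbB hNu hrtg
  have hCu : C u = 0 := hCZ u ((hZ u).2 (Or.inl rfl)) huv'
  have hCa : C a = 0 := by
    refine hCZ a ((hZ a).2 (Or.inr (Or.inl rfl))) ?_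
    intro h; exact haB (h ▸ hvB)
  have hCb : C b = 0 := by
    refine hCZ b ((hZ b).2 (Or.inr (Or.inr (Or.inl rfl)))) ?_
    intro h; exact hbB (h ▸ hvB)
  have hSea0 : ∑ x ∈ Finset.univ \ Z, (C x - 1) = 0 := by
    refine Finset.sum_eq_zero ?_
    intro x hx
    rw [hCout x (Finset.mem_sdiff.1 hx).2]
    omega
  have hE1 : Ecl G B C ≤ 1 := by
    refine ecl_le ?_
    intro k hk
    have hpsi := hk.psi hvNv (fun x hx => (hmemNv x).2 hx)
    have hNsum : ∑ x ∈ Nv, C x = 0 := by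
      refine Finset.sum_eq_zero ?_
      intro x hx
      refine hCZ x ((hZ x).2 (Or.inr (Or.inr (Or.inr (Finset.mem_insert_of_mem hx))))) ?_
      intro h; exact hvNv (h ▸ hx)
    rw [hCv, hNsum] at hpsi
    omega
  rw [hCu, hCa, hCb, hSea0] at hchain
  omega
end

section
/- Let G be a finite connected simple Class 0 graph and let u, v ∈ V(G). If u has degree 3, the distance between u and v is at least 4, and every neighbor of v has degree 3, then v has degree at least 4. -/
def pebF : ℕ → ℕ → ℕ
  | 0, m => 16 * m
  | 1, m => 8 * m
  | 2, m => 4 * m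
  | 3, m => m
  | 4, m => 2 * m
  | _ + 5, m => 4 * (m - 1)

def pebGain : ℕ → ℕ
  | 0 => 16 | 1 => 8 | 2 => 4 | 3 => 1 | 4 => 2 | _ + 5 => 4

def pebDrop : ℕ → ℕ
  | 0 => 32 | 1 => 16 | 2 => 8 | 3 => 2 | 4 => 4 | _ + 5 => 4

lemma pebF_gain (z k : ℕ) : pebF z (k + 1) ≤ pebF z k + pebGain z := by
  rcases z with _|_|_|_|_|z <;> simp [pebF, pebGain] <;> omega

lemma pebF_drop (z m : ℕ) (h : 2 ≤ m) : pebF z (m - 2) + pebDrop z ≤ pebF z m := by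
  rcases z with _|_|_|_|_|z <;> simp [pebF, pebDrop] <;> omega

lemma pebF_zero (z : ℕ) : pebF z 0 = 0 := by
  rcases z with _|_|_|_|_|z <;> simp [pebF]

lemma pebDrop_one_le (z : ℕ) : 1 ≤ pebDrop z := by
  rcases z with _|_|_|_|_|z <;> simp [pebDrop]

lemma pebDrop_two_le (z : ℕ) : 2 ≤ pebDrop z := by
  rcases z with _|_|_|_|_|z <;> simp [pebDrop]

lemma pebDrop_four_le (z : ℕ) (h : z ≠ 3) : 4 ≤ pebDrop z := by
  rcases z with _|_|_|_|_|z <;> simp [pebDrop] <;> omega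

lemma peb_psi_step {V : Type*} [Fintype V] [DecidableEq V] {G : SimpleGraph V}
    (zone : V → ℕ) (hzone : ∀ a b : V, G.Adj a b → pebGain (zone b) ≤ pebDrop (zone a))
    {q q' : V → ℕ} (h : PebblingMove G q q') :
    ∑ x, pebF (zone x) (q' x) ≤ ∑ x, pebF (zone x) (q x) := by
  obtain ⟨a, b, hab, h2, hqa, hqb, hrest⟩ := h
  have hne : a ≠ b := hab.ne
  have hbmem : b ∈ (Finset.univ.erase a) :=
    Finset.mem_erase.mpr ⟨hne.symm, Finset.mem_univ b⟩
  have key : ∀ r : V → ℕ, pebF (zone a) (r a) + (pebF (zone b) (r b)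
        + ∑ x ∈ (Finset.univ.erase a).erase b, pebF (zone x) (r x))
      = ∑ x, pebF (zone x) (r x) := by
    intro r
    rw [Finset.add_sum_erase _ (fun x => pebF (zone x) (r x)) hbmem,
        Finset.add_sum_erase _ (fun x => pebF (zone x) (r x)) (Finset.mem_univ a)]
  rw [← key q', ← key q]
  have hsum : ∑ x ∈ (Finset.univ.erase a).erase b, pebF (zone x) (q' x)
      = ∑ x ∈ (Finset.univ.erase a).erase b, pebF (zone x) (q x) := by
    refine Finset.sum_congr rfl fun x hx => ?_
    have hxa : x ≠ a := (Finset.mem_erase.mp (Finset.mem_of_mem_erase hx)).1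
    have hxb : x ≠ b := (Finset.mem_erase.mp hx).1
    rw [hrest x hxa hxb]
  rw [hsum, hqa, hqb]
  have g1 := pebF_gain (zone b) (q b)
  have g2 := pebF_drop (zone a) (q a) h2
  have g3 := hzone a b hab
  omega

lemma peb_psi_rtg {V : Type*} [Fintype V] [DecidableEq V] {G : SimpleGraph V}
    (zone : V → ℕ) (hzone : ∀ a b : V, G.Adj a b → pebGain (zone b) ≤ pebDrop (zone a))
    {p q : V → ℕ} (h : Relation.ReflTransGen (PebblingMove G) p q) :
    ∑ x, pebF (zone x) (q x) ≤ ∑ x, pebF (zone x) (p x) := by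
  induction h with
  | refl => exact le_rfl
  | tail _ hstep ih => exact le_trans (peb_psi_step zone hzone hstep) ih

/-- Small Neighborhood Lemma, second part: in a Class 0 graph, if `u` has degree 3,
`v` is at distance at least 4 from `u`, and every neighbor of `v` has degree 3, then
`v` has degree at least 4. -/
theorem small_neighborhood_deg_three {V : Type*} [Fintype V] [DecidableEq V]
    (G : SimpleGraph V) [DecidableRel G.Adj] (hG : G.Connected) (hG0 : Class0 G)
    (u v : V) (hu : G.degree u = 3) (huv : 4 ≤ G.dist u v)
    (hnbr : ∀ x : V, G.Adj v x → G.degree x = 3) :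
    4 ≤ G.degree v := by
  classical
  by_contra hlt
  push_neg at hlt
  have hdeg : G.degree v ≤ 3 := by omega
  -- regions
  set A : Finset V := G.neighborFinset v with hA_def
  set S : Finset V := (A.biUnion fun a => (G.neighborFinset a).erase v) \ A with hS_def
  set Zu : Finset V := G.neighborFinset u with hZu_def
  set T : Finset V := insert v (A ∪ S ∪ Zu ∪ {u}) with hT_def
  -- distance facts
  have hadj_dist : ∀ x y : V, G.Adj x y → G.dist x y ≤ 1 := by
    intro x y h
    exact le_of_eq (SimpleGraph.dist_eq_one_iff_adj.mpr h)
  have hnear : ∀ x : V, (x = v ∨ x ∈ A ∨ x ∈ S) → G.dist v x ≤ 2 := by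
    rintro x (rfl | hx | hx)
    · simp [SimpleGraph.dist_self]
    · exact le_trans (hadj_dist v x ((SimpleGraph.mem_neighborFinset _ _ _).mp hx)) (by norm_num)
    · obtain ⟨hx1, hx2⟩ := Finset.mem_sdiff.mp hx
      obtain ⟨a, haA, hxa⟩ := Finset.mem_biUnion.mp hx1
      obtain ⟨hxv, hxN⟩ := Finset.mem_erase.mp hxa
      have h1 : G.dist v a ≤ 1 := hadj_dist v a ((SimpleGraph.mem_neighborFinset _ _ _).mp haA)
      have h2 : G.dist a x ≤ 1 := hadj_dist a x ((SimpleGraph.mem_neighborFinset _ _ _).mp hxN)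
      have := hG.dist_triangle (u := v) (v := a) (w := x)
      omega
  have hfar : ∀ x : V, G.dist v x ≤ 2 → x ≠ u ∧ ¬ G.Adj u x ∧ x ∉ Zu := by
    intro x hx
    have hcomm : G.dist v u = G.dist u v := SimpleGraph.dist_comm
    have hxu : x ≠ u := by
      rintro rfl; omega
    have hadj : ¬ G.Adj u x := by
      intro h
      have h1 : G.dist u x ≤ 1 := hadj_dist u x h
      have h2 : G.dist x v = G.dist v x := SimpleGraph.dist_comm
      have := hG.dist_triangle (u := u) (v := x) (w := v)
      omega
    exact ⟨hxu, hadj, fun hmem => hadj ((SimpleGraph.mem_neighborFinset _ _ _).mp hmem)⟩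
  -- basic memberships
  have hvA : v ∉ A := by simp [hA_def]
  have hS_intro : ∀ a b : V, a ∈ A → G.Adj a b → b ≠ v → b ∉ A → b ∈ S := by
    intro a b haA hab hbv hbA
    refine Finset.mem_sdiff.mpr ⟨Finset.mem_biUnion.mpr ⟨a, haA, ?_⟩, hbA⟩
    exact Finset.mem_erase.mpr ⟨hbv, (SimpleGraph.mem_neighborFinset _ _ _).mpr hab⟩
  have hvS : v ∉ S := by
    intro h
    obtain ⟨h1, _⟩ := Finset.mem_sdiff.mp h
    obtain ⟨a, _, hxa⟩ := Finset.mem_biUnion.mp h1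
    exact (Finset.mem_erase.mp hxa).1 rfl
  have huv_ne : u ≠ v := by
    have := hfar v (by simp [SimpleGraph.dist_self])
    exact fun h => this.1 h.symm
  have huA : u ∉ A := fun h => (hfar u (hnear u (Or.inr (Or.inl h)))).1 rfl
  have huS : u ∉ S := fun h => (hfar u (hnear u (Or.inr (Or.inr h)))).1 rfl
  have huZu : u ∉ Zu := by simp [hZu_def]
  -- the zone function
  set zone : V → ℕ := fun x =>
    if x = v then 0 else if x ∈ A then 1 else if x ∈ S then 2
    else if x = u then 3 else if x ∈ Zu then 4 else 5 with hzone_def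
  have zv : zone v = 0 := by simp [hzone_def]
  have zA : ∀ x, x ∈ A → zone x = 1 := by
    intro x hx
    have hxv : x ≠ v := fun h => hvA (h ▸ hx)
    simp [hzone_def, hxv, hx]
  have zS : ∀ x, x ∈ S → zone x = 2 := by
    intro x hx
    have hxv : x ≠ v := fun h => hvS (h ▸ hx)
    have hxA : x ∉ A := (Finset.mem_sdiff.mp hx).2
    simp [hzone_def, hxv, hxA, hx]
  have zu : zone u = 3 := by simp [hzone_def, huv_ne, huA, huS]
  have zZu : ∀ x, x ∈ Zu → zone x = 4 := by
    intro x hx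
    have hadjux : G.Adj u x := (SimpleGraph.mem_neighborFinset _ _ _).mp hx
    have hxu : x ≠ u := fun h => G.irrefl (h ▸ hadjux)
    have hxnear : ¬ (x = v ∨ x ∈ A ∨ x ∈ S) := fun h => (hfar x (hnear x h)).2.2 hx
    push_neg at hxnear
    simp [hzone_def, hxnear.1, hxnear.2.1, hxnear.2.2, hxu, hx]
  have z5 : ∀ x, x ≠ v → x ∉ A → x ∉ S → x ≠ u → x ∉ Zu → zone x = 5 := by
    intro x h1 h2 h3 h4 h5
    simp [hzone_def, h1, h2, h3, h4, h5]
  have zone_eq_three : ∀ x, zone x = 3 → x = u := by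
    intro x hx
    by_contra hxu
    simp only [hzone_def] at hx
    split_ifs at hx <;> first | omega | exact hxu (by assumption)
  -- the zone adjacency property
  have hzoneOK : ∀ a b : V, G.Adj a b → pebGain (zone b) ≤ pebDrop (zone a) := by
    intro a b hab
    by_cases hbv : b = v
    · subst hbv
      have haA : a ∈ A := (SimpleGraph.mem_neighborFinset _ _ _).mpr hab.symm
      rw [zv, zA a haA]; decide
    by_cases hbA : b ∈ A
    · rw [zA b hbA]
      by_cases hav : a = v
      · rw [hav, zv]; decide
      by_cases haA : a ∈ A
      · rw [zA a haA]; decide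
      · have haS : a ∈ S := hS_intro b a hbA hab.symm hav haA
        rw [zS a haS]; decide
    by_cases hbS : b ∈ S
    · rw [zS b hbS]
      have hau : a ≠ u := by
        rintro rfl
        exact (hfar b (hnear b (Or.inr (Or.inr hbS)))).2.1 hab
      have : zone a ≠ 3 := fun h => hau (zone_eq_three a h)
      have h4 := pebDrop_four_le (zone a) this
      have : pebGain 2 = 4 := rfl
      omega
    by_cases hbu : b = u
    · rw [hbu, zu]
      have := pebDrop_one_le (zone a)
      have : pebGain 3 = 1 := rfl
      omega
    by_cases hbZ : b ∈ Zu
    · rw [zZu b hbZ]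
      have := pebDrop_two_le (zone a)
      have : pebGain 4 = 2 := rfl
      omega
    · rw [z5 b hbv hbA hbS hbu hbZ]
      have hau : a ≠ u := by
        rintro rfl
        exact hbZ ((SimpleGraph.mem_neighborFinset _ _ _).mpr hab)
      have : zone a ≠ 3 := fun h => hau (zone_eq_three a h)
      have h4 := pebDrop_four_le (zone a) this
      have : pebGain 5 = 4 := rfl
      omega
  -- cardinality of T
  have hScard : S.card ≤ 6 := by
    have h1 : S.card ≤ (A.biUnion fun a => (G.neighborFinset a).erase v).card :=
      Finset.card_le_card (Finset.sdiff_subset)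
    have h2 : (A.biUnion fun a => (G.neighborFinset a).erase v).card
        ≤ ∑ a ∈ A, ((G.neighborFinset a).erase v).card := Finset.card_biUnion_le
    have h3 : ∀ a ∈ A, ((G.neighborFinset a).erase v).card = 2 := by
      intro a haA
      have hadjva : G.Adj v a := (SimpleGraph.mem_neighborFinset _ _ _).mp haA
      have hvmem : v ∈ G.neighborFinset a := (SimpleGraph.mem_neighborFinset _ _ _).mpr hadjva.symm
      rw [Finset.card_erase_of_mem hvmem, G.card_neighborFinset_eq_degree, hnbr a hadjva]
    have h4 : ∑ a ∈ A, ((G.neighborFinset a).erase v).card = 2 * A.card := by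
      rw [Finset.sum_congr rfl h3]; simp [mul_comm]
    have hAcard : A.card ≤ 3 := by
      rw [hA_def, G.card_neighborFinset_eq_degree]; exact hdeg
    omega
  have hAcard : A.card ≤ 3 := by
    rw [hA_def, G.card_neighborFinset_eq_degree]; exact hdeg
  have hZucard : Zu.card = 3 := by
    rw [hZu_def, G.card_neighborFinset_eq_degree, hu]
  have hTcard : T.card ≤ 14 := by
    have h1 : T.card ≤ (A ∪ S ∪ Zu ∪ {u}).card + 1 := Finset.card_insert_le _ _
    have h2 : (A ∪ S ∪ Zu ∪ {u}).card ≤ (A ∪ S ∪ Zu).card + 1 := by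
      refine le_trans (Finset.card_union_le _ _) ?_
      simp
    have h3 : (A ∪ S ∪ Zu).card ≤ (A ∪ S).card + Zu.card := Finset.card_union_le _ _
    have h4 : (A ∪ S).card ≤ A.card + S.card := Finset.card_union_le _ _
    omega
  -- the configuration
  have huT : u ∈ T := by simp [hT_def]
  set p : V → ℕ := fun x => if x = u then T.card else if x ∈ T then 0 else 1 with hp_def
  have hp_sum : ∑ x, p x = Fintype.card V := by
    have hsplit : ∀ x : V, p x = (if x = u then T.card else 0) + (if x ∈ T then 0 else 1) := by
      intro x
      by_cases hx : x = u
      · subst hx; simp [hp_def, huT]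
      · simp [hp_def, hx]
    rw [Finset.sum_congr rfl (fun x _ => hsplit x), Finset.sum_add_distrib]
    have e1 : (∑ x, if x = u then T.card else 0) = T.card := by
      rw [Finset.sum_ite_eq' Finset.univ u (fun _ => T.card)]
      simp
    have e2 : (∑ x : V, if x ∈ T then 0 else 1) = Fintype.card V - T.card := by
      rw [Finset.sum_ite, Finset.sum_const, Finset.sum_const]
      simp only [smul_eq_mul, mul_zero, mul_one, zero_add]
      have : Finset.univ.filter (fun x => ¬ x ∈ T) = Finset.univ \ T := by
        ext x; simp
      rw [this, Finset.card_univ_diff]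
    rw [e1, e2]
    have := Finset.card_le_univ T
    omega
  -- Ψ p = T.card
  have hpsi_p : ∑ x, pebF (zone x) (p x) = T.card := by
    rw [Finset.sum_eq_single u]
    · have : p u = T.card := by simp [hp_def]
      rw [this, zu]
      rfl
    · intro x _ hxu
      have hpx : p x = if x ∈ T then 0 else 1 := by simp [hp_def, hxu]
      by_cases hxT : x ∈ T
      · rw [hpx, if_pos hxT, pebF_zero]
      · have hx5 : zone x = 5 := by
          simp only [hT_def, Finset.mem_insert, Finset.mem_union, Finset.mem_singleton] at hxT
          push_neg at hxT
          exact z5 x hxT.1 hxT.2.1.1.1 hxT.2.1.1.2 hxT.2.2 hxT.2.1.2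
        rw [hpx, if_neg hxT, hx5]
        rfl
    · intro h
      exact absurd (Finset.mem_univ u) h
  -- extract solvability from Class 0
  have hPSne : {k : ℕ | ∀ (r : V) (p : V → ℕ), (∑ x, p x) = k → PebblingSolvable G r p}.Nonempty := by
    by_contra hne
    rw [Set.not_nonempty_iff_eq_empty] at hne
    have h0 : pebblingNumber G = 0 := by
      rw [pebblingNumber]
      convert Nat.sInf_empty
    rw [Class0] at hG0
    have : Fintype.card V > 0 := Fintype.card_pos_iff.mpr hG.nonempty
    omega
  have hmem : Fintype.card V ∈
      {k : ℕ | ∀ (r : V) (p : V → ℕ), (∑ x, p x) = k → PebblingSolvable G r p} := by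
    rw [Class0, pebblingNumber] at hG0
    rw [← hG0]
    exact Nat.sInf_mem hPSne
  have hsolv : PebblingSolvable G v p := hmem v p hp_sum
  obtain ⟨q, hsteps, hq1⟩ := hsolv
  have hmono := peb_psi_rtg zone hzoneOK hsteps
  have hqv : 16 ≤ pebF (zone v) (q v) := by
    rw [zv]
    have : pebF 0 (q v) = 16 * q v := rfl
    omega
  have hle : pebF (zone v) (q v) ≤ ∑ x, pebF (zone x) (q x) :=
    Finset.single_le_sum (f := fun x => pebF (zone x) (q x))
      (fun i _ => Nat.zero_le _) (Finset.mem_univ v)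
  rw [hpsi_p] at hmono
  omega
end

section
/- For each integer C there exists an integer n_0 such that every finite connected simple graph G on n vertices with minimum degree δ(G) = 3, n ≥ n_0, and at most (3/2)n + C edges is not Class 0 (i.e., π(G) > n). -/
set_option linter.unusedSectionVars false
set_option maxHeartbeats 1000000

namespace PebAux

/-- Weight of `m` pebbles on a vertex at distance `da` from the root `u` and `ea` from
the pile vertex `v`.  Vertices in the "sea" (far from both) only count their excess
over a single pebble. -/
def gfun (da ea m : ℕ) : ℕ :=
  if da = 0 then 16*m else if da = 1 then 8*m
  else if ea = 0 then m else if ea = 1 then 2*m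
  else if ea = 2 then 4*m else 8*(m-1)

lemma gfun_zero (da ea : ℕ) : gfun da ea 0 = 0 := by
  unfold gfun; split_ifs <;> simp

lemma gfun_one_sea {da ea : ℕ} (h1 : 2 ≤ da) (h2 : 3 ≤ ea) : gfun da ea 1 = 0 := by
  unfold gfun; split_ifs <;> omega

lemma keyArith {da ea db eb m k : ℕ} (h2 : 2 ≤ m)
    (h1 : db ≤ da + 1) (h1' : da ≤ db + 1) (h3 : eb ≤ ea + 1) (h3' : ea ≤ eb + 1)
    (h4 : 5 ≤ da + ea) (h5 : 5 ≤ db + eb) (h6 : 1 ≤ da + db) (h7 : 1 ≤ ea + eb) :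
    gfun da ea (m-2) + gfun db eb (k+1) ≤ gfun da ea m + gfun db eb k := by
  unfold gfun; split_ifs <;> omega

variable {V : Type} [Fintype V] [DecidableEq V] {G : SimpleGraph V} [DecidableRel G.Adj]

noncomputable def ctb (G : SimpleGraph V) (u v x : V) (m : ℕ) : ℕ :=
  gfun (G.dist u x) (G.dist v x) m

noncomputable def Phi (G : SimpleGraph V) (u v : V) (p : V → ℕ) : ℕ :=
  ∑ x, ctb G u v x (p x)

lemma dist_getVert_le (hconn : G.Connected) {a b : V} (p : G.Walk a b) :
    ∀ i : ℕ, G.dist a (p.getVert i) ≤ i := by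
  induction p with
  | nil =>
    intro i
    cases i <;> simp [SimpleGraph.Walk.getVert, SimpleGraph.dist_self]
  | @cons a w b h q ih =>
    intro i
    cases i with
    | zero => simp [SimpleGraph.Walk.getVert_zero, SimpleGraph.dist_self]
    | succ j =>
      have h1 : (SimpleGraph.Walk.cons h q).getVert (j+1) = q.getVert j := rfl
      rw [h1]
      calc G.dist a (q.getVert j) ≤ G.dist a w + G.dist w (q.getVert j) :=
            hconn.dist_triangle
        _ ≤ 1 + j := add_le_add (le_of_eq (SimpleGraph.dist_eq_one_iff_adj.mpr h)) (ih j)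
        _ = j + 1 := by omega

lemma exists_pred (hconn : G.Connected) {a b : V} {k : ℕ} (h : G.dist a b = k + 1) :
    ∃ c : V, G.Adj c b ∧ G.dist a c = k := by
  obtain ⟨p, hp⟩ := hconn.exists_walk_length_eq_dist a b
  rw [h] at hp
  refine ⟨p.getVert k, ?_, ?_⟩
  · have := p.adj_getVert_succ (i := k) (by omega)
    rwa [show p.getVert (k+1) = b by rw [← hp]; exact p.getVert_length] at this
  · have hle : G.dist a (p.getVert k) ≤ k := dist_getVert_le hconn p k
    have hge : G.dist a b ≤ G.dist a (p.getVert k) + 1 := by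
      have t := hconn.dist_triangle (u := a) (v := p.getVert k) (w := b)
      have hadj : G.dist (p.getVert k) b = 1 := by
        rw [SimpleGraph.dist_eq_one_iff_adj]
        have := p.adj_getVert_succ (i := k) (by omega)
        rwa [show p.getVert (k+1) = b by rw [← hp]; exact p.getVert_length] at this
      omega
    omega

lemma phi_mono_move (hconn : G.Connected) {u v : V} (huv : 5 ≤ G.dist u v)
    {p q : V → ℕ} (h : PebblingMove G p q) : Phi G u v q ≤ Phi G u v p := by
  obtain ⟨a, b, hab, h2, hqa, hqb, hoff⟩ := h
  have hne : a ≠ b := hab.ne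
  have dab : G.dist a b = 1 := SimpleGraph.dist_eq_one_iff_adj.mpr hab
  have dba : G.dist b a = 1 := by rw [SimpleGraph.dist_comm]; exact dab
  have f1 : G.dist u b ≤ G.dist u a + 1 := by
    have := hconn.dist_triangle (u := u) (v := a) (w := b); omega
  have f2 : G.dist u a ≤ G.dist u b + 1 := by
    have := hconn.dist_triangle (u := u) (v := b) (w := a); omega
  have f3 : G.dist v b ≤ G.dist v a + 1 := by
    have := hconn.dist_triangle (u := v) (v := a) (w := b); omega
  have f4 : G.dist v a ≤ G.dist v b + 1 := by
    have := hconn.dist_triangle (u := v) (v := b) (w := a); omega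
  have f5 : 5 ≤ G.dist u a + G.dist v a := by
    have t := hconn.dist_triangle (u := u) (v := a) (w := v)
    have : G.dist a v = G.dist v a := SimpleGraph.dist_comm
    omega
  have f6 : 5 ≤ G.dist u b + G.dist v b := by
    have t := hconn.dist_triangle (u := u) (v := b) (w := v)
    have : G.dist b v = G.dist v b := SimpleGraph.dist_comm
    omega
  have f7 : 1 ≤ G.dist u a + G.dist u b := by
    by_contra hcon
    push_neg at hcon
    have ha : G.dist u a = 0 := by omega
    have hb : G.dist u b = 0 := by omega
    rw [hconn.dist_eq_zero_iff] at ha hb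
    exact hne (ha ▸ hb ▸ rfl)
  have f8 : 1 ≤ G.dist v a + G.dist v b := by
    by_contra hcon
    push_neg at hcon
    have ha : G.dist v a = 0 := by omega
    have hb : G.dist v b = 0 := by omega
    rw [hconn.dist_eq_zero_iff] at ha hb
    exact hne (ha ▸ hb ▸ rfl)
  have hkey : ctb G u v a (q a) + ctb G u v b (q b) ≤ ctb G u v a (p a) + ctb G u v b (p b) := by
    rw [hqa, hqb]
    exact keyArith h2 f1 f2 f3 f4 f5 f6 f7 f8
  have hsub : ({a, b} : Finset V) ⊆ Finset.univ := by simp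
  have hsplit : ∀ r : V → ℕ, Phi G u v r =
      (∑ x ∈ Finset.univ \ {a, b}, ctb G u v x (r x)) + (ctb G u v a (r a) + ctb G u v b (r b)) := by
    intro r
    rw [Phi, ← Finset.sum_sdiff hsub, Finset.sum_pair hne]
  rw [hsplit q, hsplit p]
  refine Nat.add_le_add (le_of_eq (Finset.sum_congr rfl ?_)) hkey
  intro x hx
  simp only [Finset.mem_sdiff, Finset.mem_insert, Finset.mem_singleton] at hx
  push_neg at hx
  rw [hoff x hx.2.1 hx.2.2]

lemma phi_mono (hconn : G.Connected) {u v : V} (huv : 5 ≤ G.dist u v)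
    {p q : V → ℕ} (h : Relation.ReflTransGen (PebblingMove G) p q) :
    Phi G u v q ≤ Phi G u v p := by
  induction h with
  | refl => exact le_rfl
  | tail _ hstep ih => exact le_trans (phi_mono_move hconn huv hstep) ih

lemma unsolvable_of_phi_lt (hconn : G.Connected) {u v : V} (huv : 5 ≤ G.dist u v)
    {p : V → ℕ} (hphi : Phi G u v p < 16) : ¬ PebblingSolvable G u p := by
  rintro ⟨q, hsteps, hq⟩
  have h1 : Phi G u v q ≤ Phi G u v p := phi_mono hconn huv hsteps
  have h2 : ctb G u v u (q u) ≤ Phi G u v q := by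
    unfold Phi
    exact Finset.single_le_sum (f := fun x => ctb G u v x (q x))
      (fun i _ => Nat.zero_le _) (Finset.mem_univ u)
  have h3 : ctb G u v u (q u) = 16 * q u := by
    unfold ctb gfun
    simp [SimpleGraph.dist_self]
  omega


end PebAux

open PebAux

/-- For each integer `C` there is an `n₀` such that every connected `n`-vertex graph
with minimum degree exactly 3, `n ≥ n₀`, and at most `(3/2)n + C` edges is not Class 0. -/
theorem not_class0_of_few_edges_minDegree_three (C : ℤ) :
    ∃ n₀ : ℕ, ∀ (V : Type) [Fintype V] [DecidableEq V] (G : SimpleGraph V)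
      [DecidableRel G.Adj], G.Connected →
      (∀ v : V, 3 ≤ G.degree v) → (∃ v : V, G.degree v = 3) →
      n₀ ≤ Fintype.card V →
      ((G.edgeFinset.card : ℚ) ≤ (3 / 2 : ℚ) * Fintype.card V + C) →
      ¬ Class0 G := by
  set K : ℕ := (2*C).toNat with hK
  refine ⟨(4+K)^4 + K*(4+K) + 1, ?_⟩
  intro V _ _ G _ hconn hdeg3 hex3 hn hedge
  obtain ⟨u, hu3⟩ := hex3
  set n := Fintype.card V with hncard
  -- excess bound
  have hdeg2e : ∑ x, G.degree x = 2 * G.edgeFinset.card :=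
    SimpleGraph.sum_degrees_eq_twice_card_edges G
  set E : ℕ := ∑ x, (G.degree x - 3) with hE
  have hE3 : E + 3*n = ∑ x, G.degree x := by
    have h1 : E + 3*n = ∑ x : V, ((G.degree x - 3) + 3) := by
      rw [Finset.sum_add_distrib, Finset.sum_const, Finset.card_univ, ← hncard, smul_eq_mul, hE]
      ring
    rw [h1]
    exact Finset.sum_congr rfl (fun x _ => by have := hdeg3 x; omega)
  have hEK : E ≤ K := by
    have hcast : (E : ℚ) + 3*(n:ℚ) = 2 * (G.edgeFinset.card : ℚ) := by
      have h0 := hE3.trans hdeg2e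
      exact_mod_cast h0
    have h2C : (E : ℚ) ≤ 2*(C:ℚ) := by
      have h32 : (3/2 : ℚ) * n + C = (3*n + 2*C)/2 := by ring
      rw [h32] at hedge
      linarith
    have hK2 : (2*(C:ℤ) : ℤ) ≤ (K : ℤ) := by
      rw [hK]; exact Int.self_le_toNat _
    have hK2' : 2*(C:ℚ) ≤ (K : ℚ) := by exact_mod_cast hK2
    have : (E:ℚ) ≤ (K:ℚ) := le_trans h2C hK2'
    exact_mod_cast this
  have hdegD : ∀ x : V, G.degree x ≤ 3 + K := by
    intro x
    have h1 : G.degree x - 3 ≤ E := by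
      rw [hE]
      exact Finset.single_le_sum (f := fun y => G.degree y - 3)
        (fun i _ => Nat.zero_le _) (Finset.mem_univ x)
    have := hdeg3 x
    omega
  -- high degree vertices
  set H : Finset V := Finset.univ.filter (fun x => 4 ≤ G.degree x) with hHdef
  have hHK : H.card ≤ K := by
    have h1 : H.card ≤ ∑ x ∈ H, (G.degree x - 3) := by
      rw [Finset.card_eq_sum_ones]
      refine Finset.sum_le_sum ?_
      intro i hi
      rw [hHdef] at hi
      simp only [Finset.mem_filter] at hi
      omega
    have h2 : ∑ x ∈ H, (G.degree x - 3) ≤ E := by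
      rw [hE]
      exact Finset.sum_le_sum_of_subset (Finset.filter_subset _ _)
    omega
  -- balls around u
  have hBstep : ∀ k : ℕ,
      (Finset.univ.filter (fun x => G.dist u x ≤ k + 1)).card ≤
      (Finset.univ.filter (fun x => G.dist u x ≤ k)).card * (4+K) := by
    intro k
    set Bk := Finset.univ.filter (fun x => G.dist u x ≤ k) with hBk
    have hsub : Finset.univ.filter (fun x => G.dist u x ≤ k + 1) ⊆
        Bk ∪ Bk.biUnion (fun c => G.neighborFinset c) := by
      intro y hy
      simp only [Finset.mem_filter, Finset.mem_univ, true_and] at hy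
      rcases Nat.lt_or_ge (G.dist u y) (k+1) with hlt | hge
      · refine Finset.mem_union_left _ ?_
        rw [hBk]; simp only [Finset.mem_filter, Finset.mem_univ, true_and]; omega
      · have heq : G.dist u y = k + 1 := by omega
        obtain ⟨c, hc, hdc⟩ := exists_pred hconn heq
        refine Finset.mem_union_right _ ?_
        refine Finset.mem_biUnion.mpr ⟨c, ?_, ?_⟩
        · rw [hBk]; simp only [Finset.mem_filter, Finset.mem_univ, true_and]; omega
        · rw [SimpleGraph.mem_neighborFinset]; exact hc
    calc (Finset.univ.filter (fun x => G.dist u x ≤ k + 1)).card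
        ≤ (Bk ∪ Bk.biUnion (fun c => G.neighborFinset c)).card := Finset.card_le_card hsub
      _ ≤ Bk.card + (Bk.biUnion (fun c => G.neighborFinset c)).card := Finset.card_union_le _ _
      _ ≤ Bk.card + ∑ c ∈ Bk, (G.neighborFinset c).card :=
          Nat.add_le_add_left (Finset.card_biUnion_le) _
      _ ≤ Bk.card + ∑ c ∈ Bk, (3+K) := by
          refine Nat.add_le_add_left (Finset.sum_le_sum ?_) _
          intro c _
          rw [SimpleGraph.card_neighborFinset_eq_degree]
          exact hdegD c
      _ = Bk.card * (4+K) := by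
          rw [Finset.sum_const, smul_eq_mul]
          ring
  have hB0 : (Finset.univ.filter (fun x => G.dist u x ≤ 0)).card ≤ 1 := by
    have hsub : (Finset.univ.filter (fun x => G.dist u x ≤ 0)) ⊆ {u} := by
      intro x hx
      simp only [Finset.mem_filter, Finset.mem_univ, true_and, Nat.le_zero] at hx
      rw [hconn.dist_eq_zero_iff] at hx
      simp [hx.symm]
    simpa using Finset.card_le_card hsub
  have hB4 : (Finset.univ.filter (fun x => G.dist u x ≤ 4)).card ≤ (4+K)^4 := by
    have h1 := hBstep 0
    have h2 := hBstep 1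
    have h3 := hBstep 2
    have h4 := hBstep 3
    have e1 : (Finset.univ.filter (fun x => G.dist u x ≤ 1)).card ≤ (4+K) := by
      calc _ ≤ _ := h1
        _ ≤ 1 * (4+K) := Nat.mul_le_mul_right _ hB0
        _ = (4+K) := by ring
    have e2 : (Finset.univ.filter (fun x => G.dist u x ≤ 2)).card ≤ (4+K)^2 := by
      calc _ ≤ _ := h2
        _ ≤ (4+K) * (4+K) := Nat.mul_le_mul_right _ e1
        _ = (4+K)^2 := by ring
    have e3 : (Finset.univ.filter (fun x => G.dist u x ≤ 3)).card ≤ (4+K)^3 := by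
      calc _ ≤ _ := h3
        _ ≤ (4+K)^2 * (4+K) := Nat.mul_le_mul_right _ e2
        _ = (4+K)^3 := by ring
    calc _ ≤ _ := h4
      _ ≤ (4+K)^3 * (4+K) := Nat.mul_le_mul_right _ e3
      _ = (4+K)^4 := by ring
  -- choose v
  set bad : Finset V :=
    (Finset.univ.filter (fun x => G.dist u x ≤ 4)) ∪ H ∪ H.biUnion (fun c => G.neighborFinset c)
    with hbaddef
  have hbadcard : bad.card ≤ (4+K)^4 + K*(4+K) := by
    calc bad.card ≤ ((Finset.univ.filter (fun x => G.dist u x ≤ 4)) ∪ H).card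
          + (H.biUnion (fun c => G.neighborFinset c)).card := Finset.card_union_le _ _
      _ ≤ (Finset.univ.filter (fun x => G.dist u x ≤ 4)).card + H.card
          + (H.biUnion (fun c => G.neighborFinset c)).card := by
            exact Nat.add_le_add_right (Finset.card_union_le _ _) _
      _ ≤ (4+K)^4 + K + ∑ c ∈ H, (G.neighborFinset c).card := by
            refine Nat.add_le_add (Nat.add_le_add hB4 hHK) Finset.card_biUnion_le
      _ ≤ (4+K)^4 + K + ∑ c ∈ H, (3+K) := by
            refine Nat.add_le_add_left (Finset.sum_le_sum ?_) _
            intro c _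
            rw [SimpleGraph.card_neighborFinset_eq_degree]
            exact hdegD c
      _ ≤ (4+K)^4 + K + K * (3+K) := by
            rw [Finset.sum_const, smul_eq_mul]
            have := Nat.mul_le_mul_right (3+K) hHK
            omega
      _ = (4+K)^4 + K*(4+K) := by ring
  have hvx : ∃ v : V, v ∉ bad := by
    by_contra hcon
    push_neg at hcon
    have : Finset.univ ⊆ bad := fun x _ => hcon x
    have := Finset.card_le_card this
    rw [Finset.card_univ, ← hncard] at this
    omega
  obtain ⟨v, hv⟩ := hvx
  rw [hbaddef] at hv
  simp only [Finset.mem_union, Finset.mem_filter, Finset.mem_univ, true_and,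
    Finset.mem_biUnion, not_or, not_exists, not_and] at hv
  obtain ⟨⟨hv4, hvH⟩, hvN⟩ := hv
  have hv5 : 5 ≤ G.dist u v := by omega
  have hvdeg : G.degree v = 3 := by
    rw [hHdef] at hvH
    simp only [Finset.mem_filter, Finset.mem_univ, true_and, not_le] at hvH
    have := hdeg3 v
    omega
  have hnbr : ∀ x : V, G.Adj v x → G.degree x = 3 := by
    intro x hx
    by_contra hcon
    have h4 : 4 ≤ G.degree x := by have := hdeg3 x; omega
    have hxH : x ∈ H := by rw [hHdef]; simp only [Finset.mem_filter, Finset.mem_univ, true_and]; exact h4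
    exact hvN x hxH (by rw [SimpleGraph.mem_neighborFinset]; exact hx.symm)
  -- the sphere of radius 2 around v
  set S2 : Finset V := Finset.univ.filter (fun x => G.dist v x = 2) with hS2def
  set s2 : ℕ := S2.card with hs2def
  have hs2 : s2 ≤ 6 := by
    have hsub : S2 ⊆ (G.neighborFinset v).biUnion (fun x => (G.neighborFinset x).erase v) := by
      intro y hy
      rw [hS2def] at hy
      simp only [Finset.mem_filter, Finset.mem_univ, true_and] at hy
      obtain ⟨c, hc, hdc⟩ := exists_pred hconn (show G.dist v y = 1 + 1 from hy)
      refine Finset.mem_biUnion.mpr ⟨c, ?_, ?_⟩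
      · rw [SimpleGraph.mem_neighborFinset]
        exact SimpleGraph.dist_eq_one_iff_adj.mp hdc
      · refine Finset.mem_erase.mpr ⟨?_, ?_⟩
        · intro heq
          rw [heq] at hy
          rw [SimpleGraph.dist_self] at hy
          omega
        · rw [SimpleGraph.mem_neighborFinset]; exact hc
    have h1 : s2 ≤ ∑ x ∈ G.neighborFinset v, ((G.neighborFinset x).erase v).card := by
      rw [hs2def]
      exact le_trans (Finset.card_le_card hsub) Finset.card_biUnion_le
    have h2 : ∀ x ∈ G.neighborFinset v, ((G.neighborFinset x).erase v).card = 2 := by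
      intro x hx
      rw [SimpleGraph.mem_neighborFinset] at hx
      have hvmem : v ∈ G.neighborFinset x := by
        rw [SimpleGraph.mem_neighborFinset]; exact hx.symm
      rw [Finset.card_erase_of_mem hvmem, SimpleGraph.card_neighborFinset_eq_degree, hnbr x hx]
    rw [Finset.sum_congr rfl h2, Finset.sum_const, smul_eq_mul,
      SimpleGraph.card_neighborFinset_eq_degree, hvdeg] at h1
    omega
  -- the configuration
  set p : V → ℕ := fun x =>
    if x = v then 8 + s2 else if G.dist u x ≤ 1 ∨ G.dist v x ≤ 2 then 0 else 1 with hpdef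
  -- cardinality of the zero zone
  have hZcard : (Finset.univ.filter (fun x => G.dist u x ≤ 1 ∨ G.dist v x ≤ 2)).card = 8 + s2 := by
    have hdisj : Disjoint (Finset.univ.filter (fun x : V => G.dist u x ≤ 1))
        (Finset.univ.filter (fun x : V => G.dist v x ≤ 2)) := by
      rw [Finset.disjoint_left]
      intro x hx1 hx2
      simp only [Finset.mem_filter, Finset.mem_univ, true_and] at hx1 hx2
      have t := hconn.dist_triangle (u := u) (v := x) (w := v)
      have hc : G.dist x v = G.dist v x := SimpleGraph.dist_comm
      omega
    have hunion : (Finset.univ.filter (fun x => G.dist u x ≤ 1 ∨ G.dist v x ≤ 2)) =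
        (Finset.univ.filter (fun x : V => G.dist u x ≤ 1)) ∪
        (Finset.univ.filter (fun x : V => G.dist v x ≤ 2)) := by
      ext x
      simp only [Finset.mem_filter, Finset.mem_univ, true_and, Finset.mem_union]
    have hZu : (Finset.univ.filter (fun x : V => G.dist u x ≤ 1)).card = 4 := by
      have he : (Finset.univ.filter (fun x : V => G.dist u x ≤ 1)) =
          insert u (G.neighborFinset u) := by
        ext x
        simp only [Finset.mem_filter, Finset.mem_univ, true_and, Finset.mem_insert,
          SimpleGraph.mem_neighborFinset]
        constructor
        · intro hx
          rcases Nat.le_one_iff_eq_zero_or_eq_one.mp hx with h0 | h1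
          · left; exact (hconn.dist_eq_zero_iff.mp h0).symm
          · right; exact SimpleGraph.dist_eq_one_iff_adj.mp h1
        · rintro (rfl | hadj)
          · rw [SimpleGraph.dist_self]; omega
          · rw [SimpleGraph.dist_eq_one_iff_adj.mpr hadj]
      rw [he, Finset.card_insert_of_notMem (by simp),
        SimpleGraph.card_neighborFinset_eq_degree, hu3]
    have hZv : (Finset.univ.filter (fun x : V => G.dist v x ≤ 2)).card = 4 + s2 := by
      have hsplit : (Finset.univ.filter (fun x : V => G.dist v x ≤ 2)) =
          (insert v (G.neighborFinset v)) ∪ S2 := by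
        ext x
        rw [hS2def]
        simp only [Finset.mem_filter, Finset.mem_univ, true_and, Finset.mem_union,
          Finset.mem_insert, SimpleGraph.mem_neighborFinset]
        constructor
        · intro hx
          rcases (show G.dist v x = 0 ∨ G.dist v x = 1 ∨ G.dist v x = 2 by omega) with h | h | h
          · left; left; exact (hconn.dist_eq_zero_iff.mp h).symm
          · left; right; exact SimpleGraph.dist_eq_one_iff_adj.mp h
          · right; exact h
        · rintro ((rfl | hadj) | hx2)
          · rw [SimpleGraph.dist_self]; omega
          · have h1 : G.dist v x = 1 := SimpleGraph.dist_eq_one_iff_adj.mpr hadj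
            omega
          · omega
      have hdisj2 : Disjoint (insert v (G.neighborFinset v)) S2 := by
        rw [Finset.disjoint_left]
        intro x hx1 hx2
        rw [hS2def] at hx2
        simp only [Finset.mem_filter, Finset.mem_univ, true_and] at hx2
        simp only [Finset.mem_insert, SimpleGraph.mem_neighborFinset] at hx1
        rcases hx1 with rfl | hadj
        · rw [SimpleGraph.dist_self] at hx2; omega
        · rw [SimpleGraph.dist_eq_one_iff_adj.mpr hadj] at hx2; omega
      rw [hsplit, Finset.card_union_of_disjoint hdisj2,
        Finset.card_insert_of_notMem (by simp),
        SimpleGraph.card_neighborFinset_eq_degree, hvdeg, ← hs2def]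
    rw [hunion, Finset.card_union_of_disjoint hdisj, hZu, hZv]
    omega
  -- size of the configuration
  have hsize : (∑ x, p x) = n := by
    rw [← Finset.sum_filter_add_sum_filter_not Finset.univ
      (fun x => G.dist u x ≤ 1 ∨ G.dist v x ≤ 2) p]
    have hvmem : v ∈ Finset.univ.filter (fun x => G.dist u x ≤ 1 ∨ G.dist v x ≤ 2) := by
      simp only [Finset.mem_filter, Finset.mem_univ, true_and]
      right; rw [SimpleGraph.dist_self]; omega
    have h1 : ∑ x ∈ Finset.univ.filter (fun x => G.dist u x ≤ 1 ∨ G.dist v x ≤ 2), p x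
        = 8 + s2 := by
      rw [Finset.sum_eq_single_of_mem v hvmem]
      · rw [hpdef]; simp
      · intro x hx hne
        simp only [Finset.mem_filter, Finset.mem_univ, true_and] at hx
        rw [hpdef]
        simp only [if_neg hne, if_pos hx]
    have h2 : ∑ x ∈ Finset.univ.filter (fun x => ¬(G.dist u x ≤ 1 ∨ G.dist v x ≤ 2)), p x
        = n - (8 + s2) := by
      have hone : ∀ x ∈ Finset.univ.filter (fun x => ¬(G.dist u x ≤ 1 ∨ G.dist v x ≤ 2)),
          p x = 1 := by
        intro x hx
        simp only [Finset.mem_filter, Finset.mem_univ, true_and] at hx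
        have hxv : x ≠ v := by
          intro heq
          apply hx
          right
          rw [heq, SimpleGraph.dist_self]
          omega
        rw [hpdef]
        simp only [if_neg hxv, if_neg hx]
      rw [Finset.sum_congr rfl hone, Finset.sum_const, smul_eq_mul, mul_one]
      have := Finset.card_filter_add_card_filter_not
        (s := Finset.univ) (p := fun x : V => G.dist u x ≤ 1 ∨ G.dist v x ≤ 2)
      rw [Finset.card_univ, ← hncard] at this
      omega
    rw [h1, h2]
    have hbig : 8 + s2 ≤ n := by
      have : 256 ≤ (4+K)^4 := by
        have h44 : (4:ℕ) ≤ 4 + K := by omega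
        calc (256 : ℕ) = 4^4 := by norm_num
          _ ≤ (4+K)^4 := Nat.pow_le_pow_left h44 4
      omega
    omega
  -- potential of the configuration
  have hphi : Phi G u v p = 8 + s2 := by
    rw [Phi, Finset.sum_eq_single v]
    · have hpv : p v = 8 + s2 := by rw [hpdef]; simp
      rw [hpv]
      unfold ctb gfun
      rw [SimpleGraph.dist_self]
      rw [if_neg (by omega), if_neg (by omega), if_pos rfl]
    · intro x _ hxv
      by_cases hx : G.dist u x ≤ 1 ∨ G.dist v x ≤ 2
      · have : p x = 0 := by rw [hpdef]; simp only [if_neg hxv, if_pos hx]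
        rw [this, ctb, gfun_zero]
      · have : p x = 1 := by rw [hpdef]; simp only [if_neg hxv, if_neg hx]
        rw [this, ctb]
        push_neg at hx
        exact gfun_one_sea (by omega) (by omega)
    · intro h
      exact absurd (Finset.mem_univ v) h
  -- conclusion
  intro hclass
  have hunsolv : ¬ PebblingSolvable G u p :=
    unsolvable_of_phi_lt hconn hv5 (by omega)
  rw [Class0, pebblingNumber] at hclass
  rcases Set.eq_empty_or_nonempty
    {k : ℕ | ∀ (r : V) (pp : V → ℕ), (∑ x, pp x) = k → PebblingSolvable G r pp} with hT | hT
  · rw [hT] at hclass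
    rw [Nat.sInf_empty] at hclass
    omega
  · have hmem := Nat.sInf_mem hT
    rw [hclass] at hmem
    exact hunsolv (hmem u p hsize)
end

section
/- If a finite connected simple graph G has a cut-vertex, then G is not Class 0; that is, π(G) > |V(G)|. Consequently, every Class 0 graph on at least 3 vertices has minimum degree at least 2. -/
/-- A cut-vertex of a graph: a vertex whose removal disconnects the graph. -/
def IsCutVertex {V : Type*} (G : SimpleGraph V) (v : V) : Prop :=
  ¬ (G.induce ({v}ᶜ : Set V)).Preconnected

section Aux

variable {V : Type*}

theorem pebblingMove_single {G : SimpleGraph V} [DecidableEq V] {u y : V} (h : G.Adj u y)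
    (p : V → ℕ) (hp : 2 ≤ p u) :
    PebblingMove G p (fun x => if x = u then p u - 2 else if x = y then p y + 1 else p x) := by
  refine ⟨u, y, h, hp, by simp, ?_, ?_⟩
  · have hyu : y ≠ u := h.ne'
    simp [hyu]
  · intro x hxu hxy; simp [hxu, hxy]

theorem pebblingMove_many {G : SimpleGraph V} [DecidableEq V] {u y : V} (h : G.Adj u y) :
    ∀ (k : ℕ) (p : V → ℕ), 2 * k ≤ p u →
      Relation.ReflTransGen (PebblingMove G) p
        (fun x => if x = u then p u - 2 * k else if x = y then p y + k else p x) := by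
  intro k
  induction k with
  | zero =>
    intro p _
    have : (fun x => if x = u then p u - 2 * 0 else if x = y then p y + 0 else p x) = p := by
      funext x
      split_ifs with h1 h2 <;> simp_all
    rw [this]
  | succ k ih =>
    intro p hp
    have step := pebblingMove_single h p (by omega)
    set p1 : V → ℕ := fun x => if x = u then p u - 2 else if x = y then p y + 1 else p x with hp1
    have h1 : 2 * k ≤ p1 u := by simp only [p1, if_pos rfl]; omega
    have tail := ih p1 h1
    have e1 : p1 u = p u - 2 := by simp [p1]
    have e2 : p1 y = p y + 1 := by simp [p1, h.ne']
    have heq : (fun x => if x = u then p1 u - 2 * k else if x = y then p1 y + k else p1 x)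
        = (fun x => if x = u then p u - 2 * (k + 1) else if x = y then p y + (k + 1) else p x) := by
      funext x
      by_cases hxu : x = u
      · rw [if_pos hxu, if_pos hxu, e1]
        omega
      · by_cases hxy : x = y
        · rw [if_neg hxu, if_neg hxu, if_pos hxy, if_pos hxy, e2]
          omega
        · rw [if_neg hxu, if_neg hxu, if_neg hxy, if_neg hxy]
          simp [p1, hxu, hxy]
    rw [heq] at tail
    exact Relation.ReflTransGen.head step tail

theorem solvable_of_walk [DecidableEq V] {G : SimpleGraph V} {r : V} :
    ∀ {x : V} (w : G.Walk x r) (p : V → ℕ), 2 ^ w.length ≤ p x → PebblingSolvable G r p := by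
  intro x w
  induction w with
  | nil => exact fun p hp => ⟨p, Relation.ReflTransGen.refl, by simpa using hp⟩
  | @cons x y _ hadj w ih =>
    intro p hp
    have hlen : 2 ^ (SimpleGraph.Walk.cons hadj w).length = 2 ^ w.length * 2 := by
      rw [SimpleGraph.Walk.length_cons, pow_succ]
    rw [hlen] at hp
    have hm := pebblingMove_many hadj (2 ^ w.length) p (by omega)
    set q : V → ℕ := fun z => if z = x then p x - 2 * 2 ^ w.length
      else if z = y then p y + 2 ^ w.length else p z with hq
    have hqy : 2 ^ w.length ≤ q y := by
      have hyx : y ≠ x := hadj.ne'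
      simp [q, hyx]
    obtain ⟨q', hq', hr'⟩ := ih q hqy
    exact ⟨q', Relation.ReflTransGen.trans hm hq', hr'⟩

theorem phi_step_s10 [Fintype V] [DecidableEq V] {G : SimpleGraph V} (f : V → ℕ → ℕ)
    (hmove : ∀ u y, G.Adj u y → ∀ a c : ℕ, 2 ≤ a → f u (a - 2) + f y (c + 1) ≤ f u a + f y c)
    {p q : V → ℕ} (h : PebblingMove G p q) :
    ∑ x, f x (q x) ≤ ∑ x, f x (p x) := by
  obtain ⟨u, y, hadj, h2, hqu, hqy, hrest⟩ := h
  have hne : u ≠ y := hadj.ne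
  have hsub : ({u, y} : Finset V) ⊆ Finset.univ := Finset.subset_univ _
  have key := hmove u y hadj (p u) (p y) h2
  have e1 : ∑ x ∈ ({u, y} : Finset V), f x (q x) ≤ ∑ x ∈ ({u, y} : Finset V), f x (p x) := by
    rw [Finset.sum_pair hne, Finset.sum_pair hne, hqu, hqy]; exact key
  have e2 : ∑ x ∈ Finset.univ \ ({u, y} : Finset V), f x (q x)
      = ∑ x ∈ Finset.univ \ ({u, y} : Finset V), f x (p x) := by
    refine Finset.sum_congr rfl (fun x hx => ?_)
    simp only [Finset.mem_sdiff, Finset.mem_insert, Finset.mem_singleton] at hx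
    rw [hrest x (by tauto) (by tauto)]
  calc ∑ x, f x (q x)
      = ∑ x ∈ Finset.univ \ ({u, y} : Finset V), f x (q x)
        + ∑ x ∈ ({u, y} : Finset V), f x (q x) := (Finset.sum_sdiff hsub).symm
    _ ≤ ∑ x ∈ Finset.univ \ ({u, y} : Finset V), f x (p x)
        + ∑ x ∈ ({u, y} : Finset V), f x (p x) := add_le_add (le_of_eq e2) e1
    _ = ∑ x, f x (p x) := Finset.sum_sdiff hsub

theorem phi_mono [Fintype V] [DecidableEq V] {G : SimpleGraph V} (f : V → ℕ → ℕ)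
    (hmove : ∀ u y, G.Adj u y → ∀ a c : ℕ, 2 ≤ a → f u (a - 2) + f y (c + 1) ≤ f u a + f y c)
    {p q : V → ℕ} (h : Relation.ReflTransGen (PebblingMove G) p q) :
    ∑ x, f x (q x) ≤ ∑ x, f x (p x) := by
  induction h with
  | refl => exact le_refl _
  | tail _ hstep ih => exact le_trans (phi_step_s10 f hmove hstep) ih


open scoped Classical in
/-- The potential function used in the cut-vertex argument. -/
noncomputable def phiF {V : Type*} [DecidableEq V] (r v : V) (A : V → Prop) : V → ℕ → ℕ :=
  fun x m => if x = r then 2 * m else if x = v then m else if A x then 2 * (m / 2) else m / 2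

theorem unsolvable_of_cut {V : Type*} [Fintype V] [DecidableEq V] {G : SimpleGraph V}
    {r v bb : V} {A : V → Prop}
    (hrv : r ≠ v) (hbv : bb ≠ v) (hbr : bb ≠ r)
    (hAr : A r) (hAb : ¬ A bb)
    (hAnev : ∀ x : V, A x → x ≠ v)
    (hadjA : ∀ x z : V, G.Adj x z → x ≠ v → z ≠ v → A x → A z) :
    (¬ PebblingSolvable G r
      (fun x => if x = bb then 3 else if x = v then 0 else if x = r then 0 else 1)) ∧
    (∀ t : Finset V, r ∉ t → ¬ PebblingSolvable G r (fun x => if x ∈ t then 1 else 0)) := by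
  classical
  have hmove : ∀ u y, G.Adj u y → ∀ m c : ℕ, 2 ≤ m →
      phiF r v A u (m - 2) + phiF r v A y (c + 1) ≤ phiF r v A u m + phiF r v A y c := by
    intro u y huy m c hm
    have hne : u ≠ y := huy.ne
    by_cases hAu : A u <;> by_cases hAy : A y
    · have h1 := hAnev u hAu
      have h2 := hAnev y hAy
      simp only [phiF]
      split_ifs <;> first | omega | tauto
    · have h1 := hAnev u hAu
      have hyr : y ≠ r := fun h => hAy (by rw [h]; exact hAr)
      have hyv : y = v := by
        by_contra hyv
        exact hAy (hadjA u y huy h1 hyv hAu)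
      simp only [phiF]
      split_ifs <;> first | omega | tauto
    · have h2 := hAnev y hAy
      have hur : u ≠ r := fun h => hAu (by rw [h]; exact hAr)
      have huv : u = v := by
        by_contra huv
        exact hAu (hadjA y u huy.symm h2 huv hAy)
      simp only [phiF]
      split_ifs <;> first | omega | tauto
    · have hur : u ≠ r := fun h => hAu (by rw [h]; exact hAr)
      have hyr : y ≠ r := fun h => hAy (by rw [h]; exact hAr)
      simp only [phiF]
      split_ifs <;> first | omega | tauto
  -- any configuration of potential ≤ 1 is unsolvable for root r
  have unsolv : ∀ p : V → ℕ, (∑ x, phiF r v A x (p x)) ≤ 1 → ¬ PebblingSolvable G r p := by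
    rintro p hp ⟨q, hq, hq1⟩
    have hmono := phi_mono (phiF r v A) hmove hq
    have h2 : phiF r v A r (q r) = 2 * q r := by simp [phiF]
    have h3 : phiF r v A r (q r) ≤ ∑ x, phiF r v A x (q x) :=
      Finset.single_le_sum (f := fun x => phiF r v A x (q x)) (fun i _ => Nat.zero_le _)
        (Finset.mem_univ r)
    omega
  constructor
  · apply unsolv
    have hpt : ∀ x : V, phiF r v A x
        (if x = bb then 3 else if x = v then 0 else if x = r then 0 else 1)
        ≤ (if x = bb then 1 else 0) := by
      intro x
      by_cases hx : x = bb
      · subst hx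
        simp only [if_pos rfl, phiF, if_neg hbr, if_neg hbv, if_neg hAb]
        norm_num
      · simp only [if_neg hx]
        split_ifs with h1 h2 <;> simp only [phiF] <;> split_ifs <;>
          first | omega | tauto
    calc ∑ x, phiF r v A x
          (if x = bb then 3 else if x = v then 0 else if x = r then 0 else 1)
        ≤ ∑ x, (if x = bb then 1 else 0) := Finset.sum_le_sum (fun i _ => hpt i)
      _ = 1 := by simp
  · intro t hrt
    apply unsolv
    have hpt : ∀ x : V, phiF r v A x (if x ∈ t then 1 else 0) ≤ (if x = v then 1 else 0) := by
      intro x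
      by_cases hx : x ∈ t
      · have hxr : x ≠ r := fun h => hrt (h ▸ hx)
        simp only [if_pos hx, phiF]
        split_ifs <;> first | omega | tauto
      · simp only [if_neg hx, phiF]
        split_ifs <;> omega
    calc ∑ x, phiF r v A x (if x ∈ t then 1 else 0)
        ≤ ∑ x, (if x = v then 1 else 0) := Finset.sum_le_sum (fun i _ => hpt i)
      _ = 1 := by simp

theorem sumD_eq {V : Type*} [Fintype V] [DecidableEq V] {bb v r : V}
    (hbv : bb ≠ v) (hbr : bb ≠ r) (hrv : r ≠ v) :
    ∑ x : V, (if x = bb then 3 else if x = v then 0 else if x = r then 0 else 1)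
      = Fintype.card V := by
  have hpt : ∀ x : V, (if x = bb then 3 else if x = v then 0 else if x = r then 0 else 1)
      + (if x = v then 1 else 0) + (if x = r then 1 else 0)
      = (if x = bb then 2 else 0) + 1 := by
    intro x
    by_cases hx : x = bb
    · subst hx
      simp [hbv, hbr]
    · simp only [if_neg hx]
      split_ifs with h1 h2 h3 <;>
        first
          | omega
          | exact absurd (h1.symm.trans h2) (Ne.symm hrv)
          | exact absurd (h2.symm.trans h1) (Ne.symm hrv)
  have hsum := Finset.sum_congr rfl (fun x (_ : x ∈ (Finset.univ : Finset V)) => hpt x)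
  rw [Finset.sum_add_distrib, Finset.sum_add_distrib, Finset.sum_add_distrib] at hsum
  simp only [Finset.sum_ite_eq', Finset.mem_univ, ite_true, Finset.sum_const,
    Finset.card_univ, smul_eq_mul, mul_one] at hsum
  omega

theorem sumT_eq {V : Type*} [Fintype V] [DecidableEq V] (t : Finset V) :
    ∑ x : V, (if x ∈ t then (1 : ℕ) else 0) = t.card := by
  rw [Finset.sum_ite_mem, Finset.univ_inter, Finset.sum_const, smul_eq_mul, mul_one]

end Aux

/-- A connected graph with a cut-vertex is not Class 0; consequently, every Class 0
graph on at least 3 vertices has minimum degree at least 2. -/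
theorem not_class0_of_cutVertex {V : Type*} [Fintype V] [DecidableEq V]
    (G : SimpleGraph V) [DecidableRel G.Adj] (hG : G.Connected) :
    ((∃ v : V, IsCutVertex G v) → Fintype.card V < pebblingNumber G) ∧
    (Class0 G → 3 ≤ Fintype.card V → ∀ v : V, 2 ≤ G.degree v) := by
  classical
  -- The set whose infimum is the pebbling number is nonempty.
  have hSne : ∀ (_ : 0 < Fintype.card V), (Fintype.card V * 2 ^ Fintype.card V) ∈
      {k : ℕ | ∀ (r : V) (p : V → ℕ), (∑ v, p v) = k → PebblingSolvable G r p} := by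
    intro hpos r p hp
    have hbig : ∃ x : V, 2 ^ Fintype.card V ≤ p x := by
      by_contra hcon
      push_neg at hcon
      have hnev : Nonempty V := Fintype.card_pos_iff.mp hpos
      have hlt : ∑ v, p v < ∑ _v : V, 2 ^ Fintype.card V :=
        Finset.sum_lt_sum_of_nonempty Finset.univ_nonempty (fun i _ => hcon i)
      rw [Finset.sum_const, Finset.card_univ, smul_eq_mul, hp] at hlt
      exact lt_irrefl _ hlt
    obtain ⟨x, hx⟩ := hbig
    obtain ⟨w⟩ := hG.preconnected x r
    have hlt : w.toPath.1.length < Fintype.card V := w.toPath.2.length_lt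
    refine solvable_of_walk w.toPath.1 p (le_trans ?_ hx)
    exact Nat.pow_le_pow_right (by norm_num) (le_of_lt hlt)
  have main : (∃ v : V, IsCutVertex G v) → Fintype.card V < pebblingNumber G := by
    rintro ⟨v, hv⟩
    have hpos : 0 < Fintype.card V := Fintype.card_pos_iff.mpr ⟨v⟩
    unfold IsCutVertex SimpleGraph.Preconnected at hv
    push_neg at hv
    obtain ⟨a, b, hab⟩ := hv
    have hrv : (a : V) ≠ v := Set.mem_compl_singleton_iff.mp a.2
    have hbv : (b : V) ≠ v := Set.mem_compl_singleton_iff.mp b.2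
    have habne : a ≠ b := by
      rintro rfl; exact hab (SimpleGraph.Reachable.refl _)
    have hbr : (b : V) ≠ (a : V) := fun h => habne (Subtype.ext h.symm)
    have hAr : (fun x => ∃ h : x ∈ ({v}ᶜ : Set V),
        (G.induce ({v}ᶜ : Set V)).Reachable a ⟨x, h⟩) (a : V) := ⟨a.2, by rw [Subtype.coe_eta]⟩
    have hAb : ¬ (fun x => ∃ h : x ∈ ({v}ᶜ : Set V),
        (G.induce ({v}ᶜ : Set V)).Reachable a ⟨x, h⟩) (b : V) := by
      rintro ⟨h1, h2⟩
      have heq : (⟨(b : V), h1⟩ : ({v}ᶜ : Set V)) = b := Subtype.ext rfl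
      exact hab (heq ▸ h2)
    have hAnev : ∀ x : V, (fun x => ∃ h : x ∈ ({v}ᶜ : Set V),
        (G.induce ({v}ᶜ : Set V)).Reachable a ⟨x, h⟩) x → x ≠ v :=
      fun x hx => Set.mem_compl_singleton_iff.mp hx.1
    have hadjA : ∀ x z : V, G.Adj x z → x ≠ v → z ≠ v →
        (fun x => ∃ h : x ∈ ({v}ᶜ : Set V),
          (G.induce ({v}ᶜ : Set V)).Reachable a ⟨x, h⟩) x →
        (fun x => ∃ h : x ∈ ({v}ᶜ : Set V),
          (G.induce ({v}ᶜ : Set V)).Reachable a ⟨x, h⟩) z := by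
      rintro x z hxz hxv hzv ⟨h1, h2⟩
      have hzmem : z ∈ ({v}ᶜ : Set V) := Set.mem_compl_singleton_iff.mpr hzv
      refine ⟨hzmem, h2.trans (SimpleGraph.Adj.reachable ?_)⟩
      simpa using hxz
    obtain ⟨hD_unsolv, hT_unsolv⟩ :=
      unsolvable_of_cut (G := G) hrv hbv hbr hAr hAb hAnev hadjA
    by_contra hcon
    push_neg at hcon
    have hne' : Set.Nonempty
        {k : ℕ | ∀ (r : V) (p : V → ℕ), (∑ v, p v) = k → PebblingSolvable G r p} :=
      ⟨Fintype.card V * 2 ^ Fintype.card V, hSne hpos⟩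
    have hmem := Nat.sInf_mem hne'
    have hkn : pebblingNumber G ≤ Fintype.card V := hcon
    rw [pebblingNumber] at hkn
    rcases eq_or_lt_of_le hkn with hkeq | hklt
    · exact hD_unsolv (hmem (a : V) _ ((sumD_eq hbv hbr hrv).trans hkeq.symm))
    · have hcard : sInf {k : ℕ | ∀ (r : V) (p : V → ℕ), (∑ v, p v) = k → PebblingSolvable G r p}
          ≤ (Finset.univ.erase (a : V)).card := by
        rw [Finset.card_erase_of_mem (Finset.mem_univ _), Finset.card_univ]
        exact Nat.le_pred_of_lt hklt
      obtain ⟨t, hts, htc⟩ := Finset.exists_subset_card_eq hcard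
      have hpr : (a : V) ∉ t := fun h => (Finset.mem_erase.mp (hts h)).1 rfl
      exact hT_unsolv t hpr (hmem (a : V) _ ((sumT_eq t).trans htc))
  refine ⟨main, ?_⟩
  intro hclass hcard3 v
  by_contra hdeg
  push_neg at hdeg
  have hdeg1 : G.degree v = 0 ∨ G.degree v = 1 := by omega
  rcases hdeg1 with hdeg0 | hdeg1
  · -- degree 0 is impossible in a connected graph with ≥ 2 vertices
    obtain ⟨y, hy⟩ := Fintype.exists_ne_of_one_lt_card (by omega) v
    obtain ⟨w⟩ := hG.preconnected v y
    cases w with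
    | nil => exact hy rfl
    | @cons _ z _ hadj _ =>
      have hmem : z ∈ G.neighborFinset v := (SimpleGraph.mem_neighborFinset G v z).mpr hadj
      have hpos : 0 < (G.neighborFinset v).card := Finset.card_pos.mpr ⟨_, hmem⟩
      rw [SimpleGraph.card_neighborFinset_eq_degree] at hpos
      omega
  · -- degree 1 : the unique neighbor is a cut vertex
    have hcard1 : (G.neighborFinset v).card = 1 := by
      rw [SimpleGraph.card_neighborFinset_eq_degree, hdeg1]
    obtain ⟨u, hu⟩ := Finset.card_eq_one.mp hcard1
    have hadjvu : G.Adj v u := by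
      have : u ∈ G.neighborFinset v := by rw [hu]; exact Finset.mem_singleton_self u
      exact (SimpleGraph.mem_neighborFinset G v u).mp this
    have huniq : ∀ z : V, G.Adj v z → z = u := by
      intro z hz
      have : z ∈ G.neighborFinset v := (SimpleGraph.mem_neighborFinset G v z).mpr hz
      rw [hu] at this
      exact Finset.mem_singleton.mp this
    have hvu : v ≠ u := hadjvu.ne
    -- find a third vertex
    have hw : (Finset.univ \ ({v, u} : Finset V)).Nonempty := by
      rw [← Finset.card_pos, Finset.card_sdiff_of_subset (Finset.subset_univ _), Finset.card_univ]
      have : ({v, u} : Finset V).card ≤ 2 := Finset.card_insert_le _ _ |>.trans (by simp)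
      omega
    obtain ⟨w, hwmem⟩ := hw
    simp only [Finset.mem_sdiff, Finset.mem_univ, Finset.mem_insert, Finset.mem_singleton,
      true_and, not_or] at hwmem
    obtain ⟨hwv, hwu⟩ := hwmem
    have hcut : IsCutVertex G u := by
      intro hpre
      have hvmem : v ∈ ({u}ᶜ : Set V) := Set.mem_compl_singleton_iff.mpr hvu
      have hwmem' : w ∈ ({u}ᶜ : Set V) := Set.mem_compl_singleton_iff.mpr hwu
      obtain ⟨wk⟩ := hpre ⟨v, hvmem⟩ ⟨w, hwmem'⟩
      cases wk with
      | nil => exact hwv rfl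
      | @cons _ z _ hadj _ =>
        have hz : G.Adj v (z : V) := by simpa using hadj
        have : (z : V) = u := huniq _ hz
        exact Set.mem_compl_singleton_iff.mp z.2 this
    have := main ⟨u, hcut⟩
    rw [hclass] at this
    omega
end
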